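/- arXiv:1601.01241 — 11 statements merged into one kernel-verified Lean document; each statement's English description precedes it below -/
import Mathlib

section
/- If f : ℝ → ℝ is Lebesgue integrable, then for almost every x ∈ ℝ, the sequence f(n·x) tends to 0 as n → ∞. -/
open MeasureTheory Filter Set
open scoped ENNReal NNReal

-- pointwise bound on the sum of weighted interval indicators
lemma aux_sum_bound (c y : ℝ) (hc : 0 < c) :
    ∑' n : ℕ, ENNReal.ofReal (((n : ℝ) + 1))⁻¹ *
      (Set.Ioc (((n : ℝ) + 1) * c) (((n : ℝ) + 1) * (2 * c))).indicator 1 y ≤ 1 := by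
  set m := ⌈y / (2 * c)⌉₊ with hm
  have h2c : (0 : ℝ) < 2 * c := by linarith
  have hvanish : ∀ n ∉ Finset.Ico (m - 1) (2 * m - 1),
      ENNReal.ofReal (((n : ℝ) + 1))⁻¹ *
        (Set.Ioc (((n : ℝ) + 1) * c) (((n : ℝ) + 1) * (2 * c))).indicator 1 y = 0 := by
    intro n hn
    by_cases hy : y ∈ Set.Ioc (((n : ℝ) + 1) * c) (((n : ℝ) + 1) * (2 * c))
    · exfalso
      apply hn
      have h1 : y / (2 * c) ≤ (n : ℝ) + 1 := by
        rw [div_le_iff₀ h2c]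
        calc y ≤ ((n : ℝ) + 1) * (2 * c) := hy.2
          _ = ((n : ℝ) + 1) * (2 * c) := by ring
      have hmle : m ≤ n + 1 := by
        rw [hm]
        apply Nat.ceil_le.2
        push_cast
        exact h1
      have h2 : ((n : ℝ) + 1) < 2 * m := by
        have hyc : ((n : ℝ) + 1) < y / c := by
          rw [lt_div_iff₀ hc]; exact hy.1
        have : y / c = 2 * (y / (2 * c)) := by field_simp
        have hle : y / (2 * c) ≤ (m : ℝ) := Nat.le_ceil _
        calc ((n : ℝ) + 1) < y / c := hyc
          _ = 2 * (y / (2 * c)) := this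
          _ ≤ 2 * m := by linarith
      have h2' : n + 1 < 2 * m := by exact_mod_cast (by push_cast; exact h2 : ((n : ℕ) : ℝ) + 1 < ((2 * m : ℕ) : ℝ))
      simp only [Finset.mem_Ico]
      omega
    · simp [Set.indicator_of_notMem hy]
  rw [tsum_eq_sum hvanish]
  rcases Nat.eq_zero_or_pos m with hm0 | hmpos
  · simp [hm0]
  · have hcard : (Finset.Ico (m - 1) (2 * m - 1)).card = m := by
      rw [Nat.card_Ico]; omega
    have hbound : ∀ n ∈ Finset.Ico (m - 1) (2 * m - 1),
        ENNReal.ofReal (((n : ℝ) + 1))⁻¹ *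
          (Set.Ioc (((n : ℝ) + 1) * c) (((n : ℝ) + 1) * (2 * c))).indicator 1 y
          ≤ ENNReal.ofReal ((m : ℝ))⁻¹ := by
      intro n hn
      have hmn : m ≤ n + 1 := by
        simp only [Finset.mem_Ico] at hn; omega
      have h1 : (Set.Ioc (((n : ℝ) + 1) * c) (((n : ℝ) + 1) * (2 * c))).indicator
          (1 : ℝ → ℝ≥0∞) y ≤ 1 := by
        classical
        by_cases hy : y ∈ Set.Ioc (((n : ℝ) + 1) * c) (((n : ℝ) + 1) * (2 * c)) <;>
          simp [hy]
      have h2 : ENNReal.ofReal (((n : ℝ) + 1))⁻¹ ≤ ENNReal.ofReal ((m : ℝ))⁻¹ := by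
        apply ENNReal.ofReal_le_ofReal
        apply inv_anti₀
        · exact_mod_cast hmpos
        · exact_mod_cast hmn
      calc ENNReal.ofReal (((n : ℝ) + 1))⁻¹ *
            (Set.Ioc (((n : ℝ) + 1) * c) (((n : ℝ) + 1) * (2 * c))).indicator 1 y
          ≤ ENNReal.ofReal (((n : ℝ) + 1))⁻¹ * 1 := mul_le_mul_right h1 _
        _ = ENNReal.ofReal (((n : ℝ) + 1))⁻¹ := mul_one _
        _ ≤ ENNReal.ofReal ((m : ℝ))⁻¹ := h2
    refine le_trans (Finset.sum_le_card_nsmul _ _ _ hbound) ?_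
    calc (Finset.Ico (m - 1) (2 * m - 1)).card • ENNReal.ofReal ((m : ℝ))⁻¹
        = (m : ℝ≥0∞) * ENNReal.ofReal ((m : ℝ))⁻¹ := by
          rw [hcard, nsmul_eq_mul]
      _ = ENNReal.ofReal ((m : ℝ)) * ENNReal.ofReal ((m : ℝ))⁻¹ := by
          rw [ENNReal.ofReal_natCast]
      _ = ENNReal.ofReal ((m : ℝ) * (m : ℝ)⁻¹) := by
          rw [← ENNReal.ofReal_mul (by positivity)]
      _ = 1 := by
          rw [mul_inv_cancel₀ (by exact_mod_cast hmpos.ne' : (m : ℝ) ≠ 0)]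
          exact ENNReal.ofReal_one
      _ ≤ 1 := le_rfl

lemma aux_key (A : Set ℝ) (hA : MeasurableSet A) (hfin : volume A ≠ ⊤) {c : ℝ} (hc : 0 < c) :
    ∀ᵐ x : ℝ, x ∈ Set.Ioc c (2 * c) → ∀ᶠ n : ℕ in atTop, (n : ℝ) * x ∉ A := by
  set F : ℕ → ℝ → ℝ≥0∞ := fun n x => A.indicator 1 (((n : ℝ) + 1) * x) with hF
  have hFmeas : ∀ n, Measurable (F n) := fun n =>
    ((measurable_const (a := (1 : ℝ≥0∞))).indicator hA).comp (measurable_const_mul _)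
  -- value of each integral
  have hInt : ∀ n : ℕ, ∫⁻ x in Set.Ioc c (2 * c), F n x =
      ENNReal.ofReal (((n : ℝ) + 1))⁻¹ *
        volume (A ∩ Set.Ioc (((n : ℝ) + 1) * c) (((n : ℝ) + 1) * (2 * c))) := by
    intro n
    have hk : (0 : ℝ) < (n : ℝ) + 1 := by positivity
    have hB : MeasurableSet ((((n : ℝ) + 1) * ·) ⁻¹' A) := hA.preimage (measurable_const_mul _)
    have h1 : ∀ x, F n x = ((((n : ℝ) + 1) * ·) ⁻¹' A).indicator 1 x := by
      intro x
      by_cases hxA : ((n : ℝ) + 1) * x ∈ A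
      · simp only [hF, Set.indicator_of_mem hxA,
          Set.indicator_of_mem (Set.mem_preimage.2 hxA), Pi.one_apply]
      · simp only [hF, Set.indicator_of_notMem hxA,
          Set.indicator_of_notMem (fun h => hxA (Set.mem_preimage.1 h))]
    calc ∫⁻ x in Set.Ioc c (2 * c), F n x
        = ∫⁻ x in Set.Ioc c (2 * c), ((((n : ℝ) + 1) * ·) ⁻¹' A).indicator 1 x :=
          lintegral_congr h1
      _ = volume ((((n : ℝ) + 1) * ·) ⁻¹' A ∩ Set.Ioc c (2 * c)) := by
          rw [lintegral_indicator_one hB, Measure.restrict_apply hB]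
      _ = volume ((((n : ℝ) + 1) * ·) ⁻¹'
            (A ∩ Set.Ioc (((n : ℝ) + 1) * c) (((n : ℝ) + 1) * (2 * c)))) := by
          congr 1
          rw [Set.preimage_inter, Set.preimage_const_mul_Ioc₀ _ _ hk]
          congr 1
          rw [mul_div_cancel_left₀ _ hk.ne', mul_div_cancel_left₀ _ hk.ne']
      _ = ENNReal.ofReal |(((n : ℝ) + 1))⁻¹| *
            volume (A ∩ Set.Ioc (((n : ℝ) + 1) * c) (((n : ℝ) + 1) * (2 * c))) :=
          Real.volume_preimage_mul_left hk.ne' _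
      _ = ENNReal.ofReal (((n : ℝ) + 1))⁻¹ *
            volume (A ∩ Set.Ioc (((n : ℝ) + 1) * c) (((n : ℝ) + 1) * (2 * c))) := by
          rw [abs_of_pos (by positivity)]
  -- the total integral is bounded by volume A
  have hI : ∫⁻ x in Set.Ioc c (2 * c), ∑' n, F n x ≤ volume A := by
    rw [lintegral_tsum (fun n => (hFmeas n).aemeasurable)]
    have hJmeas : ∀ n : ℕ,
        MeasurableSet (A ∩ Set.Ioc (((n : ℝ) + 1) * c) (((n : ℝ) + 1) * (2 * c))) :=
      fun n => hA.inter measurableSet_Ioc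
    calc ∑' n : ℕ, ∫⁻ x in Set.Ioc c (2 * c), F n x
        = ∑' n : ℕ, ∫⁻ y, ENNReal.ofReal (((n : ℝ) + 1))⁻¹ *
            (A ∩ Set.Ioc (((n : ℝ) + 1) * c) (((n : ℝ) + 1) * (2 * c))).indicator 1 y := by
          refine tsum_congr fun n => ?_
          rw [hInt n, lintegral_const_mul _ (measurable_one.indicator (hJmeas n)),
            lintegral_indicator_one (hJmeas n)]
      _ = ∫⁻ y, ∑' n : ℕ, ENNReal.ofReal (((n : ℝ) + 1))⁻¹ *
            (A ∩ Set.Ioc (((n : ℝ) + 1) * c) (((n : ℝ) + 1) * (2 * c))).indicator 1 y := by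
          rw [lintegral_tsum]
          intro n
          exact ((measurable_const.indicator (hJmeas n)).const_mul _).aemeasurable
      _ ≤ ∫⁻ y, A.indicator 1 y := by
          refine lintegral_mono fun y => ?_
          by_cases hy : y ∈ A
          · have heq : ∀ n : ℕ,
                (A ∩ Set.Ioc (((n : ℝ) + 1) * c) (((n : ℝ) + 1) * (2 * c))).indicator
                  (1 : ℝ → ℝ≥0∞) y =
                (Set.Ioc (((n : ℝ) + 1) * c) (((n : ℝ) + 1) * (2 * c))).indicator 1 y := by
              intro n
              by_cases hyJ : y ∈ Set.Ioc (((n : ℝ) + 1) * c) (((n : ℝ) + 1) * (2 * c))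
              · rw [Set.indicator_of_mem (Set.mem_inter hy hyJ), Set.indicator_of_mem hyJ]
              · rw [Set.indicator_of_notMem (fun h => hyJ h.2),
                  Set.indicator_of_notMem hyJ]
            simp only [heq, Set.indicator_of_mem hy, Pi.one_apply]
            exact aux_sum_bound c y hc
          · have heq : ∀ n : ℕ,
                (A ∩ Set.Ioc (((n : ℝ) + 1) * c) (((n : ℝ) + 1) * (2 * c))).indicator
                  (1 : ℝ → ℝ≥0∞) y = 0 := by
              intro n
              simp [Set.indicator_apply, Set.mem_inter_iff, hy]
            simp [heq]
      _ = volume A := lintegral_indicator_one hA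
  -- a.e. finiteness of the sum
  have h2 : ∀ᵐ x ∂(volume.restrict (Set.Ioc c (2 * c))), ∑' n, F n x ≠ ⊤ := by
    filter_upwards [ae_lt_top (Measurable.ennreal_tsum hFmeas)
      (lt_of_le_of_lt hI hfin.lt_top).ne] with x hx
    exact hx.ne
  have h3 := ae_imp_of_ae_restrict h2
  filter_upwards [h3] with x hx hxmem
  have htend := ENNReal.tendsto_atTop_zero_of_tsum_ne_top (hx hxmem)
  have hev : ∀ᶠ n : ℕ in atTop, F n x < 1 :=
    htend.eventually (gt_mem_nhds (by norm_num : (0:ℝ≥0∞) < 1))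
  have hev' : ∀ᶠ n : ℕ in atTop, ((n : ℝ) + 1) * x ∉ A := by
    filter_upwards [hev] with n hn
    intro hmem
    rw [hF] at hn
    simp only [Set.indicator_of_mem hmem, Pi.one_apply, lt_self_iff_false] at hn
  obtain ⟨N, hN⟩ := eventually_atTop.1 hev'
  refine eventually_atTop.2 ⟨N + 1, fun n hn => ?_⟩
  have := hN (n - 1) (by omega)
  have hcast : ((n - 1 : ℕ) : ℝ) + 1 = (n : ℝ) := by
    have : (n - 1) + 1 = n := by omega
    exact_mod_cast congrArg (Nat.cast : ℕ → ℝ) this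
  rwa [hcast] at this

lemma aux_pos (A : Set ℝ) (hA : MeasurableSet A) (hfin : volume A ≠ ⊤) :
    ∀ᵐ x : ℝ, 0 < x → ∀ᶠ n : ℕ in atTop, (n : ℝ) * x ∉ A := by
  have h : ∀ᵐ x : ℝ, ∀ j : ℤ, x ∈ Set.Ioc ((2:ℝ) ^ j) (2 * (2:ℝ) ^ j) →
      ∀ᶠ n : ℕ in atTop, (n : ℝ) * x ∉ A :=
    ae_all_iff.2 fun j => aux_key A hA hfin (by positivity)
  filter_upwards [h] with x hx hxpos
  obtain ⟨j, hj⟩ := exists_mem_Ioc_zpow hxpos (by norm_num : (1:ℝ) < 2)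
  refine hx j ?_
  have h2 : (2:ℝ) ^ (j + 1) = 2 * (2:ℝ) ^ j := by
    rw [zpow_add_one₀ (by norm_num : (2:ℝ) ≠ 0)]; ring
  rw [← h2]
  exact hj

lemma aux_both (A : Set ℝ) (hA : MeasurableSet A) (hfin : volume A ≠ ⊤) :
    ∀ᵐ x : ℝ, x ≠ 0 → ∀ᶠ n : ℕ in atTop, (n : ℝ) * x ∉ A := by
  have hnegA : MeasurableSet (-A) := hA.neg
  have hnegfin : volume (-A) ≠ ⊤ := by
    rwa [Measure.measure_neg]
  have hpos := aux_pos A hA hfin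
  have hneg0 := aux_pos (-A) hnegA hnegfin
  have hneg : ∀ᵐ x : ℝ, 0 < -x → ∀ᶠ n : ℕ in atTop, (n : ℝ) * (-x) ∉ (-A) :=
    (Measure.measurePreserving_neg (volume : Measure ℝ)).quasiMeasurePreserving.ae hneg0
  filter_upwards [hpos, hneg] with x h1 h2 hx0
  rcases hx0.lt_or_gt with hlt | hgt
  · have := h2 (by linarith)
    filter_upwards [this] with n hn hmem
    apply hn
    rw [Set.mem_neg]
    have : -((n : ℝ) * -x) = (n : ℝ) * x := by ring
    rwa [this]
  · exact h1 hgt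

theorem stmt0 (f : ℝ → ℝ) (hf : Integrable f) :
    ∀ᵐ x : ℝ, Tendsto (fun n : ℕ => f (n * x)) atTop (nhds 0) := by
  set g := hf.1.mk f with hgdef
  have hgm : StronglyMeasurable g := hf.1.stronglyMeasurable_mk
  have hfg : f =ᵐ[volume] g := hf.1.ae_eq_mk
  have hgint : Integrable g := hf.congr hfg
  have hAk : ∀ k : ℕ, ∀ᵐ x : ℝ, x ≠ 0 →
      ∀ᶠ n : ℕ in atTop, ¬ (1 / ((k : ℝ) + 1) ≤ |g ((n : ℝ) * x)|) := by
    intro k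
    have hAset : MeasurableSet {y : ℝ | 1 / ((k : ℝ) + 1) ≤ |g y|} :=
      measurableSet_le measurable_const hgm.measurable.abs
    have hfin : volume {y : ℝ | 1 / ((k : ℝ) + 1) ≤ |g y|} ≠ ⊤ := by
      have h := hgint.measure_norm_ge_lt_top (show (0:ℝ) < 1 / ((k : ℝ) + 1) by positivity)
      simp only [Real.norm_eq_abs] at h
      exact h.ne
    exact aux_both _ hAset hfin
  have hq : ∀ n : ℕ, Measure.QuasiMeasurePreserving
      (fun x : ℝ => ((n : ℝ) + 1) * x) volume volume := by
    intro n
    refine ⟨(measurable_const_mul _), ?_⟩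
    rw [Real.map_volume_mul_left (by positivity : ((n:ℝ) + 1) ≠ 0)]
    exact Measure.smul_absolutelyContinuous
  have hcomp : ∀ n : ℕ, ∀ᵐ x : ℝ, f (((n : ℝ) + 1) * x) = g (((n : ℝ) + 1) * x) :=
    fun n => (hq n).ae_eq hfg
  have h0 : ∀ᵐ x : ℝ, x ≠ (0:ℝ) := by
    rw [ae_iff]
    simp only [ne_eq, not_not, Set.setOf_eq_eq_singleton]
    exact measure_singleton 0
  filter_upwards [ae_all_iff.2 hAk, ae_all_iff.2 hcomp, h0] with x hx hcompx hx0
  have hgt : Tendsto (fun n : ℕ => g ((n : ℝ) * x)) atTop (nhds 0) := by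
    rw [NormedAddCommGroup.tendsto_nhds_zero]
    intro ε hε
    obtain ⟨k, hk⟩ := exists_nat_one_div_lt hε
    filter_upwards [hx k hx0] with n hn
    rw [Real.norm_eq_abs]
    calc |g ((n : ℝ) * x)| < 1 / ((k : ℝ) + 1) := lt_of_not_ge hn
      _ < ε := hk
  have heq : ∀ᶠ n : ℕ in atTop, g ((n : ℝ) * x) = f ((n : ℝ) * x) := by
    refine eventually_atTop.2 ⟨1, fun n hn => ?_⟩
    have h := hcompx (n - 1)
    have hcast : ((n - 1 : ℕ) : ℝ) + 1 = (n : ℝ) := by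
      have h' : (n - 1) + 1 = n := by omega
      exact_mod_cast congrArg (Nat.cast : ℕ → ℝ) h'
    rw [hcast] at h
    exact h.symm
  exact hgt.congr' heq
end

section
/- If f : ℝ → ℝ is Lebesgue integrable, then for almost every x ∈ ℝ, the series ∑_{n=1}^∞ |f(n·x)| converges. -/
open MeasureTheory Filter Set ENNReal

lemma core (F : ℝ → ℝ≥0∞) (hF : Measurable F) (hFint : ∫⁻ t, F t ≠ ⊤)
    (ε M : ℝ) (hε : 0 < ε) (hM : 0 < M) :
    ∫⁻ x in {x : ℝ | ε ≤ |x| ∧ |x| ≤ M}, ∑' n : ℕ, F ((n + 1) * x) ≠ ⊤ := by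
  set A : Set ℝ := {x : ℝ | ε ≤ |x| ∧ |x| ≤ M} with hA
  have hAm : MeasurableSet A :=
    (measurableSet_le measurable_const measurable_id.abs).inter
      (measurableSet_le measurable_id.abs measurable_const)
  set H : ℕ → ℝ → ℝ≥0∞ := fun n t => A.indicator 1 (t / (n + 1)) * F t with hH
  have hHm : ∀ n, Measurable (H n) := fun n =>
    (((measurable_one.indicator hAm).comp (measurable_id.div_const _)).mul hF)
  -- change of variables for each n
  have key : ∀ n : ℕ, ∫⁻ x in A, F ((n + 1) * x) =
      ENNReal.ofReal (((n : ℝ) + 1))⁻¹ * ∫⁻ t, H n t := by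
    intro n
    have hn : ((n : ℝ) + 1) ≠ 0 := by positivity
    have h1 : ∀ x : ℝ, H n (((n : ℝ) + 1) * x) = A.indicator 1 x * F (((n : ℝ) + 1) * x) := by
      intro x
      simp only [hH]
      rw [mul_div_cancel_left₀ _ hn]
    calc ∫⁻ x in A, F ((n + 1) * x)
        = ∫⁻ x, A.indicator 1 x * F (((n : ℝ) + 1) * x) := by
          rw [← lintegral_indicator hAm]
          congr 1
          ext x
          by_cases hx : x ∈ A <;> simp [hx]
      _ = ∫⁻ x, H n (((n : ℝ) + 1) * x) := by simp only [h1]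
      _ = ∫⁻ t, H n t ∂(Measure.map ((((n : ℝ) + 1)) * ·) volume) :=
          (lintegral_map (hHm n) (measurable_const_mul _)).symm
      _ = ENNReal.ofReal |((n : ℝ) + 1)⁻¹| * ∫⁻ t, H n t := by
          rw [Real.map_volume_mul_left hn, lintegral_smul_measure, smul_eq_mul]
      _ = ENNReal.ofReal (((n : ℝ) + 1))⁻¹ * ∫⁻ t, H n t := by
          rw [abs_of_nonneg (by positivity)]
  -- swap sum and integral, and collect
  have swap : ∫⁻ x in A, ∑' n : ℕ, F ((n + 1) * x)
      = ∫⁻ t, (∑' n : ℕ, ENNReal.ofReal (((n : ℝ) + 1))⁻¹ * A.indicator 1 (t / (n + 1))) * F t := by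
    have hmeas : ∀ n : ℕ, AEMeasurable (fun x : ℝ => F ((n + 1) * x)) (volume.restrict A) :=
      fun n => (hF.comp (measurable_const_mul _)).aemeasurable
    rw [lintegral_tsum hmeas]
    simp only [key]
    have step : ∀ n : ℕ, ENNReal.ofReal (((n : ℝ) + 1))⁻¹ * ∫⁻ t, H n t
        = ∫⁻ t, ENNReal.ofReal (((n : ℝ) + 1))⁻¹ * A.indicator 1 (t / (n + 1)) * F t := by
      intro n
      rw [← lintegral_const_mul _ (hHm n)]
      congr 1
      ext t
      rw [hH, mul_assoc]
    simp only [step]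
    have hm2 : ∀ n : ℕ, AEMeasurable
        (fun t : ℝ => ENNReal.ofReal (((n : ℝ) + 1))⁻¹ * A.indicator 1 (t / (n + 1)) * F t)
        volume := fun n =>
      ((measurable_const.mul ((measurable_one.indicator hAm).comp
        (measurable_id.div_const _))).mul hF).aemeasurable
    rw [← lintegral_tsum hm2]
    congr 1
    ext t
    rw [ENNReal.tsum_mul_right]
  -- pointwise bound on the weight
  have weight : ∀ t : ℝ,
      (∑' n : ℕ, ENNReal.ofReal (((n : ℝ) + 1))⁻¹ * A.indicator 1 (t / (n + 1)))
        ≤ ENNReal.ofReal (M / ε) := by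
    intro t
    rcases eq_or_ne t 0 with rfl | ht
    · have h0 : (0:ℝ) ∉ A := by simp [hA, hε.not_ge]
      simp [zero_div, Set.indicator_apply, h0]
    · have habs : 0 < |t| := abs_pos.2 ht
      set N : ℕ := ⌊|t| / ε⌋₊ with hN
      have bound : ∀ n : ℕ, ENNReal.ofReal (((n : ℝ) + 1))⁻¹ * A.indicator 1 (t / (n + 1))
          ≤ Set.indicator (↑(Finset.range N)) (fun _ => ENNReal.ofReal (M / |t|)) n := by
        intro n
        by_cases hmem : t / ((n : ℝ) + 1) ∈ A
        · have h₁ := hmem.1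
          have h₂ := hmem.2
          have hn1 : (0:ℝ) < (n : ℝ) + 1 := by positivity
          rw [abs_div, abs_of_pos hn1] at h₁ h₂
          have hle : ((n : ℝ) + 1) ≤ |t| / ε := by
            rw [le_div_iff₀ hε]
            calc ((n:ℝ)+1) * ε ≤ ((n:ℝ)+1) * (|t| / ((n:ℝ)+1)) := by
                  exact mul_le_mul_of_nonneg_left h₁ (le_of_lt hn1)
              _ = |t| := by field_simp
          have hnN : n ∈ Finset.range N := by
            rw [Finset.mem_range]
            have : n + 1 ≤ N := Nat.le_floor (by push_cast; linarith)
            omega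
          have hterm : (((n : ℝ) + 1))⁻¹ ≤ M / |t| := by
            have h₂' : |t| ≤ M * ((n : ℝ) + 1) := by rwa [div_le_iff₀ hn1] at h₂
            rw [le_div_iff₀ habs]
            calc ((n : ℝ) + 1)⁻¹ * |t| ≤ ((n : ℝ) + 1)⁻¹ * (M * ((n : ℝ) + 1)) :=
                  mul_le_mul_of_nonneg_left h₂' (by positivity)
              _ = M := by field_simp
          calc ENNReal.ofReal (((n : ℝ) + 1))⁻¹ * A.indicator 1 (t / (n + 1))
              = ENNReal.ofReal (((n : ℝ) + 1))⁻¹ := by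
                rw [Set.indicator_of_mem hmem]; simp
            _ ≤ ENNReal.ofReal (M / |t|) := ENNReal.ofReal_le_ofReal hterm
            _ = Set.indicator (↑(Finset.range N)) (fun _ => ENNReal.ofReal (M / |t|)) n := by
                rw [Set.indicator_of_mem (by simpa using hnN)]
        · simp [Set.indicator_of_notMem hmem]
      calc (∑' n : ℕ, ENNReal.ofReal (((n : ℝ) + 1))⁻¹ * A.indicator 1 (t / (n + 1)))
          ≤ ∑' n : ℕ, Set.indicator (↑(Finset.range N)) (fun _ => ENNReal.ofReal (M / |t|)) n :=
            ENNReal.tsum_le_tsum bound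
        _ = ∑ n ∈ Finset.range N, ENNReal.ofReal (M / |t|) := (sum_eq_tsum_indicator _ _).symm
        _ = (N : ℝ≥0∞) * ENNReal.ofReal (M / |t|) := by
            rw [Finset.sum_const, Finset.card_range, nsmul_eq_mul]
        _ = ENNReal.ofReal ((N : ℝ) * (M / |t|)) := by
            rw [ENNReal.ofReal_mul (by positivity), ENNReal.ofReal_natCast]
        _ ≤ ENNReal.ofReal (M / ε) := by
            apply ENNReal.ofReal_le_ofReal
            have h1 : (N : ℝ) ≤ |t| / ε := Nat.floor_le (by positivity)
            calc (N : ℝ) * (M / |t|) ≤ (|t| / ε) * (M / |t|) := by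
                  apply mul_le_mul_of_nonneg_right h1 (by positivity)
              _ = M / ε := by field_simp
  -- conclude
  rw [swap]
  have : ∫⁻ t, (∑' n : ℕ, ENNReal.ofReal (((n : ℝ) + 1))⁻¹ * A.indicator 1 (t / (n + 1))) * F t
      ≤ ENNReal.ofReal (M / ε) * ∫⁻ t, F t := by
    rw [← lintegral_const_mul _ hF]
    exact lintegral_mono fun t => mul_le_mul_left (weight t) _
  exact ne_top_of_le_ne_top (ENNReal.mul_ne_top ofReal_ne_top hFint) this


theorem stmt1 (f : ℝ → ℝ) (hf : Integrable f) :
    ∀ᵐ x : ℝ, Summable (fun n : ℕ => |f (n * x)|) := by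
  obtain ⟨g, hgsm, hfg⟩ := hf.1
  have hg : Integrable g := hf.congr hfg
  set F : ℝ → ℝ≥0∞ := fun t => (‖g t‖₊ : ℝ≥0∞) with hFdef
  have hFm : Measurable F := hgsm.measurable.nnnorm.coe_nnreal_ennreal
  have hFint : ∫⁻ t, F t ≠ ⊤ := hg.2.ne
  set A : ℕ → Set ℝ := fun k => {x : ℝ | 1 / (k + 1) ≤ |x| ∧ |x| ≤ k + 1} with hAdef
  have hAm : ∀ k, MeasurableSet (A k) := fun k =>
    (measurableSet_le measurable_const measurable_id.abs).inter
      (measurableSet_le measurable_id.abs measurable_const)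
  have hGm : Measurable (fun x : ℝ => ∑' n : ℕ, F ((n + 1) * x)) :=
    Measurable.ennreal_tsum fun n => hFm.comp (measurable_const_mul _)
  set P : ℝ → Prop := fun x => Summable (fun n : ℕ => |g ((n + 1) * x)|) with hPdef
  have hkae : ∀ k : ℕ, ∀ᵐ x ∂(volume.restrict (A k)), P x := by
    intro k
    have h1 : ∀ᵐ x ∂(volume.restrict (A k)), (∑' n : ℕ, F ((n + 1) * x)) < ⊤ :=
      ae_lt_top hGm (core F hFm hFint (1 / (k + 1)) (k + 1) (by positivity) (by positivity))
    filter_upwards [h1] with x hx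
    have h2 : Summable (fun n : ℕ => ‖g ((n + 1) * x)‖₊) :=
      ENNReal.tsum_coe_ne_top_iff_summable.1 hx.ne
    have h3 := NNReal.summable_coe.2 h2
    refine h3.congr fun n => ?_
    rw [coe_nnnorm, Real.norm_eq_abs]
  have hPnull : volume {x : ℝ | ¬ P x} = 0 := by
    have hsub : {x : ℝ | ¬ P x} ⊆ {0} ∪ ⋃ k : ℕ, ({x : ℝ | ¬ P x} ∩ A k) := by
      intro x hx
      rcases eq_or_ne x 0 with rfl | hx0
      · exact Or.inl rfl
      · refine Or.inr (Set.mem_iUnion.2 ?_)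
        have habs : 0 < |x| := abs_pos.2 hx0
        refine ⟨⌈max |x| (1 / |x|)⌉₊, hx, ?_, ?_⟩
        · have h1 : (1 / |x| : ℝ) ≤ ⌈max |x| (1 / |x|)⌉₊ + 1 :=
            le_trans (le_max_right _ _) (le_trans (Nat.le_ceil _) (by linarith))
          rw [div_le_iff₀ (by positivity)] at h1 ⊢
          · nlinarith
        · exact le_trans (le_max_left _ _) (le_trans (Nat.le_ceil _) (by linarith))
    refine measure_mono_null hsub (measure_union_null (measure_singleton 0)
      (measure_iUnion_null fun k => ?_))
    rw [← Measure.restrict_apply' (hAm k)]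
    exact ae_iff.1 (hkae k)
  have hPae : ∀ᵐ x : ℝ, P x := ae_iff.2 hPnull
  have heq : ∀ᵐ x : ℝ, ∀ n : ℕ, f (((n : ℝ) + 1) * x) = g (((n : ℝ) + 1) * x) := by
    rw [ae_all_iff]
    intro n
    have hn : ((n : ℝ) + 1) ≠ 0 := by positivity
    set s : Set ℝ := toMeasurable volume {t : ℝ | f t ≠ g t} with hs
    have hsnull : volume s = 0 := by
      rw [hs, measure_toMeasurable]
      exact hfg
    have : {x : ℝ | ¬ f (((n : ℝ) + 1) * x) = g (((n : ℝ) + 1) * x)} ⊆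
        ((((n : ℝ) + 1)) * ·) ⁻¹' s := fun x hx =>
      subset_toMeasurable _ _ hx
    refine measure_mono_null this ?_
    rw [Real.volume_preimage_mul_left hn, hsnull, mul_zero]
  filter_upwards [hPae, heq] with x hP hx
  have h4 : Summable (fun n : ℕ => |f (((n : ℝ) + 1) * x)|) :=
    hP.congr fun n => by rw [hx n]
  have h5 : Summable (fun n : ℕ => |f ((↑(n + 1) : ℝ) * x)|) :=
    h4.congr fun n => by push_cast; ring_nf
  exact (summable_nat_add_iff 1).1 h5
end

section
/- Let d ∈ ℕ and let (c_n) be a sequence of positive reals such that the sequence (n^{1/d}/c'_n) is bounded for some permutation (c'_n) of (c_n). If f : ℝ^d → ℝ is Lebesgue integrable, then for λ-almost every x ∈ ℝ^d, ∑_{n=1}^∞ |f(c_n • x)| < ∞. -/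
open MeasureTheory Filter

open scoped ENNReal

/-- Change of variables for a lintegral under a positive dilation on `EuclideanSpace`. -/
lemma aux_cov {d : ℕ} (F : EuclideanSpace ℝ (Fin d) → ℝ≥0∞) (hF : AEMeasurable F volume)
    {a : ℝ} (ha : 0 < a) :
    ∫⁻ x, F (a • x) = ENNReal.ofReal ((a ^ d)⁻¹) * ∫⁻ y, F y := by
  have hmap := Measure.map_addHaar_smul (volume : Measure (EuclideanSpace ℝ (Fin d))) ha.ne'
  have hF' : AEMeasurable F (Measure.map (a • ·) (volume : Measure (EuclideanSpace ℝ (Fin d)))) := by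
    rw [hmap]; exact hF.smul_measure _
  have h1 := lintegral_map' hF' (measurable_const_smul a).aemeasurable
  rw [← h1, hmap, lintegral_smul_measure, finrank_euclideanSpace_fin]
  congr 1
  rw [abs_of_pos (by positivity)]

lemma aux_kernel {d : ℕ} (hd : 0 < d) (c : ℕ → ℝ) (hc : ∀ n, 0 < c n) (σ : ℕ → ℕ)
    (hσ : Function.Bijective σ) (L : ℝ)
    (hL : ∀ n : ℕ, (n : ℝ) ^ ((1 : ℝ) / d) / c (σ n) ≤ L)
    (ρ : ℝ) (hρ : 0 < ρ) (t : ℝ) :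
    (∑' n : ℕ, ENNReal.ofReal ((c n ^ d)⁻¹) *
      (Set.Ico ρ (2 * ρ)).indicator (fun _ => (1 : ℝ≥0∞)) ((c n)⁻¹ * t)) ≤
    ENNReal.ofReal ((c (σ 0))⁻¹ ^ d) + ENNReal.ofReal ((2 * L) ^ d) := by
  have hL0 : 0 < L := by
    have h1 := hL 1
    rw [Nat.cast_one, Real.one_rpow] at h1
    have := hc (σ 1)
    exact lt_of_lt_of_le (by positivity) h1
  set term : ℕ → ℝ≥0∞ := fun n => ENNReal.ofReal ((c n ^ d)⁻¹) *
      (Set.Ico ρ (2 * ρ)).indicator (fun _ => (1 : ℝ≥0∞)) ((c n)⁻¹ * t) with hterm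
  -- key counting bound
  have key : ∀ m : ℕ, ∀ r : ℝ, c (σ m) ≤ r → (m : ℝ) ≤ (L * r) ^ d := by
    intro m r hr
    have h1 : (m : ℝ) ^ ((1 : ℝ) / d) ≤ L * c (σ m) :=
      (div_le_iff₀ (hc (σ m))).mp (hL m)
    have h2 : (m : ℝ) ^ ((1 : ℝ) / d) ≤ L * r :=
      h1.trans (by nlinarith [hc (σ m)])
    calc (m : ℝ) = ((m : ℝ) ^ ((1 : ℝ) / d)) ^ d := by
          rw [one_div, Real.rpow_inv_natCast_pow (Nat.cast_nonneg m) hd.ne']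
      _ ≤ (L * r) ^ d := pow_le_pow_left₀ (Real.rpow_nonneg (Nat.cast_nonneg m) _) h2 d
  -- vanishing of terms with small c
  have hvan : ∀ n : ℕ, (c n)⁻¹ * t < ρ → term n = 0 := by
    intro n h
    have : (c n)⁻¹ * t ∉ Set.Ico ρ (2 * ρ) := fun hmem => absurd hmem.1 (not_le.mpr h)
    simp [hterm, Set.indicator_of_notMem this]
  -- reindex via the bijection
  have hre : (∑' n : ℕ, term n) = ∑' m : ℕ, term (σ m) :=
    (Equiv.tsum_eq (Equiv.ofBijective σ hσ) term).symm
  rw [hre]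
  rcases le_or_gt t 0 with ht | ht
  · have : ∀ m : ℕ, term (σ m) = 0 := fun m =>
      hvan _ (lt_of_le_of_lt (by nlinarith [inv_pos.mpr (hc (σ m))]) hρ)
    simp [this]
  · -- t > 0
    set N : ℕ := Nat.floor ((L * (t / ρ)) ^ d) with hN
    have hvanish : ∀ m ∉ Finset.range (N + 1), term (σ m) = 0 := by
      intro m hm
      by_contra h
      have hge : ρ ≤ (c (σ m))⁻¹ * t := by
        by_contra hlt
        exact h (hvan _ (not_le.mp hlt))
      have hcm : c (σ m) ≤ t / ρ := by
        have h1 : c (σ m) * ρ ≤ c (σ m) * ((c (σ m))⁻¹ * t) :=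
          mul_le_mul_of_nonneg_left hge (hc (σ m)).le
        rw [← mul_assoc, mul_inv_cancel₀ (hc (σ m)).ne', one_mul] at h1
        rw [le_div_iff₀ hρ]; exact h1
      have := key m _ hcm
      have hmN : m ≤ N := Nat.le_floor this
      exact hm (Finset.mem_range.mpr (Nat.lt_succ_of_le hmN))
    rw [tsum_eq_sum hvanish, Finset.sum_range_succ']
    -- bound each term uniformly
    have huni : ∀ n : ℕ, term n ≤ ENNReal.ofReal ((2 * ρ / t) ^ d) := by
      intro n
      by_cases hmem : (c n)⁻¹ * t ∈ Set.Ico ρ (2 * ρ)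
      · have hlow : t / (2 * ρ) ≤ c n := by
          rw [div_le_iff₀ (by positivity)]
          have h2 : (c n)⁻¹ * t < 2 * ρ := hmem.2
          have h3 := mul_lt_mul_of_pos_left h2 (hc n)
          rw [← mul_assoc, mul_inv_cancel₀ (hc n).ne', one_mul] at h3
          exact h3.le
        have hinv : (c n ^ d)⁻¹ ≤ (2 * ρ / t) ^ d := by
          rw [← inv_pow]
          refine pow_le_pow_left₀ (inv_pos.mpr (hc n)).le ?_ d
          rw [inv_le_comm₀ (hc n) (by positivity), inv_div]
          exact hlow
        calc term n ≤ ENNReal.ofReal ((c n ^ d)⁻¹) * 1 := by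
              apply mul_le_mul_right
              simp [Set.indicator_apply]; split <;> simp
          _ = ENNReal.ofReal ((c n ^ d)⁻¹) := mul_one _
          _ ≤ ENNReal.ofReal ((2 * ρ / t) ^ d) := ENNReal.ofReal_le_ofReal hinv
      · simp [hterm, Set.indicator_of_notMem hmem]
    have hbound0 : term (σ 0) ≤ ENNReal.ofReal ((c (σ 0))⁻¹ ^ d) := by
      calc term (σ 0) ≤ ENNReal.ofReal ((c (σ 0) ^ d)⁻¹) * 1 := by
            apply mul_le_mul_right
            simp [Set.indicator_apply]; split <;> simp
        _ = ENNReal.ofReal ((c (σ 0))⁻¹ ^ d) := by rw [mul_one, inv_pow]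
    have hsum : (∑ i ∈ Finset.range N, term (σ (i + 1))) ≤ ENNReal.ofReal ((2 * L) ^ d) := by
      calc (∑ i ∈ Finset.range N, term (σ (i + 1)))
          ≤ ∑ _i ∈ Finset.range N, ENNReal.ofReal ((2 * ρ / t) ^ d) :=
            Finset.sum_le_sum fun i _ => huni _
        _ = (N : ℝ≥0∞) * ENNReal.ofReal ((2 * ρ / t) ^ d) := by
            rw [Finset.sum_const, Finset.card_range, nsmul_eq_mul]
        _ ≤ ENNReal.ofReal ((L * (t / ρ)) ^ d) * ENNReal.ofReal ((2 * ρ / t) ^ d) := by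
            apply mul_le_mul_left
            rw [← ENNReal.ofReal_natCast]
            exact ENNReal.ofReal_le_ofReal (Nat.floor_le (by positivity))
        _ = ENNReal.ofReal ((L * (t / ρ)) ^ d * (2 * ρ / t) ^ d) := by
            rw [ENNReal.ofReal_mul (by positivity)]
        _ = ENNReal.ofReal ((2 * L) ^ d) := by
            rw [← mul_pow]
            congr 2
            field_simp
    calc (∑ i ∈ Finset.range N, term (σ (i + 1))) + term (σ 0)
        ≤ ENNReal.ofReal ((2 * L) ^ d) + ENNReal.ofReal ((c (σ 0))⁻¹ ^ d) :=
          add_le_add hsum hbound0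
      _ = ENNReal.ofReal ((c (σ 0))⁻¹ ^ d) + ENNReal.ofReal ((2 * L) ^ d) := add_comm _ _

theorem stmt2 (d : ℕ) (hd : 0 < d) (c : ℕ → ℝ) (hc : ∀ n, 0 < c n)
    (hperm : ∃ σ : ℕ → ℕ, Function.Bijective σ ∧
      ∃ L : ℝ, ∀ n : ℕ, (n : ℝ) ^ ((1 : ℝ) / d) / c (σ n) ≤ L)
    (f : EuclideanSpace ℝ (Fin d) → ℝ) (hf : Integrable f) :
    ∀ᵐ x : EuclideanSpace ℝ (Fin d),
      Summable (fun n : ℕ => |f (c n • x)|) := by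
  obtain ⟨σ, hσ, L, hL⟩ := hperm
  set g : EuclideanSpace ℝ (Fin d) → ℝ≥0∞ := fun y => (‖f y‖₊ : ℝ≥0∞) with hg
  have hgm : AEMeasurable g volume := hf.aestronglyMeasurable.enorm
  have hgint : ∫⁻ y, g y ∂volume ≠ ∞ := hf.2.ne
  -- measurability of each summand
  have hcomp : ∀ n : ℕ, AEMeasurable (fun x : EuclideanSpace ℝ (Fin d) => g (c n • x)) volume := fun n =>
    hgm.comp_quasiMeasurePreserving
      (Measure.quasiMeasurePreserving_smul volume (hc n).ne')
  -- annuli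
  set S : ℤ → Set (EuclideanSpace ℝ (Fin d)) := fun k => {x : EuclideanSpace ℝ (Fin d) | ‖x‖ ∈ Set.Ico ((2 : ℝ) ^ k) (2 * (2 : ℝ) ^ k)} with hS
  have hSmeas : ∀ k, MeasurableSet (S k) := fun k =>
    measurable_norm measurableSet_Ico
  -- the key estimate on each annulus
  have hann : ∀ k : ℤ, ∀ᵐ x : EuclideanSpace ℝ (Fin d), x ∈ S k → (∑' n : ℕ, g (c n • x)) ≠ ∞ := by
    intro k
    have hρ : (0 : ℝ) < (2 : ℝ) ^ k := by positivity
    set ρ : ℝ := (2 : ℝ) ^ k with hρdef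
    -- the kernel constant
    set B : ℝ≥0∞ := ENNReal.ofReal ((c (σ 0))⁻¹ ^ d) + ENNReal.ofReal ((2 * L) ^ d) with hB
    have hBne : B ≠ ∞ := by simp [hB]
    -- per-n rescaled integrals
    set F : ℕ → EuclideanSpace ℝ (Fin d) → ℝ≥0∞ := fun n y =>
      (S k).indicator (fun _ => (1 : ℝ≥0∞)) ((c n)⁻¹ • y) * g y with hF
    have hFm : ∀ n, AEMeasurable (F n) volume := by
      intro n
      exact ((measurable_const.indicator (hSmeas k)).comp
        (measurable_const_smul ((c n)⁻¹))).aemeasurable.mul hgm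
    have hFid : ∀ n : ℕ, ∀ x : EuclideanSpace ℝ (Fin d), F n (c n • x) = (S k).indicator (fun x => g (c n • x)) x := by
      intro n x
      have hx : (c n)⁻¹ • (c n • x) = x := by
        rw [smul_smul, inv_mul_cancel₀ (hc n).ne', one_smul]
      by_cases hmem : x ∈ S k
      · simp [hF, hx, Set.indicator_of_mem hmem]
      · simp [hF, hx, Set.indicator_of_notMem hmem]
    have hcov : ∀ n : ℕ, ∫⁻ x in S k, g (c n • x) ∂volume =
        ENNReal.ofReal ((c n ^ d)⁻¹) * ∫⁻ y, F n y ∂volume := by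
      intro n
      rw [← lintegral_indicator (hSmeas k) _]
      have : ∀ x : EuclideanSpace ℝ (Fin d), (S k).indicator (fun x => g (c n • x)) x = F n (c n • x) :=
        fun x => (hFid n x).symm
      simp_rw [this]
      exact aux_cov (F n) (hFm n) (hc n)
    -- total integral over the annulus
    have hT : ∫⁻ x in S k, (∑' n : ℕ, g (c n • x)) ∂volume ≤ B * ∫⁻ y, g y ∂volume := by
      rw [lintegral_tsum fun n => (hcomp n).restrict]
      simp_rw [hcov]
      have hswap : (∑' n : ℕ, ENNReal.ofReal ((c n ^ d)⁻¹) * ∫⁻ y, F n y ∂volume)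
          = ∫⁻ y, (∑' n : ℕ, ENNReal.ofReal ((c n ^ d)⁻¹) * F n y) ∂volume := by
        rw [lintegral_tsum fun n => ((hFm n).const_mul _)]
        congr 1
        ext n
        exact (lintegral_const_mul' _ _ ENNReal.ofReal_ne_top).symm
      rw [hswap]
      have hker : ∀ y : EuclideanSpace ℝ (Fin d), (∑' n : ℕ, ENNReal.ofReal ((c n ^ d)⁻¹) * F n y) ≤ B * g y := by
        intro y
        have hpt : ∀ n : ℕ, ENNReal.ofReal ((c n ^ d)⁻¹) * F n y =
            (ENNReal.ofReal ((c n ^ d)⁻¹) *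
              (Set.Ico ρ (2 * ρ)).indicator (fun _ => (1 : ℝ≥0∞)) ((c n)⁻¹ * ‖y‖)) * g y := by
          intro n
          have hnorm : ‖(c n)⁻¹ • y‖ = (c n)⁻¹ * ‖y‖ := by
            rw [norm_smul, Real.norm_eq_abs, abs_of_pos (inv_pos.mpr (hc n))]
          have hind : (S k).indicator (fun _ => (1 : ℝ≥0∞)) ((c n)⁻¹ • y) =
              (Set.Ico ρ (2 * ρ)).indicator (fun _ => (1 : ℝ≥0∞)) ((c n)⁻¹ * ‖y‖) := by
            simp [Set.indicator_apply, hS, Set.mem_setOf_eq, hnorm, hρdef]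
          rw [hF]
          simp only [← mul_assoc, hind]
        simp_rw [hpt]
        rw [ENNReal.tsum_mul_right]
        exact mul_le_mul_left (aux_kernel hd c hc σ hσ L hL ρ hρ ‖y‖) _
      calc ∫⁻ y, (∑' n : ℕ, ENNReal.ofReal ((c n ^ d)⁻¹) * F n y) ∂volume
          ≤ ∫⁻ y, B * g y ∂volume := lintegral_mono hker
        _ = B * ∫⁻ y, g y ∂volume := lintegral_const_mul' _ _ hBne
    have hTne : ∫⁻ x in S k, (∑' n : ℕ, g (c n • x)) ∂volume ≠ ∞ :=
      ne_top_of_le_ne_top (ENNReal.mul_ne_top hBne hgint) hT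
    have haem : AEMeasurable (fun x : EuclideanSpace ℝ (Fin d) => ∑' n : ℕ, g (c n • x)) (volume.restrict (S k)) :=
      AEMeasurable.ennreal_tsum fun n => (hcomp n).restrict
    have := ae_lt_top' haem hTne
    rw [ae_restrict_iff' (hSmeas k)] at this
    exact this.mono fun x hx hxS => (hx hxS).ne
  -- combine over all annuli
  have hall : ∀ᵐ x : EuclideanSpace ℝ (Fin d), ∀ k : ℤ, x ∈ S k → (∑' n : ℕ, g (c n • x)) ≠ ∞ :=
    ae_all_iff.mpr hann
  have hnontriv : Nontrivial (EuclideanSpace ℝ (Fin d)) := by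
    refine ⟨0, EuclideanSpace.single ⟨0, hd⟩ 1, ?_⟩
    intro h
    have := congrArg (fun v : EuclideanSpace ℝ (Fin d) => v ⟨0, hd⟩) h.symm
    simp [EuclideanSpace.single_apply] at this
  have hzero : ∀ᵐ x : EuclideanSpace ℝ (Fin d), x ≠ 0 := by
    rw [ae_iff]
    have : {x : EuclideanSpace ℝ (Fin d) | ¬x ≠ 0} = {0} := by ext x; simp
    rw [this]
    exact measure_singleton 0
  filter_upwards [hall, hzero] with x hx hx0
  have hxn : 0 < ‖x‖ := norm_pos_iff.mpr hx0
  obtain ⟨k, hk⟩ := exists_mem_Ico_zpow hxn one_lt_two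
  have hxS : x ∈ S k := by
    refine ⟨hk.1, ?_⟩
    have := hk.2
    rwa [zpow_add_one₀ (two_ne_zero), mul_comm] at this
  have hQ : (∑' n : ℕ, (‖f (c n • x)‖₊ : ℝ≥0∞)) ≠ ∞ := hx k hxS
  have h1 : Summable (fun n : ℕ => ‖f (c n • x)‖₊) :=
    ENNReal.tsum_coe_ne_top_iff_summable.mp hQ
  have h2 : Summable (fun n : ℕ => (‖f (c n • x)‖₊ : ℝ)) := NNReal.summable_coe.mpr h1
  simpa [Real.norm_eq_abs] using h2
end

section
/- Let d ∈ ℕ and let (c_n) be a sequence of positive reals such that the sequence (n^{1/d}/c'_n) is bounded for some permutation (c'_n) of (c_n). If f : ℝ^d → ℝ is measurable and λ({x : |f(x)| ≥ ε}) < ∞ for every ε > 0, then for λ-almost every x ∈ ℝ^d, f(c_n • x) → 0 as n → ∞. -/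
open MeasureTheory Filter Set
open scoped ENNReal

private lemma cast_le_pow_of_rpow_le {d : ℕ} (hd : 0 < d) {m : ℕ} {a : ℝ}
    (h : (m : ℝ) ^ ((1 : ℝ) / d) ≤ a) : (m : ℝ) ≤ a ^ d := by
  have h0 : (0 : ℝ) ≤ (m : ℝ) ^ ((1 : ℝ) / d) := Real.rpow_nonneg (Nat.cast_nonneg m) _
  have hdne : (d : ℝ) ≠ 0 := by exact_mod_cast hd.ne'
  calc (m : ℝ) = ((m : ℝ) ^ ((1 : ℝ) / d)) ^ d := by
        rw [← Real.rpow_natCast ((m : ℝ) ^ ((1 : ℝ) / d)) d,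
          ← Real.rpow_mul (Nat.cast_nonneg m), one_div,
          inv_mul_cancel₀ hdne, Real.rpow_one]
    _ ≤ a ^ d := pow_le_pow_left₀ h0 h d

private lemma exists_pos_lb {d : ℕ} (hd : 0 < d) (c : ℕ → ℝ) (hc : ∀ n, 0 < c n)
    (σ : ℕ → ℕ) (hσ : Function.Bijective σ) (L : ℝ) (hL0 : 0 < L)
    (hL : ∀ n : ℕ, (n : ℝ) ^ ((1 : ℝ) / d) / c (σ n) ≤ L) :
    ∃ δ : ℝ, 0 < δ ∧ ∀ n, δ ≤ c n := by
  set N : ℕ := Nat.floor (L ^ d) with hN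
  set F : Finset ℝ := (Finset.range (N + 1)).image (fun m => c (σ m)) with hF
  have hne : F.Nonempty :=
    ⟨c (σ 0), Finset.mem_image_of_mem _ (Finset.mem_range.2 (Nat.succ_pos _))⟩
  refine ⟨min 1 (F.min' hne), lt_min one_pos ?_, fun n => ?_⟩
  · obtain ⟨m, _, hmeq⟩ := Finset.mem_image.1 (F.min'_mem hne)
    rw [← hmeq]; exact hc _
  · obtain ⟨m, rfl⟩ := hσ.2 n
    by_cases hm : m ≤ N
    · exact le_trans (min_le_right _ _)
        (F.min'_le _ (Finset.mem_image_of_mem _ (Finset.mem_range.2 (by omega))))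
    · push_neg at hm
      have h1 : L ^ d < (m : ℝ) := by
        exact (Nat.floor_lt (by positivity : (0:ℝ) ≤ L ^ d)).1 hm
      have h2 : L < (m : ℝ) ^ ((1 : ℝ) / d) := by
        have hdne : (d : ℝ) ≠ 0 := by exact_mod_cast hd.ne'
        have := Real.rpow_lt_rpow (by positivity : (0:ℝ) ≤ L ^ d) h1
          (by positivity : (0:ℝ) < (1:ℝ)/d)
        calc L = (L ^ d) ^ ((1 : ℝ) / d) := by
              rw [← Real.rpow_natCast L d, ← Real.rpow_mul hL0.le,
                mul_one_div, div_self hdne, Real.rpow_one]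
          _ < (m : ℝ) ^ ((1 : ℝ) / d) := this
      have h3 : (m : ℝ) ^ ((1 : ℝ) / d) ≤ L * c (σ m) :=
        (div_le_iff₀ (hc _)).1 (hL m)
      have : (1 : ℝ) ≤ c (σ m) := by nlinarith [hc (σ m)]
      exact le_trans (min_le_left _ _) this

private lemma sum_ne_top (d : ℕ) (hd : 0 < d) (c : ℕ → ℝ) (hc : ∀ n, 0 < c n)
    (σ : ℕ → ℕ) (hσ : Function.Bijective σ) (L : ℝ)
    (hL : ∀ n : ℕ, (n : ℝ) ^ ((1 : ℝ) / d) / c (σ n) ≤ L)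
    (A : Set (EuclideanSpace ℝ (Fin d))) (hA : MeasurableSet A) (hAfin : volume A < ⊤)
    (k : ℕ) :
    ∑' n, volume ((fun x : EuclideanSpace ℝ (Fin d) => c n • x) ⁻¹' A ∩
      {x : EuclideanSpace ℝ (Fin d) | 1 / (k + 1 : ℝ) ≤ ‖x‖ ∧ ‖x‖ ≤ (k + 1 : ℝ)}) ≠ ⊤ := by
  have hL0 : 0 < L := by
    have h1 := hL 1
    rw [Nat.cast_one, Real.one_rpow] at h1
    have := hc (σ 1)
    calc (0:ℝ) < 1 / c (σ 1) := by positivity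
      _ ≤ L := h1
  obtain ⟨δ, hδ0, hδ⟩ := exists_pos_lb hd c hc σ hσ L hL0 hL
  have hk1 : (0 : ℝ) < (k + 1 : ℝ) := by positivity
  -- target annuli
  set T : ℕ → Set (EuclideanSpace ℝ (Fin d)) :=
    fun n => {y | c n / (k + 1 : ℝ) ≤ ‖y‖ ∧ ‖y‖ ≤ c n * (k + 1 : ℝ)} with hT
  have hTmeas : ∀ n, MeasurableSet (T n) := fun n =>
    (measurableSet_le measurable_const measurable_norm).inter
      (measurableSet_le measurable_norm measurable_const)
  -- step 1 : termwise bound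
  have step1 : ∀ n, volume ((fun x : EuclideanSpace ℝ (Fin d) => c n • x) ⁻¹' A ∩
      {x : EuclideanSpace ℝ (Fin d) | 1 / (k + 1 : ℝ) ≤ ‖x‖ ∧ ‖x‖ ≤ (k + 1 : ℝ)}) ≤
      ENNReal.ofReal ((c n ^ d)⁻¹) * volume (A ∩ T n) := by
    intro n
    have hsub : (fun x : EuclideanSpace ℝ (Fin d) => c n • x) ⁻¹' A ∩
        {x : EuclideanSpace ℝ (Fin d) | 1 / (k + 1 : ℝ) ≤ ‖x‖ ∧ ‖x‖ ≤ (k + 1 : ℝ)} ⊆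
        (fun x : EuclideanSpace ℝ (Fin d) => c n • x) ⁻¹' (A ∩ T n) := by
      rintro x ⟨hxA, hx1, hx2⟩
      refine ⟨hxA, ?_, ?_⟩
      · have : ‖c n • x‖ = c n * ‖x‖ := by
          rw [norm_smul, Real.norm_eq_abs, abs_of_pos (hc n)]
        rw [this]
        rw [div_le_iff₀ hk1]
        calc c n = c n * ((1 / (k+1:ℝ)) * (k+1:ℝ)) := by field_simp
          _ ≤ c n * (‖x‖ * (k+1:ℝ)) := by
              have := hc n
              gcongr
          _ = c n * ‖x‖ * (k+1:ℝ) := by ring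
      · have : ‖c n • x‖ = c n * ‖x‖ := by
          rw [norm_smul, Real.norm_eq_abs, abs_of_pos (hc n)]
        rw [this]
        have := hc n
        gcongr
    calc volume _ ≤ volume ((fun x : EuclideanSpace ℝ (Fin d) => c n • x) ⁻¹' (A ∩ T n)) :=
          measure_mono hsub
      _ = ENNReal.ofReal ((c n ^ d)⁻¹) * volume (A ∩ T n) := by
          rw [Measure.addHaar_preimage_smul volume (hc n).ne' (A ∩ T n)]
          congr 2
          rw [finrank_euclideanSpace_fin, abs_inv, abs_of_pos (pow_pos (hc n) d)]
  -- step 2 : express as integral over A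
  have step2 : ∀ n, ENNReal.ofReal ((c n ^ d)⁻¹) * volume (A ∩ T n) =
      ∫⁻ y in A, ENNReal.ofReal ((c n ^ d)⁻¹) * (T n).indicator 1 y := by
    intro n
    rw [lintegral_const_mul _ (measurable_one.indicator (hTmeas n)),
      lintegral_indicator_one (hTmeas n), Measure.restrict_apply (hTmeas n), inter_comm]
  -- pointwise bound for the summed integrand
  set C : ℝ≥0∞ := ENNReal.ofReal ((L * (k+1:ℝ)^2)^d + ((k+1:ℝ)^2 / δ)^d) with hC
  have pointwise : ∀ y : EuclideanSpace ℝ (Fin d),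
      ∑' n, ENNReal.ofReal ((c n ^ d)⁻¹) * (T n).indicator 1 y ≤ C := by
    intro y
    set g : ℕ → ℝ≥0∞ := fun n => ENNReal.ofReal ((c n ^ d)⁻¹) * (T n).indicator 1 y
      with hg
    by_cases hy : ∀ n, y ∉ T n
    · have : ∀ n, g n = 0 := by
        intro n
        simp [hg, indicator_of_notMem (hy n)]
      rw [tsum_congr this, tsum_zero]
      exact zero_le
    · push_neg at hy
      obtain ⟨n0, hn0⟩ := hy
      have hy1 : δ / (k+1:ℝ) ≤ ‖y‖ :=
        le_trans (by gcongr; exact hδ n0) hn0.1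
      have hy0 : (0:ℝ) < ‖y‖ := lt_of_lt_of_le (by positivity) hy1
      rw [← (Equiv.ofBijective σ hσ).tsum_eq g]
      set M : ℕ := Nat.floor ((L * (k+1:ℝ) * ‖y‖) ^ d) with hM
      have hsupp : ∀ m ∉ Finset.range (M + 1), g ((Equiv.ofBijective σ hσ) m) = 0 := by
        intro m hm
        simp only [Finset.mem_range, not_lt] at hm
        have : y ∉ T (σ m) := by
          intro hyT
          have h1 : c (σ m) ≤ (k+1:ℝ) * ‖y‖ := by
            have := hyT.1
            rw [div_le_iff₀ hk1] at this
            linarith [this]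
          have h2 : (m : ℝ) ^ ((1 : ℝ) / d) ≤ L * c (σ m) := (div_le_iff₀ (hc _)).1 (hL m)
          have h3 : (m : ℝ) ^ ((1 : ℝ) / d) ≤ L * (k+1:ℝ) * ‖y‖ := by nlinarith
          have h4 : (m : ℝ) ≤ (L * (k+1:ℝ) * ‖y‖) ^ d := cast_le_pow_of_rpow_le hd h3
          have h5 : m ≤ M := Nat.le_floor h4
          omega
        simp [hg, indicator_of_notMem this]
      rw [tsum_eq_sum hsupp]
      have hterm : ∀ m ∈ Finset.range (M + 1),
          g ((Equiv.ofBijective σ hσ) m) ≤ ENNReal.ofReal (((k+1:ℝ) / ‖y‖) ^ d) := by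
        intro m _
        by_cases hyT : y ∈ T (σ m)
        · have h1 : ‖y‖ / (k+1:ℝ) ≤ c (σ m) := by
            rw [div_le_iff₀ hk1]
            exact hyT.2
          have h2 : (c (σ m) ^ d)⁻¹ ≤ ((k+1:ℝ) / ‖y‖) ^ d := by
            rw [← inv_pow]
            refine pow_le_pow_left₀ (inv_nonneg.2 (hc _).le) ?_ d
            rw [inv_le_comm₀ (hc _) (by positivity)]
            rw [inv_div]
            exact h1
          simp only [hg, Equiv.ofBijective_apply, indicator_of_mem hyT, Pi.one_apply, mul_one]
          exact ENNReal.ofReal_le_ofReal h2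
        · simp [hg, indicator_of_notMem hyT]
      calc ∑ m ∈ Finset.range (M + 1), g ((Equiv.ofBijective σ hσ) m)
          ≤ (Finset.range (M + 1)).card • ENNReal.ofReal (((k+1:ℝ) / ‖y‖) ^ d) :=
            Finset.sum_le_card_nsmul _ _ _ hterm
        _ = (M + 1 : ℕ) * ENNReal.ofReal (((k+1:ℝ) / ‖y‖) ^ d) := by
            rw [Finset.card_range, nsmul_eq_mul]
        _ ≤ ENNReal.ofReal ((L * (k+1:ℝ) * ‖y‖) ^ d + 1) *
            ENNReal.ofReal (((k+1:ℝ) / ‖y‖) ^ d) := by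
            gcongr
            rw [← ENNReal.ofReal_natCast]
            refine ENNReal.ofReal_le_ofReal ?_
            push_cast
            have := Nat.floor_le (by positivity : (0:ℝ) ≤ (L * (k+1:ℝ) * ‖y‖) ^ d)
            linarith
        _ = ENNReal.ofReal (((L * (k+1:ℝ) * ‖y‖) ^ d + 1) * ((k+1:ℝ) / ‖y‖) ^ d) :=
            (ENNReal.ofReal_mul (by positivity)).symm
        _ ≤ C := by
            refine ENNReal.ofReal_le_ofReal ?_
            have e1 : (L * (k+1:ℝ) * ‖y‖) ^ d * ((k+1:ℝ) / ‖y‖) ^ d = (L * (k+1:ℝ)^2) ^ d := by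
              rw [← mul_pow]
              congr 1
              field_simp
            have e2 : ((k+1:ℝ) / ‖y‖) ^ d ≤ ((k+1:ℝ)^2 / δ) ^ d := by
              refine pow_le_pow_left₀ (by positivity) ?_ d
              rw [div_le_div_iff₀ hy0 hδ0]
              have : δ / (k+1:ℝ) ≤ ‖y‖ := hy1
              rw [div_le_iff₀ hk1] at this
              nlinarith
            calc ((L * (k+1:ℝ) * ‖y‖) ^ d + 1) * ((k+1:ℝ) / ‖y‖) ^ d
                = (L * (k+1:ℝ)^2) ^ d + ((k+1:ℝ) / ‖y‖) ^ d := by rw [add_mul, one_mul, e1]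
              _ ≤ (L * (k+1:ℝ)^2) ^ d + ((k+1:ℝ)^2 / δ) ^ d := by linarith
  -- put it all together
  have hsum : ∑' n, volume ((fun x : EuclideanSpace ℝ (Fin d) => c n • x) ⁻¹' A ∩
      {x : EuclideanSpace ℝ (Fin d) | 1 / (k + 1 : ℝ) ≤ ‖x‖ ∧ ‖x‖ ≤ (k + 1 : ℝ)}) ≤
      C * volume A := by
    calc ∑' n, volume ((fun x : EuclideanSpace ℝ (Fin d) => c n • x) ⁻¹' A ∩
          {x : EuclideanSpace ℝ (Fin d) | 1 / (k + 1 : ℝ) ≤ ‖x‖ ∧ ‖x‖ ≤ (k + 1 : ℝ)})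
        ≤ ∑' n, ∫⁻ y in A, ENNReal.ofReal ((c n ^ d)⁻¹) * (T n).indicator 1 y := by
          refine ENNReal.tsum_le_tsum fun n => ?_
          rw [← step2 n]
          exact step1 n
      _ = ∫⁻ y in A, ∑' n, ENNReal.ofReal ((c n ^ d)⁻¹) * (T n).indicator 1 y :=
          (lintegral_tsum fun n =>
            ((measurable_one.indicator (hTmeas n)).const_mul _).aemeasurable).symm
      _ ≤ ∫⁻ _ in A, C := lintegral_mono fun y => pointwise y
      _ = C * volume A := by rw [setLIntegral_const]
  refine ne_top_of_le_ne_top ?_ hsum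
  exact ENNReal.mul_ne_top ENNReal.ofReal_ne_top hAfin.ne

theorem stmt3 (d : ℕ) (hd : 0 < d) (c : ℕ → ℝ) (hc : ∀ n, 0 < c n)
    (hperm : ∃ σ : ℕ → ℕ, Function.Bijective σ ∧
      ∃ L : ℝ, ∀ n : ℕ, (n : ℝ) ^ ((1 : ℝ) / d) / c (σ n) ≤ L)
    (f : EuclideanSpace ℝ (Fin d) → ℝ) (hf : Measurable f)
    (hlev : ∀ ε : ℝ, 0 < ε → volume {x : EuclideanSpace ℝ (Fin d) | ε ≤ |f x|} < ⊤) :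
    ∀ᵐ x : EuclideanSpace ℝ (Fin d),
      Tendsto (fun n : ℕ => f (c n • x)) atTop (nhds 0) := by
  obtain ⟨σ, hσ, L, hL⟩ := hperm
  have hmeasA : ∀ m : ℕ,
      MeasurableSet {y : EuclideanSpace ℝ (Fin d) | 1 / (m + 1 : ℝ) ≤ |f y|} :=
    fun m => measurableSet_le measurable_const hf.abs
  have hfinA : ∀ m : ℕ, volume {y : EuclideanSpace ℝ (Fin d) | 1 / (m + 1 : ℝ) ≤ |f y|} < ⊤ :=
    fun m => hlev _ (by positivity)
  have hbc : ∀ᵐ x : EuclideanSpace ℝ (Fin d), ∀ m k : ℕ, ∀ᶠ n in atTop,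
      x ∉ ((fun x : EuclideanSpace ℝ (Fin d) => c n • x) ⁻¹'
          {y : EuclideanSpace ℝ (Fin d) | 1 / (m + 1 : ℝ) ≤ |f y|} ∩
        {x : EuclideanSpace ℝ (Fin d) | 1 / (k + 1 : ℝ) ≤ ‖x‖ ∧ ‖x‖ ≤ (k + 1 : ℝ)}) := by
    rw [ae_all_iff]
    intro m
    rw [ae_all_iff]
    intro k
    exact ae_eventually_notMem (sum_ne_top d hd c hc σ hσ L hL _ (hmeasA m) (hfinA m) k)
  haveI : Nonempty (Fin d) := ⟨⟨0, hd⟩⟩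
  haveI : Nontrivial (EuclideanSpace ℝ (Fin d)) := by
    refine ⟨⟨EuclideanSpace.single ⟨0, hd⟩ (1:ℝ), 0, fun h => ?_⟩⟩
    have h1 : ‖EuclideanSpace.single (⟨0, hd⟩ : Fin d) (1:ℝ)‖ = 0 := by rw [h]; simp
    rw [EuclideanSpace.norm_single] at h1
    norm_num at h1
  have h0 : ∀ᵐ x : EuclideanSpace ℝ (Fin d), x ≠ 0 := by
    rw [ae_iff]
    have : {x : EuclideanSpace ℝ (Fin d) | ¬x ≠ 0} = {0} := by
      ext x; simp
    rw [this]
    exact measure_singleton 0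
  filter_upwards [h0, hbc] with x hx0 hx
  have hxpos : (0:ℝ) < ‖x‖ := norm_pos_iff.2 hx0
  obtain ⟨k, hk1, hk2⟩ : ∃ k : ℕ, 1 / (k + 1 : ℝ) ≤ ‖x‖ ∧ ‖x‖ ≤ (k + 1 : ℝ) := by
    refine ⟨max ⌈1 / ‖x‖⌉₊ ⌈‖x‖⌉₊, ?_, ?_⟩
    · rw [div_le_iff₀ (by positivity)]
      have h1 : 1 / ‖x‖ ≤ (⌈1 / ‖x‖⌉₊ : ℝ) := Nat.le_ceil _
      have h2 : (⌈1 / ‖x‖⌉₊ : ℝ) ≤ (max ⌈1 / ‖x‖⌉₊ ⌈‖x‖⌉₊ : ℕ) := by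
        exact_mod_cast le_max_left _ _
      rw [div_le_iff₀ hxpos] at h1
      nlinarith
    · have h1 : ‖x‖ ≤ (⌈‖x‖⌉₊ : ℝ) := Nat.le_ceil _
      have h2 : (⌈‖x‖⌉₊ : ℝ) ≤ (max ⌈1 / ‖x‖⌉₊ ⌈‖x‖⌉₊ : ℕ) := by
        exact_mod_cast le_max_right _ _
      linarith
  rw [NormedAddCommGroup.tendsto_nhds_zero]
  intro ε hε
  obtain ⟨m, hm⟩ := exists_nat_one_div_lt hε
  filter_upwards [hx m k] with n hn
  rw [Real.norm_eq_abs]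
  by_contra hcon
  push_neg at hcon
  exact hn ⟨by
    show 1 / (m + 1 : ℝ) ≤ |f (c n • x)|
    calc 1 / (m + 1 : ℝ) ≤ ε := hm.le
      _ ≤ |f (c n • x)| := hcon, hk1, hk2⟩
end

section
/- Let d ∈ ℕ and let (c_n) be a sequence of positive reals such that for every permutation (c'_n) of (c_n), the sequence (n^{1/d}/c'_n) is unbounded. Then there exists a continuous, nonnegative function f : ℝ^d → ℝ with ∫ f dλ < ∞ such that ∑_{n=1}^∞ f(c_n • x) = ∞ for every x ∈ ℝ^d. -/
open MeasureTheory Filter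

private lemma aux_key_s4 (d : ℕ) (hd : 0 < d) (c : ℕ → ℝ) (hc : ∀ n, 0 < c n)
    (hperm : ∀ σ : ℕ → ℕ, Function.Bijective σ →
      ¬ ∃ L : ℝ, ∀ n : ℕ, (n : ℝ) ^ ((1 : ℝ) / d) / c (σ n) ≤ L) :
    ∀ A : ℝ, 0 < A → ∃ t : ℝ, 1 ≤ t ∧
      ∃ S : Finset ℕ, (∀ n ∈ S, c n ≤ t) ∧ A * t ^ d ≤ (S.card : ℝ) := by
  classical
  by_contra hcon
  push_neg at hcon
  obtain ⟨A, hA, hbound⟩ := hcon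
  have hfin : ∀ t : ℝ, {m | c m ≤ t}.Finite := by
    intro t
    rw [← Set.not_infinite]
    intro hinf
    have hinf' : {m | c m ≤ max t 1}.Infinite :=
      Set.Infinite.mono (fun m (hm : c m ≤ t) => le_trans hm (le_max_left t 1)) hinf
    obtain ⟨Sf, hSsub, hScard⟩ := hinf'.exists_subset_card_eq (⌈A * (max t 1) ^ d⌉₊ + 1)
    have h1 := hbound (max t 1) (le_max_right _ _) Sf (fun n hn => hSsub hn)
    rw [hScard] at h1
    have h2 : A * (max t 1) ^ d ≤ (⌈A * (max t 1) ^ d⌉₊ : ℝ) := Nat.le_ceil _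
    push_cast at h1
    linarith
  obtain ⟨m0, hm0F, hm0min⟩ := Finset.exists_min_image (hfin (c 0)).toFinset c
    ⟨0, by simp [Set.Finite.mem_toFinset]⟩
  have hcm_le : ∀ n, c m0 ≤ c n := by
    intro n
    by_cases h : c n ≤ c 0
    · exact hm0min n (by simp [Set.Finite.mem_toFinset, h])
    · exact le_trans (hm0min 0 (by simp [Set.Finite.mem_toFinset])) (le_of_not_ge h)
  set L : ℕ → Finset ℕ := fun m =>
    (hfin (c m)).toFinset.filter (fun m' => c m' < c m ∨ (c m' = c m ∧ m' ≤ m)) with hL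
  have hmem : ∀ m' m : ℕ, m' ∈ L m ↔ (c m' < c m ∨ (c m' = c m ∧ m' ≤ m)) := by
    intro m' m
    simp only [hL, Finset.mem_filter, Set.Finite.mem_toFinset, Set.mem_setOf_eq]
    constructor
    · exact fun h => h.2
    · intro h
      refine ⟨?_, h⟩
      rcases h with h | h
      · exact le_of_lt h
      · exact le_of_eq h.1
  have hself : ∀ m, m ∈ L m := fun m => (hmem m m).2 (Or.inr ⟨rfl, le_rfl⟩)
  have hvals : ∀ m' m, m' ∈ L m → c m' ≤ c m := by
    intro m' m h
    rcases (hmem m' m).1 h with h | h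
    · exact le_of_lt h
    · exact le_of_eq h.1
  have hsub : ∀ m₁ m₂, m₁ ∈ L m₂ → L m₁ ⊆ L m₂ := by
    intro m₁ m₂ h12 a ha
    rcases (hmem m₁ m₂).1 h12 with h | h
    · rcases (hmem a m₁).1 ha with ha' | ha'
      · exact (hmem a m₂).2 (Or.inl (lt_trans ha' h))
      · exact (hmem a m₂).2 (Or.inl (lt_of_le_of_lt (le_of_eq ha'.1) h))
    · rcases (hmem a m₁).1 ha with ha' | ha'
      · exact (hmem a m₂).2 (Or.inl (lt_of_lt_of_le ha' (le_of_eq h.1)))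
      · exact (hmem a m₂).2 (Or.inr ⟨ha'.1.trans h.1, ha'.2.trans h.2⟩)
  have hanti : ∀ m₁ m₂, m₁ ∈ L m₂ → m₂ ∈ L m₁ → m₁ = m₂ := by
    intro m₁ m₂ h1 h2
    rcases (hmem m₁ m₂).1 h1 with h | h
    · rcases (hmem m₂ m₁).1 h2 with h' | h'
      · exact absurd (lt_trans h h') (lt_irrefl _)
      · exact absurd h (not_lt.2 (le_of_eq h'.1))
    · rcases (hmem m₂ m₁).1 h2 with h' | h'
      · exact absurd h' (not_lt.2 (le_of_eq h.1))
      · exact le_antisymm h.2 h'.2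
  have htotal : ∀ m₁ m₂ : ℕ, m₁ ∈ L m₂ ∨ m₂ ∈ L m₁ := by
    intro m₁ m₂
    rcases lt_trichotomy (c m₁) (c m₂) with h | h | h
    · exact Or.inl ((hmem _ _).2 (Or.inl h))
    · rcases le_total m₁ m₂ with h' | h'
      · exact Or.inl ((hmem _ _).2 (Or.inr ⟨h, h'⟩))
      · exact Or.inr ((hmem _ _).2 (Or.inr ⟨h.symm, h'⟩))
    · exact Or.inr ((hmem _ _).2 (Or.inl h))
  have hρpos : ∀ m, 1 ≤ (L m).card := fun m => Finset.card_pos.2 ⟨m, hself m⟩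
  have hρinj : ∀ m₁ m₂, (L m₁).card = (L m₂).card → m₁ = m₂ := by
    intro m₁ m₂ h
    rcases htotal m₁ m₂ with hm | hm
    · have he := Finset.eq_of_subset_of_card_le (hsub _ _ hm) (le_of_eq h.symm)
      exact hanti _ _ hm (by rw [he]; exact hself m₂)
    · have he := Finset.eq_of_subset_of_card_le (hsub _ _ hm) (le_of_eq h)
      exact (hanti _ _ hm (by rw [he]; exact hself m₁)).symm
  have hsurjk : ∀ m k, 1 ≤ k → k ≤ (L m).card → ∃ m', (L m').card = k := by
    intro m k h1 h2
    have hmap : ∀ a (_ : a ∈ L m), (L a).card ∈ Finset.Icc 1 (L m).card := fun a ha =>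
      Finset.mem_Icc.2 ⟨hρpos a, Finset.card_le_card (hsub a m ha)⟩
    have hcardIcc : (Finset.Icc 1 (L m).card).card ≤ (L m).card := by
      rw [Nat.card_Icc]; omega
    obtain ⟨a, _, hak⟩ := Finset.surj_on_of_inj_on_of_card_le
      (fun a _ => (L a).card) hmap
      (fun a₁ a₂ _ _ h => hρinj a₁ a₂ h) hcardIcc k (Finset.mem_Icc.2 ⟨h1, h2⟩)
    exact ⟨a, hak.symm⟩
  have hbig : ∀ n : ℕ, ∃ m, n ≤ (L m).card := by
    intro n
    by_contra hb
    push_neg at hb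
    obtain ⟨x, _, y, _, hxy, hfxy⟩ := Finset.exists_ne_map_eq_of_card_lt_of_maps_to
      (s := Finset.range (n + 1)) (t := Finset.range n) (f := fun a => (L a).card) (by simp)
      (fun a _ => Finset.mem_range.2 (hb a))
    exact hxy (hρinj _ _ hfxy)
  have hσex : ∀ n : ℕ, ∃ m, (L m).card = n + 1 := by
    intro n
    obtain ⟨m, hm⟩ := hbig (n + 1)
    exact hsurjk m (n + 1) (Nat.succ_le_succ (Nat.zero_le n)) hm
  choose σ hσ using hσex
  have hσbij : Function.Bijective σ := by
    constructor
    · intro a b h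
      have h2 : (L (σ a)).card = (L (σ b)).card := by rw [h]
      rw [hσ a, hσ b] at h2
      omega
    · intro m
      refine ⟨(L m).card - 1, hρinj _ _ ?_⟩
      rw [hσ]
      have := hρpos m
      omega
  apply hperm σ hσbij
  refine ⟨max (A ^ ((1 : ℝ) / d)) (A ^ ((1 : ℝ) / d) / c m0), fun n => ?_⟩
  have hcard : ((L (σ n)).card : ℝ) = (n : ℝ) + 1 := by rw [hσ n]; push_cast; ring
  have hd0 : (0:ℝ) < (d : ℝ) := by exact_mod_cast hd
  have hdR : (0:ℝ) < 1 / (d : ℝ) := by positivity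
  by_cases h1 : 1 ≤ c (σ n)
  · have hb := hbound (c (σ n)) h1 (L (σ n)) (fun m' hm' => hvals m' _ hm')
    rw [hcard] at hb
    have hn : (n : ℝ) ≤ A * c (σ n) ^ d := by linarith
    have h2 : (n : ℝ) ^ ((1:ℝ)/d) ≤ (A * c (σ n) ^ d) ^ ((1:ℝ)/d) :=
      Real.rpow_le_rpow (Nat.cast_nonneg n) hn (le_of_lt hdR)
    have h3 : (A * c (σ n) ^ d) ^ ((1:ℝ)/d) = A ^ ((1:ℝ)/d) * c (σ n) := by
      rw [Real.mul_rpow (le_of_lt hA) (by positivity), ← Real.rpow_natCast (c (σ n)) d,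
        ← Real.rpow_mul (le_of_lt (hc (σ n))), mul_one_div, div_self hd0.ne', Real.rpow_one]
    refine le_trans ?_ (le_max_left _ _)
    rw [div_le_iff₀ (hc (σ n))]
    rw [← h3]
    exact h2
  · have hb := hbound 1 le_rfl (L (σ n))
      (fun m' hm' => le_trans (hvals m' _ hm') (le_of_not_ge h1))
    rw [hcard, one_pow, mul_one] at hb
    have hn : (n : ℝ) ≤ A := by linarith
    have h2 : (n : ℝ) ^ ((1:ℝ)/d) ≤ A ^ ((1:ℝ)/d) :=
      Real.rpow_le_rpow (Nat.cast_nonneg n) hn (le_of_lt hdR)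
    refine le_trans ?_ (le_max_right _ _)
    exact div_le_div₀ (by positivity) h2 (hc m0) (hcm_le (σ n))

set_option maxHeartbeats 1000000 in
theorem stmt4 (d : ℕ) (hd : 0 < d) (c : ℕ → ℝ) (hc : ∀ n, 0 < c n)
    (hperm : ∀ σ : ℕ → ℕ, Function.Bijective σ →
      ¬ ∃ L : ℝ, ∀ n : ℕ, (n : ℝ) ^ ((1 : ℝ) / d) / c (σ n) ≤ L) :
    ∃ f : EuclideanSpace ℝ (Fin d) → ℝ, Continuous f ∧ (∀ x, 0 ≤ f x) ∧
      Integrable f ∧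
      ∀ x : EuclideanSpace ℝ (Fin d), ¬ Summable (fun n : ℕ => f (c n • x)) := by
  classical
  have key := aux_key_s4 d hd c hc hperm
  have hkey : ∀ k : ℕ, ∃ t : ℝ, 1 ≤ t ∧ ∃ S : Finset ℕ,
      (∀ n ∈ S, c n ≤ t) ∧ (4:ℝ)^k * t ^ d ≤ (S.card : ℝ) := fun k => key ((4:ℝ)^k) (by positivity)
  choose t ht S hS hcard using hkey
  have htpos : ∀ k, (0:ℝ) < t k := fun k => lt_of_lt_of_le one_pos (ht k)
  set B : ℕ → ℝ := fun k => (1/2:ℝ)^k * ((t k)^d)⁻¹ with hB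
  set G : ℕ → EuclideanSpace ℝ (Fin d) → ℝ :=
    fun k x => B k * ((1 + ‖x‖ / t k)^(d+1))⁻¹ with hG
  have hBpos : ∀ k, 0 < B k := fun k => by
    have h := htpos k
    simp only [hB]
    positivity
  have hBle : ∀ k, B k ≤ (1/2:ℝ)^k := by
    intro k
    have h1 : (1:ℝ) ≤ (t k)^d := one_le_pow₀ (ht k)
    have h2 : ((t k)^d)⁻¹ ≤ 1 := inv_le_one_of_one_le₀ h1
    calc B k = (1/2:ℝ)^k * ((t k)^d)⁻¹ := rfl
      _ ≤ (1/2:ℝ)^k * 1 := by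
          apply mul_le_mul_of_nonneg_left h2 (by positivity)
      _ = (1/2:ℝ)^k := mul_one _
  have hbase : ∀ k (x : EuclideanSpace ℝ (Fin d)), (1:ℝ) ≤ 1 + ‖x‖ / t k := fun k x =>
    le_add_of_nonneg_right (div_nonneg (norm_nonneg x) (htpos k).le)
  have hGnonneg : ∀ k x, 0 ≤ G k x := fun k x =>
    mul_nonneg (hBpos k).le
      (inv_nonneg.2 (pow_nonneg (le_trans zero_le_one (hbase k x)) _))
  have hGle : ∀ k x, G k x ≤ (1/2:ℝ)^k := by
    intro k x
    have h1 : (1:ℝ) ≤ (1 + ‖x‖ / t k)^(d+1) := one_le_pow₀ (hbase k x)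
    have h2 : ((1 + ‖x‖ / t k)^(d+1))⁻¹ ≤ 1 := inv_le_one_of_one_le₀ h1
    calc G k x ≤ B k * 1 := mul_le_mul_of_nonneg_left h2 (hBpos k).le
      _ = B k := mul_one _
      _ ≤ (1/2:ℝ)^k := hBle k
  have hgeo : Summable (fun k : ℕ => (1/2:ℝ)^k) :=
    summable_geometric_of_lt_one (by norm_num) (by norm_num)
  have hGcont : ∀ k, Continuous (G k) := by
    intro k
    apply continuous_const.mul
    apply Continuous.inv₀
    · exact (continuous_const.add (continuous_norm.div_const _)).pow _
    · intro x
      exact ne_of_gt (pow_pos (lt_of_lt_of_le one_pos (hbase k x)) _)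
  have hsumm : ∀ x, Summable (fun k => G k x) := fun x =>
    Summable.of_nonneg_of_le (fun k => hGnonneg k x) (fun k => hGle k x) hgeo
  have hcont : Continuous (fun x => ∑' k, G k x) :=
    continuous_tsum hGcont hgeo (fun k x => by
      rw [Real.norm_eq_abs, abs_of_nonneg (hGnonneg k x)]; exact hGle k x)
  set φ : EuclideanSpace ℝ (Fin d) → ℝ := fun y => ((1 + ‖y‖)^(d+1))⁻¹ with hφ
  have hφnonneg : ∀ y, 0 ≤ φ y := fun y => by
    simp only [hφ]; positivity
  have hφint : Integrable φ (volume) := by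
    have hfr : ((Module.finrank ℝ (EuclideanSpace ℝ (Fin d))) : ℝ) < ((d:ℝ) + 1) := by
      rw [finrank_euclideanSpace_fin]; linarith
    have h := integrable_one_add_norm (E := EuclideanSpace ℝ (Fin d)) (μ := volume) hfr
    refine h.congr (Eventually.of_forall fun y => ?_)
    have hcast : ((d:ℝ)+1) = ((d+1 : ℕ) : ℝ) := by push_cast; ring
    show (1 + ‖y‖) ^ (-((d:ℝ)+1)) = ((1 + ‖y‖)^(d+1))⁻¹
    have hpos : (0:ℝ) ≤ 1 + ‖y‖ := by positivity
    rw [Real.rpow_neg hpos, hcast, Real.rpow_natCast]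
  have hGeq : ∀ k (x : EuclideanSpace ℝ (Fin d)), G k x = B k * φ ((t k)⁻¹ • x) := by
    intro k x
    have h : ‖(t k)⁻¹ • x‖ = ‖x‖ / t k := by
      rw [norm_smul, Real.norm_eq_abs, abs_of_pos (inv_pos.2 (htpos k)), inv_mul_eq_div]
    simp only [hG, hφ, h]
  have hGint : ∀ k, Integrable (G k) volume := by
    intro k
    have h1 : Integrable (fun x : EuclideanSpace ℝ (Fin d) => φ ((t k)⁻¹ • x)) volume :=
      (integrable_comp_smul_iff volume φ (inv_ne_zero (htpos k).ne')).2 hφint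
    exact (h1.const_mul (B k)).congr (Eventually.of_forall fun x => (hGeq k x).symm)
  have hval : ∀ k, (∫ x, G k x) = (1/2:ℝ)^k * ∫ y, φ y := by
    intro k
    have h0 : (t k)^d ≠ 0 := (pow_pos (htpos k) d).ne'
    calc (∫ x, G k x) = ∫ x, B k * φ ((t k)⁻¹ • x) := by
          simp_rw [hGeq]
      _ = B k * ∫ x, φ ((t k)⁻¹ • x) := integral_const_mul _ _
      _ = B k * (|t k ^ Module.finrank ℝ (EuclideanSpace ℝ (Fin d))| • ∫ y, φ y) := by
          rw [Measure.integral_comp_inv_smul volume φ (t k)]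
      _ = (1/2:ℝ)^k * ∫ y, φ y := by
          rw [finrank_euclideanSpace_fin, abs_of_pos (pow_pos (htpos k) d), smul_eq_mul, hB]
          field_simp
  refine ⟨fun x => ∑' k, G k x, hcont, fun x => tsum_nonneg (fun k => hGnonneg k x), ?_, ?_⟩
  · refine ⟨hcont.aestronglyMeasurable, ?_⟩
    rw [hasFiniteIntegral_iff_norm]
    have hnorm : ∀ x, ENNReal.ofReal ‖∑' k, G k x‖ = ∑' k, ENNReal.ofReal (G k x) := by
      intro x
      rw [Real.norm_eq_abs, abs_of_nonneg (tsum_nonneg (fun k => hGnonneg k x)),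
        ENNReal.ofReal_tsum_of_nonneg (fun k => hGnonneg k x) (hsumm x)]
    calc (∫⁻ x, ENNReal.ofReal ‖∑' k, G k x‖)
        = ∫⁻ x, ∑' k, ENNReal.ofReal (G k x) := by simp_rw [hnorm]
      _ = ∑' k, ∫⁻ x, ENNReal.ofReal (G k x) :=
          lintegral_tsum (fun k =>
            (ENNReal.measurable_ofReal.comp (hGcont k).measurable).aemeasurable)
      _ = ∑' k, ENNReal.ofReal ((1/2:ℝ)^k * ∫ y, φ y) :=
          tsum_congr (fun k => by
            rw [← ofReal_integral_eq_lintegral_ofReal (hGint k)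
              (Eventually.of_forall (hGnonneg k)), hval k])
      _ = ENNReal.ofReal (∑' k, (1/2:ℝ)^k * ∫ y, φ y) := by
          rw [ENNReal.ofReal_tsum_of_nonneg
            (fun k => mul_nonneg (by positivity) (integral_nonneg hφnonneg))
            (hgeo.mul_right (∫ y, φ y))]
      _ < ⊤ := ENNReal.ofReal_lt_top
  · intro x hsum
    set T := ∑' n, (∑' k, G k (c n • x)) with hT
    set C : ℝ := ((1 + ‖x‖)^(d+1))⁻¹ with hC
    have hCpos : 0 < C := by
      simp only [hC]; positivity
    have hTk : ∀ k : ℕ, (2:ℝ)^k * C ≤ T := by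
      intro k
      have hterm : ∀ n ∈ S k, B k * C ≤ ∑' j, G j (c n • x) := by
        intro n hn
        have hle : G k (c n • x) ≤ ∑' j, G j (c n • x) :=
          Summable.le_tsum (hsumm (c n • x)) k (fun j _ => hGnonneg j _)
        refine le_trans ?_ hle
        have h1 : ‖c n • x‖ = c n * ‖x‖ := by
          rw [norm_smul, Real.norm_eq_abs, abs_of_pos (hc n)]
        have h2 : 1 + ‖c n • x‖ / t k ≤ 1 + ‖x‖ := by
          rw [h1]
          have h2' : c n * ‖x‖ / t k ≤ ‖x‖ := by
            rw [div_le_iff₀ (htpos k)]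
            calc c n * ‖x‖ ≤ t k * ‖x‖ :=
                  mul_le_mul_of_nonneg_right (hS k n hn) (norm_nonneg x)
              _ = ‖x‖ * t k := mul_comm _ _
          linarith
        have h3 : (1 + ‖c n • x‖ / t k)^(d+1) ≤ (1 + ‖x‖)^(d+1) :=
          pow_le_pow_left₀ (le_trans zero_le_one (hbase k _)) h2 _
        have h4 : C ≤ ((1 + ‖c n • x‖ / t k)^(d+1))⁻¹ := by
          rw [hC]
          exact inv_anti₀ (pow_pos (lt_of_lt_of_le one_pos (hbase k _)) _) h3
        exact mul_le_mul_of_nonneg_left h4 (hBpos k).le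
      have hsum1 : ∑ _n ∈ S k, (B k * C) ≤ ∑ n ∈ S k, ∑' j, G j (c n • x) :=
        Finset.sum_le_sum hterm
      have hsum2 : ∑ n ∈ S k, ∑' j, G j (c n • x) ≤ T :=
        Summable.sum_le_tsum (S k) (fun n _ => tsum_nonneg (fun j => hGnonneg j _)) hsum
      rw [Finset.sum_const, nsmul_eq_mul] at hsum1
      have h6 : ((4:ℝ)^k * (t k)^d) * (B k * C) ≤ ((S k).card : ℝ) * (B k * C) :=
        mul_le_mul_of_nonneg_right (hcard k) (mul_nonneg (hBpos k).le hCpos.le)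
      have h0 : (t k)^d ≠ 0 := (pow_pos (htpos k) d).ne'
      have h42 : (4:ℝ)^k * (1/2:ℝ)^k = (2:ℝ)^k := by
        rw [← mul_pow]; norm_num
      have h7 : ((4:ℝ)^k * (t k)^d) * (B k * C) = (2:ℝ)^k * C := by
        simp only [hB]
        calc ((4:ℝ)^k * (t k)^d) * ((1/2:ℝ)^k * ((t k)^d)⁻¹ * C)
            = ((4:ℝ)^k * (1/2:ℝ)^k) * ((t k)^d * ((t k)^d)⁻¹) * C := by ring
          _ = (2:ℝ)^k * C := by rw [h42, mul_inv_cancel₀ h0, mul_one]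
      linarith
    obtain ⟨k, hk⟩ := pow_unbounded_of_one_lt (T / C) (one_lt_two (α := ℝ))
    have hk2 : T < (2:ℝ)^k * C := (div_lt_iff₀ hCpos).1 hk
    have := hTk k
    linarith
end

section
/- Let d ∈ ℕ and let (c_n) be a sequence of positive reals tending to infinity. Then there exists a sequence (b_n) of positive reals with b_n/c_n → 1 such that for every measurable f : ℝ^d → ℝ satisfying λ({x : |f(x)| ≥ ε}) < ∞ for all ε > 0, one has f(b_n • x) → 0 for λ-almost every x ∈ ℝ^d. -/
open MeasureTheory Filter Topology
open scoped ENNReal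

noncomputable def netp (m j : ℕ) : ℝ := 2 ^ m * (1 + (j : ℝ) / m)

noncomputable def netm (t : ℝ) : ℕ := max 1 ⌊Real.logb 2 t⌋₊

noncomputable def netj (t : ℝ) : ℕ := min (netm t) ⌊(t / 2 ^ netm t - 1) * netm t⌋₊

noncomputable def netg (t : ℝ) : ℝ := netp (netm t) (netj t)

lemma netp_pos (m j : ℕ) : 0 < netp m j := by
  have : (0:ℝ) ≤ (j : ℝ) / m := by positivity
  unfold netp; positivity

lemma le_netp (m j : ℕ) : (2:ℝ) ^ m ≤ netp m j := by
  have : (0:ℝ) ≤ (j : ℝ) / m := by positivity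
  unfold netp; nlinarith [pow_pos (by norm_num : (0:ℝ) < 2) m]

lemma netj_le (t : ℝ) : netj t ≤ netm t := min_le_left _ _

lemma one_le_netm (t : ℝ) : 1 ≤ netm t := le_max_left _ _

lemma netm_spec {t : ℝ} (ht : 2 ≤ t) :
    (2:ℝ) ^ netm t ≤ t ∧ t < 2 ^ (netm t + 1) := by
  have ht0 : (0:ℝ) < t := by linarith
  have hlb : (1:ℝ) ≤ Real.logb 2 t := by
    have h := Real.logb_le_logb_of_le (b := 2) (by norm_num) (by norm_num : (0:ℝ) < 2) ht
    simpa using h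
  have hfl : 1 ≤ ⌊Real.logb 2 t⌋₊ := Nat.le_floor (by exact_mod_cast hlb)
  have hm : netm t = ⌊Real.logb 2 t⌋₊ := max_eq_right hfl
  have h1 : ((netm t : ℝ)) ≤ Real.logb 2 t := by
    rw [hm]; exact Nat.floor_le (by linarith)
  have h2 : Real.logb 2 t < (netm t : ℝ) + 1 := by
    rw [hm]; exact Nat.lt_floor_add_one _
  have key : ∀ y : ℝ, (2:ℝ) ^ y = Real.rpow 2 y := fun _ => rfl
  constructor
  · have : ((2:ℝ) ^ ((netm t : ℝ)) : ℝ) ≤ (2:ℝ) ^ Real.logb 2 t :=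
      (Real.rpow_le_rpow_left_iff (by norm_num)).2 h1
    rw [Real.rpow_logb (by norm_num) (by norm_num) ht0, Real.rpow_natCast] at this
    exact this
  · have : ((2:ℝ) ^ Real.logb 2 t : ℝ) < (2:ℝ) ^ (((netm t : ℕ) + 1 : ℕ) : ℝ) := by
      apply (Real.rpow_lt_rpow_left_iff (by norm_num)).2
      push_cast; exact h2
    rw [Real.rpow_logb (by norm_num) (by norm_num) ht0, Real.rpow_natCast] at this
    exact this

lemma netg_bounds {t : ℝ} (ht : 2 ≤ t) :
    t - t / netm t ≤ netg t ∧ netg t ≤ t := by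
  obtain ⟨hP, hP2⟩ := netm_spec ht
  set m := netm t with hmdef
  set P : ℝ := 2 ^ m with hPdef
  have hP0 : (0:ℝ) < P := by positivity
  have hM : (1:ℝ) ≤ (m:ℝ) := by exact_mod_cast one_le_netm t
  have hM0 : (0:ℝ) < (m:ℝ) := by linarith
  have hMne : (m:ℝ) ≠ 0 := ne_of_gt hM0
  have hPne : P ≠ 0 := ne_of_gt hP0
  have harg0 : 0 ≤ (t / P - 1) * m := by
    have : (1:ℝ) ≤ t / P := (one_le_div hP0).2 hP
    nlinarith
  have hjle : (netj t : ℝ) ≤ (t / P - 1) * m := by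
    have h1 : (netj t : ℝ) ≤ (⌊(t / P - 1) * m⌋₊ : ℝ) := by
      exact_mod_cast min_le_right (netm t) _
    exact h1.trans (Nat.floor_le harg0)
  have hfloorlt : ⌊(t / P - 1) * m⌋₊ < m := by
    apply (Nat.floor_lt harg0).2
    have h2 : t / P < 2 := by
      rw [div_lt_iff₀ hP0]
      calc t < 2 ^ (m + 1) := hP2
        _ = 2 * P := by rw [hPdef]; ring
    nlinarith
  have hjeq : netj t = ⌊(t / P - 1) * m⌋₊ := min_eq_right (le_of_lt hfloorlt)
  have hjgt : (t / P - 1) * m < (netj t : ℝ) + 1 := by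
    rw [hjeq]; exact Nat.lt_floor_add_one _
  have hg : netg t = P * (1 + (netj t : ℝ) / m) := rfl
  set J : ℝ := (netj t : ℝ) with hJdef
  have hA : t * m - m * P < J * P + P := by
    have := mul_lt_mul_of_pos_right hjgt hP0
    have e : (t / P - 1) * m * P = t * m - m * P := by field_simp
    rw [e] at this; nlinarith
  have hB : J * P ≤ t * m - m * P := by
    have := mul_le_mul_of_nonneg_right hjle hP0.le
    have e : (t / P - 1) * m * P = t * m - m * P := by field_simp
    rw [e] at this; exact this
  constructor
  · rw [hg, ← mul_le_mul_iff_of_pos_right hM0]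
    have e1 : (t - t / m) * m = t * m - t := by field_simp
    have e2 : P * (1 + J / m) * m = P * m + P * J := by field_simp
    rw [e1, e2]; nlinarith
  · rw [hg, ← mul_le_mul_iff_of_pos_right hM0]
    have e2 : P * (1 + J / m) * m = P * m + P * J := by field_simp
    rw [e2]; nlinarith


lemma aux_ae (d : ℕ) (hd : 0 < d) (mm jj : ℕ → ℕ) (hjm : ∀ n, jj n ≤ mm n)
    (hmm : Tendsto mm atTop atTop) (A : Set (EuclideanSpace ℝ (Fin d)))
    (hA : volume A < ⊤) :
    ∀ᵐ x : EuclideanSpace ℝ (Fin d), ∀ᶠ n in atTop, netp (mm n) (jj n) • x ∉ A := by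
  set V : ℕ → Set (EuclideanSpace ℝ (Fin d)) :=
    fun m => ⋃ j : Fin (m+1), (netp m j • ·) ⁻¹' A with hVdef
  set w : ℕ → ℝ≥0∞ := fun m => ENNReal.ofReal (((m:ℝ)+1) * (1/2:ℝ)^m) with hwdef
  have hVm : ∀ m, volume (V m) ≤ w m * volume A := by
    intro m
    have hterm : ∀ j : Fin (m+1),
        volume ((netp m (j:ℕ) • ·) ⁻¹' A) ≤ ENNReal.ofReal ((1/2:ℝ)^m) * volume A := by
      intro j
      have hp0 : (0:ℝ) < netp m j := netp_pos m j
      rw [MeasureTheory.Measure.addHaar_preimage_smul volume (ne_of_gt hp0)]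
      gcongr
      rw [finrank_euclideanSpace_fin]
      have h1 : (1:ℝ) ≤ 2 ^ m := by
        calc (1:ℝ) = 1^m := (one_pow m).symm
          _ ≤ 2^m := pow_le_pow_left₀ (by norm_num) (by norm_num) m
      have h2 : (2:ℝ)^m ≤ netp m j ^ d := by
        calc (2:ℝ)^m ≤ netp m j := le_netp m j
          _ = netp m j ^ 1 := (pow_one _).symm
          _ ≤ netp m j ^ d := pow_le_pow_right₀ (by linarith [le_netp m j]) hd
      have hpd : (0:ℝ) < netp m j ^ d := by positivity
      rw [abs_of_pos (by positivity)]
      rw [inv_le_comm₀ hpd (by positivity)]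
      calc ((1/2:ℝ)^m)⁻¹ = 2^m := by
            rw [one_div, inv_pow, inv_inv]
        _ ≤ netp m j ^ d := h2
    calc volume (V m) ≤ ∑ j : Fin (m+1), volume ((netp m (j:ℕ) • ·) ⁻¹' A) :=
          measure_iUnion_fintype_le _ _
      _ ≤ ∑ _j : Fin (m+1), ENNReal.ofReal ((1/2:ℝ)^m) * volume A :=
          Finset.sum_le_sum fun j _ => hterm j
      _ = (m+1 : ℕ) * (ENNReal.ofReal ((1/2:ℝ)^m) * volume A) := by
          rw [Finset.sum_const, Finset.card_univ, Fintype.card_fin, nsmul_eq_mul]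
      _ = w m * volume A := by
          show ((m+1:ℕ) : ℝ≥0∞) * (ENNReal.ofReal ((1/2:ℝ)^m) * volume A)
            = ENNReal.ofReal (((m:ℝ)+1) * (1/2:ℝ)^m) * volume A
          rw [ENNReal.ofReal_mul (by positivity : (0:ℝ) ≤ (m:ℝ)+1), ← mul_assoc,
            ← ENNReal.ofReal_natCast (m+1)]
          push_cast
          ring_nf
  have hsum : Summable (fun m : ℕ => ((m:ℝ)+1) * (1/2:ℝ)^m) := by
    have h1 := summable_pow_mul_geometric_of_norm_lt_one (R := ℝ) 1
      (r := (1/2:ℝ)) (by rw [Real.norm_eq_abs, abs_of_nonneg (by norm_num : (0:ℝ) ≤ 1/2)]; norm_num)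
    have h2 : Summable (fun n : ℕ => ((1:ℝ)/2)^n) :=
      summable_geometric_of_lt_one (by norm_num) (by norm_num)
    exact (h1.add h2).congr fun n => by push_cast; ring
  have hw : ∑' m, w m ≠ ⊤ := by
    rw [hwdef, ← ENNReal.ofReal_tsum_of_nonneg (fun n => by positivity) hsum]
    exact ENNReal.ofReal_ne_top
  set K := ⋂ M : ℕ, ⋃ m : ℕ, V (M + m) with hKdef
  have hKvol : volume K = 0 := by
    have hU : ∀ M, volume (⋃ m, V (M+m)) ≤ (∑' m, w (m + M)) * volume A := by
      intro M
      calc volume (⋃ m, V (M+m)) ≤ ∑' m, volume (V (M+m)) := measure_iUnion_le _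
        _ ≤ ∑' m, w (M+m) * volume A := ENNReal.tsum_le_tsum fun m => hVm _
        _ = (∑' m, w (M+m)) * volume A := ENNReal.tsum_mul_right
        _ = (∑' m, w (m+M)) * volume A := by
            congr 1; exact tsum_congr fun m => by rw [add_comm]
    have htail : Tendsto (fun M => (∑' m, w (m + M)) * volume A) atTop (𝓝 0) := by
      have h0 := ENNReal.tendsto_sum_nat_add w hw
      have h1 := ENNReal.Tendsto.mul_const h0 (Or.inr hA.ne)
      simpa using h1
    have hle : ∀ M, volume K ≤ (∑' m, w (m+M)) * volume A := fun M =>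
      (measure_mono (Set.iInter_subset _ M)).trans (hU M)
    exact le_antisymm (ge_of_tendsto' htail hle) (zero_le ..)
  have hae : ∀ᵐ x : EuclideanSpace ℝ (Fin d), x ∉ K := by
    rw [MeasureTheory.ae_iff]
    simp only [not_not, Set.setOf_mem_eq]
    exact hKvol
  filter_upwards [hae] with x hx
  rw [hKdef] at hx
  simp only [Set.mem_iInter, not_forall] at hx
  obtain ⟨M, hM⟩ := hx
  filter_upwards [hmm.eventually_ge_atTop M] with n hn
  intro hcontra
  apply hM
  refine Set.mem_iUnion.2 ⟨mm n - M, ?_⟩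
  have hMn : M + (mm n - M) = mm n := by omega
  rw [hMn]
  exact Set.mem_iUnion.2 ⟨⟨jj n, by have := hjm n; omega⟩, hcontra⟩

theorem stmt6 (d : ℕ) (hd : 0 < d) (c : ℕ → ℝ) (hc : ∀ n, 0 < c n)
    (hlim : Tendsto c atTop atTop) :
    ∃ b : ℕ → ℝ, (∀ n, 0 < b n) ∧
      Tendsto (fun n => b n / c n) atTop (nhds 1) ∧
      ∀ f : EuclideanSpace ℝ (Fin d) → ℝ, Measurable f →
        (∀ ε : ℝ, 0 < ε → volume {x : EuclideanSpace ℝ (Fin d) | ε ≤ |f x|} < ⊤) →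
        ∀ᵐ x : EuclideanSpace ℝ (Fin d),
          Tendsto (fun n : ℕ => f (b n • x)) atTop (nhds 0) := by
  have hmc : Tendsto (fun n => netm (c n)) atTop atTop := by
    apply tendsto_atTop_mono (fun n => le_max_right 1 ⌊Real.logb 2 (c n)⌋₊)
    exact tendsto_nat_floor_atTop.comp ((Real.tendsto_logb_atTop (by norm_num)).comp hlim)
  refine ⟨fun n => netg (c n), fun n => netp_pos _ _, ?_, ?_⟩
  · have hlow : Tendsto (fun n => 1 - 1/((netm (c n) : ℝ))) atTop (𝓝 1) := by
      have h0 : Tendsto (fun n => 1/((netm (c n):ℝ))) atTop (𝓝 0) :=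
        tendsto_one_div_atTop_nhds_zero_nat.comp hmc
      simpa using tendsto_const_nhds.sub h0
    apply tendsto_of_tendsto_of_tendsto_of_le_of_le' hlow tendsto_const_nhds
    · filter_upwards [hlim.eventually_ge_atTop 2] with n hn
      have ht0 : (0:ℝ) < c n := hc n
      have hM : (1:ℝ) ≤ (netm (c n) : ℝ) := by exact_mod_cast one_le_netm (c n)
      rw [le_div_iff₀ ht0]
      have e : (1 - 1/((netm (c n)):ℝ)) * c n = c n - c n / netm (c n) := by
        field_simp
      rw [e]
      exact (netg_bounds hn).1
    · filter_upwards [hlim.eventually_ge_atTop 2] with n hn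
      exact (div_le_one (hc n)).2 (netg_bounds hn).2
  · intro f hf hfin
    have key : ∀ k : ℕ, ∀ᵐ x : EuclideanSpace ℝ (Fin d),
        ∀ᶠ n in atTop, netg (c n) • x ∉ {y : EuclideanSpace ℝ (Fin d) | 1/((k:ℝ)+1) ≤ |f y|} := by
      intro k
      exact aux_ae d hd (fun n => netm (c n)) (fun n => netj (c n)) (fun n => netj_le _)
        hmc _ (hfin (1/((k:ℝ)+1)) (by positivity))
    have key' := ae_all_iff.2 key
    filter_upwards [key'] with x hx
    rw [NormedAddCommGroup.tendsto_nhds_zero]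
    intro ε hε
    obtain ⟨k, hk⟩ := exists_nat_one_div_lt hε
    filter_upwards [hx k] with n hn
    simp only [Set.mem_setOf_eq, not_le] at hn
    rw [Real.norm_eq_abs]
    calc |f (netg (c n) • x)| < 1/((k:ℝ)+1) := hn
      _ < ε := hk
end

section
/- Let d ∈ ℕ and let (a_n) be a sequence of nonnegative reals tending to infinity. Then there exists a continuous, nonnegative, Lebesgue integrable function f : ℝ^d → ℝ such that limsup_{n→∞} a_n · f(n^{1/d} • x) = ∞ for every x ∈ ℝ^d. -/
open MeasureTheory Filter

theorem stmt7 (d : ℕ) (hd : 0 < d) (a : ℕ → ℝ) (ha : ∀ n, 0 ≤ a n)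
    (hlim : Tendsto a atTop atTop) :
    ∃ f : EuclideanSpace ℝ (Fin d) → ℝ, Continuous f ∧ (∀ x, 0 ≤ f x) ∧
      Integrable f ∧
      ∀ x : EuclideanSpace ℝ (Fin d), ∀ C : ℝ,
        ∃ᶠ n : ℕ in atTop, C < a n * f (((n : ℝ) ^ ((1 : ℝ) / d)) • x) := by
  classical
  have hdR : (0:ℝ) < d := by exact_mod_cast hd
  -- choose thresholds
  have hch : ∀ k : ℕ, ∃ N : ℕ, ∀ n ≥ N, (k : ℝ) * 2 ^ k ≤ a n := fun k =>
    eventually_atTop.mp (hlim.eventually_ge_atTop ((k : ℝ) * 2 ^ k))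
  choose N hN using hch
  set t : ℕ → ℝ := fun k => ((k : ℝ) + 1) * ((N k : ℝ) + (k : ℝ) + 1) with htdef
  have ht1 : ∀ k, 1 ≤ t k := by
    intro k
    have hk0 : (0:ℝ) ≤ (k:ℝ) := Nat.cast_nonneg k
    have hN0 : (0:ℝ) ≤ (N k:ℝ) := Nat.cast_nonneg (N k)
    have h1 : (1:ℝ) ≤ (k:ℝ) + 1 := by linarith
    have h2 : (1:ℝ) ≤ (N k : ℝ) + (k:ℝ) + 1 := by linarith
    calc (1:ℝ) = 1 * 1 := by ring
      _ ≤ ((k:ℝ)+1) * ((N k : ℝ) + (k:ℝ) + 1) := by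
          apply mul_le_mul h1 h2 zero_le_one (by positivity)
  -- the bump functions
  set g : ℕ → ℝ → ℝ := fun k s =>
    max 0 (min 1 (min (s - (t k - 1)) (t k + k + 1 - s))) with hgdef
  have hg0 : ∀ k s, 0 ≤ g k s := fun k s => le_max_left _ _
  have hg1 : ∀ k s, g k s ≤ 1 := fun k s => max_le zero_le_one (min_le_left _ _)
  have hgone : ∀ k s, t k ≤ s → s ≤ t k + k → g k s = 1 := by
    intro k s h1 h2
    have ha1 : (1:ℝ) ≤ s - (t k - 1) := by linarith
    have ha2 : (1:ℝ) ≤ t k + k + 1 - s := by linarith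
    simp only [hgdef]
    rw [min_eq_left (le_min ha1 ha2), max_eq_right zero_le_one]
  have hgzero : ∀ k s, s ≤ t k - 1 ∨ t k + k + 1 ≤ s → g k s = 0 := by
    intro k s h
    have hle : min 1 (min (s - (t k - 1)) (t k + k + 1 - s)) ≤ 0 := by
      rcases h with h | h
      · exact le_trans (min_le_right _ _) (le_trans (min_le_left _ _) (by linarith))
      · exact le_trans (min_le_right _ _) (le_trans (min_le_right _ _) (by linarith))
    simp only [hgdef]
    exact max_eq_left hle
  have hgcont : ∀ k, Continuous (g k) := by
    intro k
    exact continuous_const.max (continuous_const.min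
      ((continuous_id.sub continuous_const).min (continuous_const.sub continuous_id)))
  -- the summands
  set F : ℕ → EuclideanSpace ℝ (Fin d) → ℝ :=
    fun k x => ((1:ℝ)/2) ^ k * g k (‖x‖ ^ d) with hFdef
  have hnc : Continuous (fun x : EuclideanSpace ℝ (Fin d) => ‖x‖ ^ d) :=
    continuous_norm.pow d
  have hFcont : ∀ k, Continuous (F k) := fun k =>
    continuous_const.mul ((hgcont k).comp hnc)
  have hFnn : ∀ k x, 0 ≤ F k x := fun k x => by
    apply mul_nonneg (by positivity) (hg0 _ _)
  have hFb : ∀ k x, ‖F k x‖ ≤ ((1:ℝ)/2) ^ k := by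
    intro k x
    rw [Real.norm_eq_abs, abs_of_nonneg (hFnn k x)]
    calc ((1:ℝ)/2) ^ k * g k (‖x‖ ^ d) ≤ ((1:ℝ)/2) ^ k * 1 := by
          apply mul_le_mul_of_nonneg_left (hg1 _ _) (by positivity)
      _ = ((1:ℝ)/2) ^ k := mul_one _
  have hsum_geom : Summable (fun k : ℕ => ((1:ℝ)/2) ^ k) :=
    summable_geometric_of_lt_one (by norm_num) (by norm_num)
  have hsx : ∀ x, Summable fun k => F k x := fun x =>
    Summable.of_norm_bounded hsum_geom (fun k => hFb k x)
  -- the function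
  set b0 : EuclideanSpace ℝ (Fin d) → ℝ := fun x => max 0 (1 - ‖x‖) with hb0def
  set f : EuclideanSpace ℝ (Fin d) → ℝ := fun x => b0 x + ∑' k, F k x with hfdef
  have hb0cont : Continuous b0 := continuous_const.max
    (continuous_const.sub continuous_norm)
  have hsumcont : Continuous (fun x => ∑' k, F k x) :=
    continuous_tsum hFcont hsum_geom (fun k x => hFb k x)
  have hfcont : Continuous f := hb0cont.add hsumcont
  have hfnn : ∀ x, 0 ≤ f x := fun x =>
    add_nonneg (le_max_left _ _) (tsum_nonneg (fun k => hFnn k x))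
  have hfge : ∀ x k, F k x ≤ f x := by
    intro x k
    have h1 : F k x ≤ ∑' j, F j x := Summable.le_tsum (hsx x) k (fun j _ => hFnn j x)
    exact le_trans h1 (le_add_of_nonneg_left (le_max_left _ _))
  -- rpow facts
  have hrpow : ∀ c : ℝ, 0 ≤ c → (c ^ ((1:ℝ)/d)) ^ d = c := by
    intro c hc
    rw [← Real.rpow_natCast (c ^ ((1:ℝ)/(d:ℝ))) d, ← Real.rpow_mul hc]
    rw [one_div, inv_mul_cancel₀ hdR.ne', Real.rpow_one]
  -- integrability
  have hb0int : Integrable b0 := by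
    apply hb0cont.integrable_of_hasCompactSupport
    apply HasCompactSupport.intro (isCompact_closedBall (0 : EuclideanSpace ℝ (Fin d)) 1)
    intro x hx
    simp only [Metric.mem_closedBall, dist_zero_right, not_le] at hx
    simp only [hb0def]
    exact max_eq_left (by linarith)
  have hnt : Nontrivial (EuclideanSpace ℝ (Fin d)) :=
    Module.nontrivial_of_finrank_pos (R := ℝ)
      (by rw [finrank_euclideanSpace_fin]; exact hd)
  set S : ℕ → Set (EuclideanSpace ℝ (Fin d)) := fun k =>
    (fun x : EuclideanSpace ℝ (Fin d) => ‖x‖ ^ d) ⁻¹' Set.Icc (t k - 1) (t k + k + 1)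
    with hSdef
  have hSmeas : ∀ k, MeasurableSet (S k) := fun k =>
    hnc.measurable measurableSet_Icc
  have hvol : ∀ k, volume (S k) ≤
      ENNReal.ofReal ((k:ℝ) + 2) * volume (Metric.ball (0 : EuclideanSpace ℝ (Fin d)) 1) := by
    intro k
    have hk0 : (0:ℝ) ≤ (k:ℝ) := Nat.cast_nonneg k
    have ht0 : (0:ℝ) ≤ t k - 1 := by linarith [ht1 k]
    have ht2 : (0:ℝ) ≤ t k + k + 1 := by linarith [ht1 k]
    set R₁ : ℝ := (t k - 1) ^ ((1:ℝ)/d) with hR₁def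
    set R₂ : ℝ := (t k + k + 1) ^ ((1:ℝ)/d) with hR₂def
    have hR₁0 : 0 ≤ R₁ := Real.rpow_nonneg ht0 _
    have hR₂0 : 0 ≤ R₂ := Real.rpow_nonneg ht2 _
    have hR₁d : R₁ ^ d = t k - 1 := hrpow _ ht0
    have hR₂d : R₂ ^ d = t k + k + 1 := hrpow _ ht2
    have hR12 : R₁ ≤ R₂ := Real.rpow_le_rpow ht0 (by linarith) (by positivity)
    have hsub : S k ⊆ Metric.closedBall (0 : EuclideanSpace ℝ (Fin d)) R₂ \
        Metric.ball (0 : EuclideanSpace ℝ (Fin d)) R₁ := by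
      intro x hx
      simp only [hSdef, Set.mem_preimage, Set.mem_Icc] at hx
      constructor
      · simp only [Metric.mem_closedBall, dist_zero_right]
        by_contra h
        push_neg at h
        have h2 : R₂ ^ d < ‖x‖ ^ d := pow_lt_pow_left₀ h hR₂0 hd.ne'
        rw [hR₂d] at h2
        linarith [hx.2]
      · simp only [Metric.mem_ball, dist_zero_right, not_lt]
        by_contra h
        push_neg at h
        have h2 : ‖x‖ ^ d < R₁ ^ d := pow_lt_pow_left₀ h (norm_nonneg x) hd.ne'
        rw [hR₁d] at h2
        linarith [hx.1]
    have hballsub : Metric.ball (0 : EuclideanSpace ℝ (Fin d)) R₁ ⊆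
        Metric.closedBall (0 : EuclideanSpace ℝ (Fin d)) R₂ :=
      Metric.ball_subset_closedBall.trans (Metric.closedBall_subset_closedBall hR12)
    have hfr : Module.finrank ℝ (EuclideanSpace ℝ (Fin d)) = d := finrank_euclideanSpace_fin
    calc volume (S k)
        ≤ volume (Metric.closedBall (0 : EuclideanSpace ℝ (Fin d)) R₂ \
            Metric.ball (0 : EuclideanSpace ℝ (Fin d)) R₁) := measure_mono hsub
      _ = volume (Metric.closedBall (0 : EuclideanSpace ℝ (Fin d)) R₂) -
            volume (Metric.ball (0 : EuclideanSpace ℝ (Fin d)) R₁) :=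
          measure_diff hballsub measurableSet_ball.nullMeasurableSet measure_ball_lt_top.ne
      _ = ENNReal.ofReal (t k + k + 1) *
            volume (Metric.ball (0 : EuclideanSpace ℝ (Fin d)) 1) -
          ENNReal.ofReal (t k - 1) *
            volume (Metric.ball (0 : EuclideanSpace ℝ (Fin d)) 1) := by
          rw [Measure.addHaar_closedBall _ _ hR₂0, Measure.addHaar_ball _ _ hR₁0, hfr,
            hR₁d, hR₂d]
      _ = (ENNReal.ofReal (t k + k + 1) - ENNReal.ofReal (t k - 1)) *
            volume (Metric.ball (0 : EuclideanSpace ℝ (Fin d)) 1) := by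
          rw [ENNReal.sub_mul]
          intro _ _
          exact measure_ball_lt_top.ne
      _ = ENNReal.ofReal ((t k + k + 1) - (t k - 1)) *
            volume (Metric.ball (0 : EuclideanSpace ℝ (Fin d)) 1) := by
          rw [ENNReal.ofReal_sub _ ht0]
      _ = ENNReal.ofReal ((k:ℝ) + 2) *
            volume (Metric.ball (0 : EuclideanSpace ℝ (Fin d)) 1) := by
          rw [show (t k + k + 1) - (t k - 1) = (k:ℝ) + 2 by ring]
  have husum : Summable (fun k : ℕ => ((1:ℝ)/2) ^ k * ((k:ℝ) + 2)) := by
    have h1 : Summable (fun k : ℕ => (k:ℝ) * ((1:ℝ)/2) ^ k) := by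
      simpa using summable_pow_mul_geometric_of_norm_lt_one 1 (r := (1/2:ℝ)) (by norm_num)
    have h2 : Summable (fun k : ℕ => (2:ℝ) * ((1:ℝ)/2) ^ k) := hsum_geom.mul_left 2
    exact (h1.add h2).congr (fun k => by ring)
  have hsumint : Integrable (fun x => ∑' k, F k x) := by
    refine ⟨hsumcont.aestronglyMeasurable, ?_⟩
    rw [hasFiniteIntegral_iff_norm]
    have hpt : ∀ x : EuclideanSpace ℝ (Fin d),
        ENNReal.ofReal ‖∑' k, F k x‖ = ∑' k, ENNReal.ofReal (F k x) := by
      intro x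
      rw [Real.norm_eq_abs, abs_of_nonneg (tsum_nonneg (fun k => hFnn k x)),
        ENNReal.ofReal_tsum_of_nonneg (fun k => hFnn k x) (hsx x)]
    calc ∫⁻ x, ENNReal.ofReal ‖∑' k, F k x‖
        = ∫⁻ x, ∑' k, ENNReal.ofReal (F k x) := by
          exact lintegral_congr hpt
      _ = ∑' k, ∫⁻ x, ENNReal.ofReal (F k x) :=
          lintegral_tsum (fun k => ((hFcont k).measurable.ennreal_ofReal).aemeasurable)
      _ ≤ ∑' k : ℕ, ENNReal.ofReal (((1:ℝ)/2) ^ k * ((k:ℝ) + 2)) *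
            volume (Metric.ball (0 : EuclideanSpace ℝ (Fin d)) 1) := by
          apply ENNReal.tsum_le_tsum
          intro k
          have hb : ∀ x, ENNReal.ofReal (F k x) ≤
              (S k).indicator (fun _ => ENNReal.ofReal (((1:ℝ)/2) ^ k)) x := by
            intro x
            by_cases hxS : x ∈ S k
            · rw [Set.indicator_of_mem hxS]
              apply ENNReal.ofReal_le_ofReal
              calc F k x ≤ ‖F k x‖ := le_abs_self _
                _ ≤ ((1:ℝ)/2) ^ k := hFb k x
            · rw [Set.indicator_of_notMem hxS]
              have h0 : g k (‖x‖ ^ d) = 0 := by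
                apply hgzero
                simp only [hSdef, Set.mem_preimage, Set.mem_Icc, not_and_or, not_le] at hxS
                rcases hxS with h | h
                · exact Or.inl h.le
                · exact Or.inr h.le
              simp [hFdef, h0]
          calc ∫⁻ x, ENNReal.ofReal (F k x)
              ≤ ∫⁻ x, (S k).indicator (fun _ => ENNReal.ofReal (((1:ℝ)/2) ^ k)) x :=
                lintegral_mono hb
            _ = ENNReal.ofReal (((1:ℝ)/2) ^ k) * volume (S k) := by
                rw [lintegral_indicator (hSmeas k) _, setLIntegral_const]
            _ ≤ ENNReal.ofReal (((1:ℝ)/2) ^ k) * (ENNReal.ofReal ((k:ℝ) + 2) *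
                  volume (Metric.ball (0 : EuclideanSpace ℝ (Fin d)) 1)) :=
                mul_le_mul_right (hvol k) _
            _ = ENNReal.ofReal (((1:ℝ)/2) ^ k * ((k:ℝ) + 2)) *
                  volume (Metric.ball (0 : EuclideanSpace ℝ (Fin d)) 1) := by
                rw [← mul_assoc, ← ENNReal.ofReal_mul (by positivity)]
      _ = ENNReal.ofReal (∑' k : ℕ, ((1:ℝ)/2) ^ k * ((k:ℝ) + 2)) *
            volume (Metric.ball (0 : EuclideanSpace ℝ (Fin d)) 1) := by
          rw [ENNReal.tsum_mul_right,
            ENNReal.ofReal_tsum_of_nonneg (fun k => by positivity) husum]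
      _ < ⊤ := ENNReal.mul_lt_top ENNReal.ofReal_lt_top measure_ball_lt_top
  have hfint : Integrable f := hb0int.add hsumint
  refine ⟨f, hfcont, hfnn, hfint, ?_⟩
  intro x C
  rcases eq_or_ne x 0 with rfl | hx
  · -- x = 0
    have hf0 : 1 ≤ f 0 := by
      have : (1:ℝ) ≤ b0 0 := by simp [hb0def]
      have h2 : 0 ≤ ∑' k, F k 0 := tsum_nonneg (fun k => hFnn k 0)
      simp only [hfdef]; linarith
    refine frequently_atTop.2 fun m => ?_
    obtain ⟨n, hn⟩ := ((hlim.eventually_gt_atTop C).and (eventually_ge_atTop m)).exists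
    refine ⟨n, hn.2, ?_⟩
    rw [smul_zero]
    calc C < a n := hn.1
      _ = a n * 1 := (mul_one _).symm
      _ ≤ a n * f 0 := mul_le_mul_of_nonneg_left hf0 (ha n)
  · -- x ≠ 0
    have hspos : 0 < ‖x‖ ^ d := pow_pos (norm_pos_iff.2 hx) d
    set s : ℝ := ‖x‖ ^ d with hsdef
    refine frequently_atTop.2 fun m => ?_
    set k : ℕ := m + ⌈s⌉₊ + ⌈C⌉₊ + 1 with hkdef
    have hk1 : 1 ≤ k := by omega
    have hkR : (1:ℝ) ≤ (k:ℝ) := by exact_mod_cast hk1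
    have hsk : s ≤ (k:ℝ) := by
      have h1 : s ≤ (⌈s⌉₊ : ℝ) := Nat.le_ceil s
      have h2 : (⌈s⌉₊ : ℝ) ≤ (k:ℝ) := by exact_mod_cast (by omega : ⌈s⌉₊ ≤ k)
      linarith
    have hCk : C < (k:ℝ) := by
      have h1 : C ≤ (⌈C⌉₊ : ℝ) := Nat.le_ceil C
      have h2 : ((⌈C⌉₊ : ℕ) : ℝ) + 1 ≤ (k:ℝ) := by exact_mod_cast (by omega : ⌈C⌉₊ + 1 ≤ k)
      linarith
    set n : ℕ := ⌈t k / s⌉₊ with hndef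
    have htk0 : 0 < t k := lt_of_lt_of_le one_pos (ht1 k)
    have hts : t k ≤ (n:ℝ) * s := by
      calc t k = (t k / s) * s := (div_mul_cancel₀ _ hspos.ne').symm
        _ ≤ (n:ℝ) * s := mul_le_mul_of_nonneg_right (Nat.le_ceil _) hspos.le
    have hns : (n:ℝ) * s ≤ t k + k := by
      have h1 : (n:ℝ) < t k / s + 1 :=
        Nat.ceil_lt_add_one (by positivity)
      have h2 : (n:ℝ) * s ≤ (t k / s + 1) * s :=
        mul_le_mul_of_nonneg_right h1.le hspos.le
      have h3 : (t k / s + 1) * s = t k + s := by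
        field_simp
      linarith
    -- n is large
    have hdiv : (N k : ℝ) + k + 1 ≤ t k / s := by
      have h1 : (k:ℝ) * ((N k : ℝ) + k + 1) ≤ t k := by
        simp only [htdef]
        apply mul_le_mul_of_nonneg_right (by linarith) (by positivity)
      have h2 : (N k : ℝ) + k + 1 ≤ t k / k := by
        rw [le_div_iff₀ (by linarith : (0:ℝ) < (k:ℝ))]
        linarith [h1]
      have h3 : t k / k ≤ t k / s :=
        div_le_div_of_nonneg_left htk0.le hspos hsk
      linarith
    have hnlarge : (N k : ℝ) + k + 1 ≤ (n:ℝ) := le_trans hdiv (Nat.le_ceil _)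
    have hnN : N k ≤ n := by
      have : (N k : ℝ) ≤ (n:ℝ) := by linarith [hnlarge, hkR]
      exact_mod_cast this
    have hnm : m ≤ n := by
      have h1 : (m:ℝ) ≤ (k:ℝ) := by exact_mod_cast (by omega : m ≤ k)
      have : (m:ℝ) ≤ (n:ℝ) := by linarith [hnlarge]
      exact_mod_cast this
    refine ⟨n, hnm, ?_⟩
    -- compute the norm
    set y : EuclideanSpace ℝ (Fin d) := ((n : ℝ) ^ ((1 : ℝ) / d)) • x with hydef
    have hyn : ‖y‖ ^ d = (n:ℝ) * s := by
      have h1 : ‖y‖ = ((n : ℝ) ^ ((1 : ℝ) / d)) * ‖x‖ := by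
        simp only [hydef, norm_smul, Real.norm_eq_abs,
          abs_of_nonneg (Real.rpow_nonneg (Nat.cast_nonneg n) _)]
      rw [h1, mul_pow, hrpow (n:ℝ) (Nat.cast_nonneg n)]
    have hgy : g k (‖y‖ ^ d) = 1 := by
      rw [hyn]; exact hgone k _ hts hns
    have hFy : F k y = ((1:ℝ)/2) ^ k := by
      simp only [hFdef, hgy, mul_one]
    have hfy : ((1:ℝ)/2) ^ k ≤ f y := by rw [← hFy]; exact hfge y k
    have han : (k:ℝ) * 2 ^ k ≤ a n := hN k n hnN
    calc C < (k:ℝ) := hCk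
      _ = ((k:ℝ) * 2 ^ k) * ((1:ℝ)/2) ^ k := by
          rw [mul_assoc, ← mul_pow]; norm_num
      _ ≤ a n * f y := by
          apply mul_le_mul han hfy (by positivity) (ha n)
end

section
/- Let (a_n) be a sequence of nonnegative reals tending to infinity. Then there exists a continuous, nonnegative, integrable function g : [0,∞) → ℝ such that limsup_{n→∞} a_n · g(n·x) = ∞ for every x ∈ [0,∞). -/
open MeasureTheory Filter

noncomputable def trap (l r t : ℝ) : ℝ := max 0 (min (min (t - l + 1) (r + 1 - t)) 1)

lemma trap_continuous (l r : ℝ) : Continuous (trap l r) := by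
  unfold trap; fun_prop

lemma trap_nonneg (l r t : ℝ) : 0 ≤ trap l r t := le_max_left _ _

lemma trap_le_one (l r t : ℝ) : trap l r t ≤ 1 :=
  max_le zero_le_one (min_le_right _ _)

lemma trap_eq_one {l r t : ℝ} (h1 : l ≤ t) (h2 : t ≤ r) : trap l r t = 1 := by
  have ha : (1:ℝ) ≤ t - l + 1 := by linarith
  have hb : (1:ℝ) ≤ r + 1 - t := by linarith
  unfold trap
  rw [min_eq_right (le_min ha hb), max_eq_right zero_le_one]

lemma trap_eq_zero {l r t : ℝ} (h : t < l - 1 ∨ r + 1 < t) : trap l r t = 0 := by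
  unfold trap
  rcases h with h | h
  · have h1 : min (min (t - l + 1) (r + 1 - t)) 1 ≤ t - l + 1 :=
      (min_le_left _ _).trans (min_le_left _ _)
    exact max_eq_left (h1.trans (by linarith))
  · have h1 : min (min (t - l + 1) (r + 1 - t)) 1 ≤ r + 1 - t :=
      (min_le_left _ _).trans (min_le_right _ _)
    exact max_eq_left (h1.trans (by linarith))

theorem stmt8 (a : ℕ → ℝ) (ha : ∀ n, 0 ≤ a n) (hlim : Tendsto a atTop atTop) :
    ∃ g : ℝ → ℝ, Continuous g ∧ (∀ x, 0 ≤ x → 0 ≤ g x) ∧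
      IntegrableOn g (Set.Ici 0) ∧
      ∀ x : ℝ, 0 ≤ x → ∀ C : ℝ, ∃ᶠ n : ℕ in atTop, C < a n * g (n * x) := by
  -- choose thresholds N k from which a n ≥ k * 2^k * (k+2)
  have hN : ∀ k : ℕ, ∃ N : ℕ, k ≤ N ∧
      ∀ n, N ≤ n → ((k : ℝ) * 2 ^ k * ((k : ℝ) + 2)) ≤ a n := by
    intro k
    obtain ⟨N₀, hN₀⟩ := (tendsto_atTop.1 hlim ((k : ℝ) * 2 ^ k * ((k : ℝ) + 2))).exists_forall_of_atTop
    exact ⟨max N₀ k, le_max_right _ _, fun n hn => hN₀ n ((le_max_left _ _).trans hn)⟩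
  choose N hNk hNa using hN
  -- bump heights and positions
  set h : ℕ → ℝ := fun k => (1 / 2 : ℝ) ^ k / ((k : ℝ) + 2) with hh_def
  set c : ℕ → ℝ := fun k => (k : ℝ) * (N k : ℝ) with hc_def
  set f : ℕ → ℝ → ℝ := fun k t => h k * trap (c k) (c k + k) t with hf_def
  have hh_pos : ∀ k, 0 < h k := fun k => by
    apply div_pos (by positivity) (by positivity)
  have hf_nonneg : ∀ k t, 0 ≤ f k t := fun k t =>
    mul_nonneg (hh_pos k).le (trap_nonneg _ _ _)
  have hh_le : ∀ k, h k ≤ (1 / 2 : ℝ) ^ k := fun k => by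
    rw [hh_def]
    apply div_le_self (by positivity)
    have : (0:ℝ) ≤ (k:ℝ) := Nat.cast_nonneg k
    linarith
  have hf_le : ∀ k t, f k t ≤ (1 / 2 : ℝ) ^ k := fun k t => by
    calc f k t ≤ h k * 1 := mul_le_mul_of_nonneg_left (trap_le_one _ _ _) (hh_pos k).le
    _ = h k := mul_one _
    _ ≤ _ := hh_le k
  have hgeo : Summable (fun k : ℕ => (1 / 2 : ℝ) ^ k) :=
    summable_geometric_of_lt_one (by norm_num) (by norm_num)
  have hsum : ∀ t, Summable (fun k => f k t) := fun t =>
    Summable.of_nonneg_of_le (fun k => hf_nonneg k t) (fun k => hf_le k t) hgeo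
  have hf_cont : ∀ k, Continuous (f k) := fun k =>
    continuous_const.mul (trap_continuous _ _)
  set g : ℝ → ℝ := fun t => ∑' k, f k t with hg_def
  have hg_cont : Continuous g := by
    apply continuous_tsum hf_cont hgeo
    intro k t
    rw [Real.norm_of_nonneg (hf_nonneg k t)]
    exact hf_le k t
  have hg_nonneg : ∀ t, 0 ≤ g t := fun t => tsum_nonneg (fun k => hf_nonneg k t)
  have hg_ge : ∀ t k, f k t ≤ g t := fun t k =>
    Summable.le_tsum (hsum t) k (fun j _ => hf_nonneg j t)
  -- integrability
  have hg_int : Integrable g := by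
    refine ⟨hg_cont.aestronglyMeasurable, ?_⟩
    show (∫⁻ t, (‖g t‖₊ : ENNReal) ∂volume) < ⊤
    have hnn : ∀ t, Summable (fun k => ‖f k t‖₊) := by
      intro t
      rw [← NNReal.summable_coe]
      have : (fun k => ((‖f k t‖₊ : ℝ))) = fun k => f k t := by
        funext k
        rw [coe_nnnorm, Real.norm_of_nonneg (hf_nonneg k t)]
      rw [this]
      exact hsum t
    calc ∫⁻ t, (‖g t‖₊ : ENNReal) ≤ ∫⁻ t, ∑' k, (‖f k t‖₊ : ENNReal) := by
          apply lintegral_mono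
          intro t
          simp only
          rw [← ENNReal.coe_tsum (hnn t)]
          exact ENNReal.coe_le_coe.2 (nnnorm_tsum_le (hnn t))
    _ = ∑' k, ∫⁻ t, (‖f k t‖₊ : ENNReal) := by
          exact lintegral_tsum (fun k => ((hf_cont k).measurable.nnnorm.coe_nnreal_ennreal).aemeasurable)
    _ ≤ ∑' k : ℕ, ENNReal.ofReal ((1 / 2 : ℝ) ^ k) := by
          apply ENNReal.tsum_le_tsum
          intro k
          have hsupp : ∀ t, (‖f k t‖₊ : ENNReal) ≤
              (Set.Icc (c k - 1) (c k + k + 1)).indicator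
                (fun _ => ENNReal.ofReal (h k)) t := by
            intro t
            by_cases ht : t ∈ Set.Icc (c k - 1) (c k + k + 1)
            · rw [Set.indicator_of_mem ht]
              rw [← enorm_eq_nnnorm, ← ofReal_norm, Real.norm_of_nonneg (hf_nonneg k t)]
              apply ENNReal.ofReal_le_ofReal
              calc f k t ≤ h k * 1 :=
                    mul_le_mul_of_nonneg_left (trap_le_one _ _ _) (hh_pos k).le
              _ = h k := mul_one _
            · rw [Set.indicator_of_notMem ht]
              have : trap (c k) (c k + k) t = 0 := by
                apply trap_eq_zero
                rw [Set.mem_Icc, not_and_or] at ht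
                rcases ht with ht | ht
                · left; linarith [not_le.1 ht]
                · right; linarith [not_le.1 ht]
              simp [hf_def, this]
          calc ∫⁻ t, (‖f k t‖₊ : ENNReal) ≤
              ∫⁻ t, (Set.Icc (c k - 1) (c k + k + 1)).indicator
                (fun _ => ENNReal.ofReal (h k)) t := lintegral_mono hsupp
          _ = ENNReal.ofReal (h k) * volume (Set.Icc (c k - 1) (c k + k + 1)) :=
              lintegral_indicator_const measurableSet_Icc _
          _ = ENNReal.ofReal (h k) * ENNReal.ofReal ((k : ℝ) + 2) := by
              rw [Real.volume_Icc]
              congr 1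
              ring_nf
          _ = ENNReal.ofReal (h k * ((k : ℝ) + 2)) :=
              (ENNReal.ofReal_mul (hh_pos k).le).symm
          _ = ENNReal.ofReal ((1 / 2 : ℝ) ^ k) := by
              congr 1
              rw [hh_def]
              field_simp
    _ = ENNReal.ofReal (∑' k : ℕ, (1 / 2 : ℝ) ^ k) :=
          (ENNReal.ofReal_tsum_of_nonneg (fun k => by positivity) hgeo).symm
    _ < ⊤ := ENNReal.ofReal_lt_top
  refine ⟨g, hg_cont, fun x _ => hg_nonneg x, hg_int.integrableOn, ?_⟩
  intro x hx C
  rcases eq_or_lt_of_le hx with h0 | hxpos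
  · -- x = 0
    have hg0 : (1 / 2 : ℝ) ≤ g 0 := by
      have h1 : f 0 0 = h 0 := by
        have h3 : trap (c 0) (c 0 + ((0:ℕ):ℝ)) 0 = 1 := by
          apply trap_eq_one <;> simp [hc_def]
        simp only [hf_def]
        rw [h3, mul_one]
      have h2 : h 0 = 1 / 2 := by norm_num [hh_def]
      have := hg_ge 0 0
      rw [h1, h2] at this
      exact this
    apply Eventually.frequently
    filter_upwards [tendsto_atTop.1 hlim (2 * C + 2)] with n hn
    have h1 : 0 ≤ a n := ha n
    have : (n : ℝ) * x = 0 := by rw [← h0, mul_zero]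
    rw [this]
    nlinarith [hg_nonneg 0]
  · -- x > 0
    rw [frequently_atTop]
    intro m
    obtain ⟨k, hk⟩ := exists_nat_gt (max (max x C) (m : ℝ))
    have hxk : x < k := lt_of_le_of_lt (le_trans (le_max_left _ _) (le_max_left _ _)) hk
    have hCk : C < k := lt_of_le_of_lt (le_trans (le_max_right _ _) (le_max_left _ _)) hk
    have hmk : m < k := by exact_mod_cast lt_of_le_of_lt (le_max_right _ _) hk
    have hk1 : 1 ≤ k := by
      rcases Nat.eq_zero_or_pos k with h | h
      · exfalso; rw [h] at hxk; push_cast at hxk; linarith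
      · exact h
    have hkpos : (0:ℝ) < k := by exact_mod_cast hk1
    have hNkpos : (0:ℝ) < (N k : ℝ) := by
      have : 1 ≤ N k := le_trans hk1 (hNk k)
      exact_mod_cast this
    have hcpos : 0 < c k := mul_pos hkpos hNkpos
    set n : ℕ := ⌈c k / x⌉₊ with hn_def
    have hdiv_pos : 0 < c k / x := div_pos hcpos hxpos
    have hn_ge : c k / x ≤ (n : ℝ) := Nat.le_ceil _
    have hn_lt : (n : ℝ) < c k / x + 1 := Nat.ceil_lt_add_one hdiv_pos.le
    have hnx_ge : c k ≤ (n : ℝ) * x := (div_le_iff₀ hxpos).1 hn_ge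
    have hnx_le : (n : ℝ) * x ≤ c k + k := by
      have : (n : ℝ) * x < (c k / x + 1) * x := by
        exact mul_lt_mul_of_pos_right hn_lt hxpos
      rw [add_mul, div_mul_cancel₀ _ hxpos.ne', one_mul] at this
      linarith
    have hNn : (N k : ℝ) ≤ (n : ℝ) := by
      refine le_trans ?_ hn_ge
      rw [le_div_iff₀ hxpos, hc_def]
      calc (N k : ℝ) * x ≤ (N k : ℝ) * k :=
            mul_le_mul_of_nonneg_left hxk.le hNkpos.le
      _ = (k : ℝ) * (N k : ℝ) := mul_comm _ _
    have hNn' : N k ≤ n := by exact_mod_cast hNn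
    have hmn : m ≤ n := le_trans hmk.le (le_trans (hNk k) hNn')
    refine ⟨n, hmn, ?_⟩
    have htrap : trap (c k) (c k + k) ((n : ℝ) * x) = 1 := trap_eq_one hnx_ge hnx_le
    have hgnx : h k ≤ g ((n : ℝ) * x) := by
      have := hg_ge ((n : ℝ) * x) k
      rw [hf_def] at this
      simp only [htrap, mul_one] at this
      exact this
    have han : ((k : ℝ) * 2 ^ k * ((k : ℝ) + 2)) ≤ a n := hNa k n hNn'
    have hkey : ((k : ℝ) * 2 ^ k * ((k : ℝ) + 2)) * h k = k := by
      rw [hh_def]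
      have h2 : ((k : ℝ) + 2) ≠ 0 := by positivity
      field_simp
      rw [← mul_pow]; norm_num
    calc C < (k : ℝ) := hCk
    _ = ((k : ℝ) * 2 ^ k * ((k : ℝ) + 2)) * h k := hkey.symm
    _ ≤ a n * h k := mul_le_mul_of_nonneg_right han (hh_pos k).le
    _ ≤ a n * g ((n : ℝ) * x) := mul_le_mul_of_nonneg_left hgnx (ha n)
end

section
/- Let d > 0, a > 1 be reals and (c_n) a sequence of positive reals. If there exists M > 0 such that for every t > 0, ∑_{n : t ≤ c_n < a·t} 1/c_n^d ≤ M, then for every t > 0 the set {n : c_n < t} is finite and has cardinality at most t^d · M/(1 − a^{-d}). -/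
open MeasureTheory Filter

theorem stmt11 (d a : ℝ) (hd : 0 < d) (ha : 1 < a) (c : ℕ → ℝ) (hc : ∀ n, 0 < c n)
    (M : ℝ) (hM : 0 < M)
    (h : ∀ t : ℝ, 0 < t →
      (∑' n : {m : ℕ // t ≤ c m ∧ c m < a * t}, ENNReal.ofReal (1 / c (n : ℕ) ^ d))
        ≤ ENNReal.ofReal M) :
    ∀ t : ℝ, 0 < t → ({n : ℕ | c n < t}).Finite ∧
      (({n : ℕ | c n < t}).ncard : ℝ) ≤ t ^ d * (M / (1 - a ^ (-d))) := by
  intro t ht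
  have ha0 : (0:ℝ) < a := lt_trans one_pos ha
  set r : ℝ := a ^ (-d) with hrdef
  have hr0 : 0 < r := Real.rpow_pos_of_pos ha0 _
  have hr1 : r < 1 := Real.rpow_lt_one_of_one_lt_of_neg ha (neg_neg_of_pos hd)
  -- Key: any finset inside an annulus [s, a*s) has card ≤ M * (a*s)^d
  have key : ∀ s : ℝ, 0 < s → ∀ F : Finset ℕ, (∀ n ∈ F, s ≤ c n ∧ c n < a * s) →
      (F.card : ℝ) ≤ M * (a * s) ^ d := by
    intro s hs F hF
    have hq0 : (0:ℝ) < (a * s) ^ d := Real.rpow_pos_of_pos (by positivity) d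
    set A : Set ℕ := {m : ℕ | s ≤ c m ∧ c m < a * s} with hA
    have hsum : ∑ n ∈ F, ENNReal.ofReal (1 / (a*s) ^ d) ≤ ENNReal.ofReal M := by
      calc ∑ n ∈ F, ENNReal.ofReal (1 / (a*s) ^ d)
          ≤ ∑ n ∈ F, A.indicator (fun n => ENNReal.ofReal (1 / c n ^ d)) n := by
            apply Finset.sum_le_sum
            intro n hn
            have hmem : n ∈ A := hF n hn
            rw [Set.indicator_of_mem hmem]
            apply ENNReal.ofReal_le_ofReal
            apply one_div_le_one_div_of_le (Real.rpow_pos_of_pos (hc n) d)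
            exact Real.rpow_le_rpow (hc n).le (hF n hn).2.le hd.le
        _ ≤ ∑' n, A.indicator (fun n => ENNReal.ofReal (1 / c n ^ d)) n :=
            ENNReal.sum_le_tsum F
        _ = ∑' n : A, ENNReal.ofReal (1 / c (n:ℕ) ^ d) := (tsum_subtype A _).symm
        _ ≤ ENNReal.ofReal M := h s hs
    rw [Finset.sum_const, nsmul_eq_mul] at hsum
    have : (F.card : ℝ) * (1 / (a*s) ^ d) ≤ M := by
      rw [← ENNReal.ofReal_le_ofReal_iff hM.le, ENNReal.ofReal_mul (by positivity),
        ENNReal.ofReal_natCast]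
      exact hsum
    calc (F.card : ℝ) = (F.card : ℝ) * (1 / (a*s)^d) * (a*s)^d := by
          field_simp
      _ ≤ M * (a*s)^d := by
          exact mul_le_mul_of_nonneg_right this hq0.le
  -- a total "scale" function
  have hex : ∀ n : ℕ, ∃ k : ℕ, t ≤ c n * a ^ (k+1) := by
    intro n
    obtain ⟨k, hk⟩ := pow_unbounded_of_one_lt (t / c n) ha
    exact ⟨k, by
      have : t / c n ≤ a ^ (k+1) :=
        hk.le.trans (pow_le_pow_right₀ ha.le (Nat.le_succ k))
      calc t = (t / c n) * c n := (div_mul_cancel₀ t (hc n).ne').symm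
        _ ≤ a ^ (k+1) * c n := mul_le_mul_of_nonneg_right this (hc n).le
        _ = c n * a ^ (k+1) := mul_comm _ _⟩
  set K : ℕ → ℕ := fun n => Nat.find (hex n) with hK
  -- each n with c n < t lies in annulus number K n
  have hann : ∀ n : ℕ, c n < t → t / a ^ (K n + 1) ≤ c n ∧ c n < a * (t / a ^ (K n + 1)) := by
    intro n hn
    have h1 : t ≤ c n * a ^ (K n + 1) := Nat.find_spec (hex n)
    constructor
    · rw [div_le_iff₀ (by positivity)]; linarith [h1]
    · have h2 : c n < t / a ^ (K n) := by
        rcases Nat.eq_zero_or_pos (K n) with h0 | hpos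
        · rw [h0]; simpa using hn
        · obtain ⟨j, hj⟩ := Nat.exists_eq_add_of_lt hpos
          have hKn : Nat.find (hex n) = K n := rfl
          have := Nat.find_min (hex n) (m := j) (by omega)
          push_neg at this
          rw [lt_div_iff₀ (by positivity)]
          have : c n * a ^ (j + 1) < t := this
          have hje : j + 1 = K n := by omega
          rwa [hje] at this
      calc c n < t / a ^ (K n) := h2
        _ = a * (t / a ^ (K n + 1)) := by
            rw [pow_succ]; field_simp
    -- the annulus card bound in convenient form
  have hannbd : ∀ k : ℕ, ∀ F : Finset ℕ, (∀ n ∈ F, c n < t ∧ K n = k) →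
      (F.card : ℝ) ≤ M * t ^ d * r ^ k := by
    intro k F hF
    have hs : (0:ℝ) < t / a ^ (k+1) := by positivity
    have := key (t / a ^ (k+1)) hs F (fun n hn => by
      have h1 := hann n (hF n hn).1
      rw [(hF n hn).2] at h1
      exact h1)
    have heq : M * (a * (t / a ^ (k+1))) ^ d = M * t ^ d * r ^ k := by
      have h1 : a * (t / a ^ (k+1)) = t / a ^ k := by
        rw [pow_succ]; field_simp
      rw [h1, Real.div_rpow ht.le (by positivity), ← Real.rpow_natCast a k,
        ← Real.rpow_natCast r k, hrdef, ← Real.rpow_mul ha0.le, ← Real.rpow_mul ha0.le,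
        div_eq_mul_inv, ← Real.rpow_neg ha0.le, mul_assoc]
      ring_nf
    linarith [this, heq.le, heq.ge]
  -- any finset inside {n | c n < t} has card ≤ bound
  have hfin : ∀ F : Finset ℕ, (∀ n ∈ F, c n < t) → (F.card : ℝ) ≤ t ^ d * (M / (1 - r)) := by
    intro F hF
    set N : ℕ := F.sup K + 1 with hN
    have hcard : F.card = ∑ k ∈ Finset.range N, (F.filter (fun n => K n = k)).card := by
      apply Finset.card_eq_sum_card_fiberwise
      intro n hn
      simp only [Finset.mem_range, hN]
      exact Finset.mem_coe.mpr (Finset.mem_range.mpr (Nat.lt_succ_of_le (Finset.le_sup hn)))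
    have hbd : ∀ k ∈ Finset.range N, ((F.filter (fun n => K n = k)).card : ℝ)
        ≤ M * t ^ d * r ^ k := by
      intro k _
      apply hannbd k
      intro n hn
      rw [Finset.mem_filter] at hn
      exact ⟨hF n hn.1, hn.2⟩
    have hgeo : ∑ k ∈ Finset.range N, r ^ k ≤ 1 / (1 - r) := by
      have hsm := (hasSum_geometric_of_lt_one hr0.le hr1).summable
      calc ∑ k ∈ Finset.range N, r ^ k ≤ ∑' k : ℕ, r ^ k :=
            Summable.sum_le_tsum (Finset.range N) (fun i _ => pow_nonneg hr0.le i) hsm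
        _ = (1 - r)⁻¹ := tsum_geometric_of_lt_one hr0.le hr1
        _ = 1 / (1 - r) := (one_div _).symm
    calc (F.card : ℝ) = ∑ k ∈ Finset.range N, ((F.filter (fun n => K n = k)).card : ℝ) := by
          rw [hcard]; push_cast; ring
      _ ≤ ∑ k ∈ Finset.range N, M * t ^ d * r ^ k := Finset.sum_le_sum hbd
      _ = M * t ^ d * ∑ k ∈ Finset.range N, r ^ k := by rw [Finset.mul_sum]
      _ ≤ M * t ^ d * (1 / (1 - r)) := by
          apply mul_le_mul_of_nonneg_left hgeo
          positivity
      _ = t ^ d * (M / (1 - r)) := by ring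
  -- conclude finiteness
  have hC0 : (0:ℝ) ≤ t ^ d * (M / (1 - r)) := by
    have : (0:ℝ) < 1 - r := by linarith
    positivity
  have hSfin : ({n : ℕ | c n < t}).Finite := by
    by_contra hinf
    obtain ⟨G, hGsub, hGfin, hGcard⟩ :=
      Set.Infinite.exists_subset_ncard_eq hinf (Nat.floor (t ^ d * (M / (1 - r))) + 1)
    have h1 := hfin hGfin.toFinset (fun n hn => hGsub (hGfin.mem_toFinset.mp hn))
    rw [← Set.ncard_eq_toFinset_card G hGfin, hGcard] at h1
    have h2 := Nat.lt_floor_add_one (t ^ d * (M / (1 - r)))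
    push_cast at h1 h2
    linarith
  refine ⟨hSfin, ?_⟩
  have h1 := hfin hSfin.toFinset (fun n hn => hSfin.mem_toFinset.mp hn)
  rwa [← Set.ncard_eq_toFinset_card _ hSfin] at h1
end

section
/- Let d > 0, a > 1 be reals and (c_n) a sequence of positive reals. If there exists M > 0 such that for every t > 0, ∑_{n : t ≤ c_n < a·t} 1/c_n^d ≤ M, then there exists a nondecreasing permutation (c'_n) of (c_n), and for this permutation n^{1/d}/c'_n ≤ (M/(1 − a^{-d}))^{1/d} for every n. -/
open MeasureTheory Filter
open scoped ENNReal

private lemma bandBound (d a : ℝ) (hd : 0 < d) (ha : 1 < a) (c : ℕ → ℝ) (hc : ∀ n, 0 < c n)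
    (M : ℝ) (hM : 0 < M)
    (h : ∀ t : ℝ, 0 < t →
      (∑' n : {m : ℕ // t ≤ c m ∧ c m < a * t}, ENNReal.ofReal (1 / c (n : ℕ) ^ d))
        ≤ ENNReal.ofReal M)
    (t : ℝ) (ht : 0 < t) (F : Finset ℕ)
    (hF : ∀ m ∈ F, t ≤ c m ∧ c m < a * t) :
    (F.card : ℝ) ≤ M * (a * t) ^ d := by
  have ha0 : 0 < a := lt_trans one_pos ha
  have hat : 0 < a * t := mul_pos ha0 ht
  have hatd : 0 < (a * t) ^ d := Real.rpow_pos_of_pos hat d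
  set P : ℕ → Prop := fun m => t ≤ c m ∧ c m < a * t with hP
  classical
  set F' : Finset {m : ℕ // P m} := F.subtype P with hF'
  have hcard : F'.card = F.card := by
    rw [hF', Finset.card_subtype, Finset.filter_true_of_mem hF]
  have h1 : ∑ i ∈ F', ENNReal.ofReal (1 / c (i : ℕ) ^ d) ≤ ENNReal.ofReal M :=
    le_trans (ENNReal.sum_le_tsum F') (h t ht)
  have h2 : ∀ i ∈ F', ENNReal.ofReal (1 / (a * t) ^ d) ≤ ENNReal.ofReal (1 / c (i : ℕ) ^ d) := by
    intro i _
    apply ENNReal.ofReal_le_ofReal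
    apply one_div_le_one_div_of_le (Real.rpow_pos_of_pos (hc i) d)
    exact Real.rpow_le_rpow (hc i).le i.2.2.le hd.le
  have h3 : (F.card : ℝ≥0∞) * ENNReal.ofReal (1 / (a * t) ^ d) ≤ ENNReal.ofReal M := by
    calc (F.card : ℝ≥0∞) * ENNReal.ofReal (1 / (a * t) ^ d)
        = F'.card • ENNReal.ofReal (1 / (a * t) ^ d) := by rw [hcard, nsmul_eq_mul]
      _ ≤ ∑ i ∈ F', ENNReal.ofReal (1 / c (i : ℕ) ^ d) := Finset.card_nsmul_le_sum F' _ _ h2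
      _ ≤ ENNReal.ofReal M := h1
  have h4 : (F.card : ℝ) * (1 / (a * t) ^ d) ≤ M := by
    rw [← ENNReal.ofReal_le_ofReal_iff hM.le, ENNReal.ofReal_mul (by positivity),
      ENNReal.ofReal_natCast]
    exact h3
  rw [mul_one_div, div_le_iff₀ hatd] at h4
  linarith [h4]

private lemma cardBound (d a : ℝ) (hd : 0 < d) (ha : 1 < a) (c : ℕ → ℝ) (hc : ∀ n, 0 < c n)
    (M : ℝ) (hM : 0 < M)
    (h : ∀ t : ℝ, 0 < t →
      (∑' n : {m : ℕ // t ≤ c m ∧ c m < a * t}, ENNReal.ofReal (1 / c (n : ℕ) ^ d))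
        ≤ ENNReal.ofReal M)
    (x : ℝ) (hx : 0 < x) (F : Finset ℕ) (hF : ∀ m ∈ F, c m ≤ x) :
    (F.card : ℝ) ≤ M / (1 - a ^ (-d)) * x ^ d := by
  have ha0 : 0 < a := lt_trans one_pos ha
  set b : ℝ := a⁻¹ with hb
  have hb0 : 0 < b := inv_pos.mpr ha0
  have hb1 : b < 1 := inv_lt_one_of_one_lt₀ ha
  set r : ℝ := b ^ d with hrdef
  have hr0 : 0 < r := Real.rpow_pos_of_pos hb0 d
  have hr1 : r < 1 := Real.rpow_lt_one hb0.le hb1 hd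
  have hamd : a ^ (-d) = r := by
    rw [hrdef, hb, Real.rpow_neg ha0.le, Real.inv_rpow ha0.le]
  -- main step : for every u > x
  have key : ∀ u : ℝ, x < u → (F.card : ℝ) ≤ M / (1 - r) * u ^ d := by
    intro u hu
    have hu0 : 0 < u := lt_trans hx hu
    have hex : ∀ m : ℕ, ∃ j : ℕ, u * b ^ (j + 1) ≤ c m := by
      intro m
      obtain ⟨n, hn⟩ := exists_pow_lt_of_lt_one (div_pos (hc m) hu0) hb1
      refine ⟨n, ?_⟩
      have h1 : b ^ (n + 1) ≤ b ^ n := pow_le_pow_of_le_one hb0.le hb1.le (by omega)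
      have h2 : u * b ^ n < c m := by
        have := (lt_div_iff₀ hu0).mp hn
        nlinarith
      have h3 : u * b ^ (n + 1) ≤ u * b ^ n := mul_le_mul_of_nonneg_left h1 hu0.le
      linarith
    set k : ℕ → ℕ := fun m => Nat.find (hex m) with hk
    have hk1 : ∀ m, u * b ^ (k m + 1) ≤ c m := fun m => Nat.find_spec (hex m)
    have hk2 : ∀ m ∈ F, c m < u * b ^ (k m) := by
      intro m hm
      rcases Nat.eq_zero_or_pos (k m) with h0 | hpos
      · rw [h0]; simpa using lt_of_le_of_lt (hF m hm) hu
      · have := Nat.find_min (hex m) (show k m - 1 < k m by omega)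
        push_neg at this
        have : c m < u * b ^ (k m - 1 + 1) := this
        rwa [Nat.sub_add_cancel hpos] at this
    set N : ℕ := F.sup k + 1 with hN
    have hmem : ∀ m ∈ F, k m ∈ Finset.range N := by
      intro m hm
      simp only [Finset.mem_range, hN]
      exact Nat.lt_succ_of_le (Finset.le_sup hm)
    have hcardeq := Finset.card_eq_sum_card_fiberwise hmem
    have hab : a * b = 1 := mul_inv_cancel₀ ha0.ne'
    have hfiber : ∀ j ∈ Finset.range N,
        ((F.filter (fun m => k m = j)).card : ℝ) ≤ M * u ^ d * r ^ j := by
      intro j _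
      have ht0 : 0 < u * b ^ (j + 1) := by positivity
      have hband := bandBound d a hd ha c hc M hM h (u * b ^ (j + 1)) ht0
        (F.filter (fun m => k m = j)) ?_
      · have heq : a * (u * b ^ (j + 1)) = u * b ^ j := by
          calc a * (u * b ^ (j + 1)) = (a * b) * (u * b ^ j) := by rw [pow_succ]; ring
            _ = u * b ^ j := by rw [hab, one_mul]
        rw [heq] at hband
        have hexp : (u * b ^ j) ^ d = u ^ d * r ^ j := by
          rw [Real.mul_rpow hu0.le (by positivity), ← Real.rpow_natCast b j,
            ← Real.rpow_natCast r j, hrdef, ← Real.rpow_mul hb0.le, ← Real.rpow_mul hb0.le,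
            mul_comm (j : ℝ) d]
        rw [hexp, ← mul_assoc] at hband
        exact hband
      · intro m hm
        rw [Finset.mem_filter] at hm
        obtain ⟨hmF, hkm⟩ := hm
        constructor
        · rw [← hkm]; exact hk1 m
        · have heq : a * (u * b ^ (j + 1)) = u * b ^ j := by
            calc a * (u * b ^ (j + 1)) = (a * b) * (u * b ^ j) := by rw [pow_succ]; ring
            _ = u * b ^ j := by rw [hab, one_mul]
          rw [heq, ← hkm]; exact hk2 m hmF
    have hgeom : ∑ j ∈ Finset.range N, r ^ j ≤ 1 / (1 - r) := by
      have := geom_sum_Ico_le_of_lt_one hr0.le hr1 (m := 0) (n := N)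
      simpa using this
    calc (F.card : ℝ) = ∑ j ∈ Finset.range N, ((F.filter (fun m => k m = j)).card : ℝ) := by
          rw [hcardeq]; push_cast; ring
      _ ≤ ∑ j ∈ Finset.range N, M * u ^ d * r ^ j := Finset.sum_le_sum hfiber
      _ = M * u ^ d * ∑ j ∈ Finset.range N, r ^ j := by rw [Finset.mul_sum]
      _ ≤ M * u ^ d * (1 / (1 - r)) := by
          apply mul_le_mul_of_nonneg_left hgeom (by positivity)
      _ = M / (1 - r) * u ^ d := by ring
  -- limit u → x⁺
  rw [hamd]
  have htend : Tendsto (fun u : ℝ => M / (1 - r) * u ^ d) (nhdsWithin x (Set.Ioi x))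
      (nhds (M / (1 - r) * x ^ d)) := by
    apply Tendsto.mono_left _ nhdsWithin_le_nhds
    exact Tendsto.const_mul _ (Real.continuousAt_rpow_const x d (Or.inl hx.ne'))
  exact ge_of_tendsto htend (by
    filter_upwards [self_mem_nhdsWithin] with u hu
    exact key u hu)

private lemma exists_mono_enum (c : ℕ → ℝ) (hfin : ∀ x : ℝ, {j : ℕ | c j ≤ x}.Finite) :
    ∃ σ : ℕ → ℕ, Function.Bijective σ ∧ Monotone (fun n => c (σ n)) := by
  classical
  set r : ℕ → ℕ → Prop := fun i j => c i < c j ∨ (c i = c j ∧ i < j) with hr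
  have htrans : ∀ {i j k}, r i j → r j k → r i k := by
    rintro i j k (h1 | ⟨h1, h1'⟩) (h2 | ⟨h2, h2'⟩)
    · exact Or.inl (lt_trans h1 h2)
    · exact Or.inl (h2 ▸ h1)
    · exact Or.inl (h1 ▸ h2)
    · exact Or.inr ⟨h1.trans h2, lt_trans h1' h2'⟩
  have hirr : ∀ i, ¬ r i i := by rintro i (h | ⟨_, h⟩) <;> exact absurd h (by simp)
  have htri : ∀ {i j}, i ≠ j → r i j ∨ r j i := by
    intro i j hij
    rcases lt_trichotomy (c i) (c j) with h | h | h
    · exact Or.inl (Or.inl h)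
    · rcases lt_or_gt_of_ne hij with h' | h'
      · exact Or.inl (Or.inr ⟨h, h'⟩)
      · exact Or.inr (Or.inr ⟨h.symm, h'⟩)
    · exact Or.inr (Or.inl h)
  have hfin' : ∀ i, {j : ℕ | r j i}.Finite := by
    intro i
    apply (hfin (c i)).subset
    rintro j (h | ⟨h, _⟩) <;> simp [Set.mem_setOf_eq, h.le, h]
  set ρ : ℕ → ℕ := fun i => (hfin' i).toFinset.card with hρ
  have hmemρ : ∀ i j, j ∈ (hfin' i).toFinset ↔ r j i := by
    intro i j; simp [Set.Finite.mem_toFinset]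
  have hlt : ∀ {i j}, r i j → ρ i < ρ j := by
    intro i j hij
    apply Finset.card_lt_card
    rw [Finset.ssubset_iff_of_subset]
    · exact ⟨i, (hmemρ j i).mpr hij, fun hi => hirr i ((hmemρ i i).mp hi)⟩
    · intro k hk
      exact (hmemρ j k).mpr (htrans ((hmemρ i k).mp hk) hij)
  have hinj : Function.Injective ρ := by
    intro i j hij
    by_contra hne
    rcases htri hne with h | h
    · exact absurd hij (hlt h).ne
    · exact absurd hij.symm (hlt h).ne
  have hdown : ∀ i N, ρ i = N + 1 → ∃ j, ρ j = N := by
    intro i N hi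
    have hci : (hfin' i).toFinset.card = N + 1 := hi
    have hne : (hfin' i).toFinset.Nonempty := Finset.card_pos.mp (by omega)
    obtain ⟨j, hjmem, hjmax⟩ := Finset.exists_max_image (hfin' i).toFinset ρ hne
    refine ⟨j, ?_⟩
    have hset : (hfin' j).toFinset = (hfin' i).toFinset.erase j := by
      ext k
      rw [Finset.mem_erase, hmemρ, hmemρ]
      constructor
      · intro hkj
        exact ⟨fun hkj' => hirr j (hkj' ▸ hkj), htrans hkj ((hmemρ i j).mp hjmem)⟩
      · rintro ⟨hkj, hki⟩
        rcases htri hkj with h | h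
        · exact h
        · exact absurd (hjmax k ((hmemρ i k).mpr hki)) (not_le.mpr (hlt h))
    have hcj : ρ j = (hfin' j).toFinset.card := rfl
    rw [hcj, hset, Finset.card_erase_of_mem hjmem, hci]
    omega
  have hdesc : ∀ k n : ℕ, (n + k) ∈ Set.range ρ → n ∈ Set.range ρ := by
    intro k
    induction k with
    | zero => exact fun n h => h
    | succ k ih =>
        intro n hn
        obtain ⟨i, hi⟩ := hn
        obtain ⟨j, hj⟩ := hdown i (n + k) (by omega)
        exact ih n ⟨j, hj⟩
  have hsurj : Function.Surjective ρ := by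
    intro n
    have hinf : (Set.range ρ).Infinite := Set.infinite_range_of_injective hinj
    obtain ⟨m, hm, hnm⟩ := hinf.exists_gt n
    have : n + (m - n) ∈ Set.range ρ := by
      rwa [show n + (m - n) = m by omega]
    exact hdesc (m - n) n this
  set e := Equiv.ofBijective ρ ⟨hinj, hsurj⟩ with he
  refine ⟨fun n => e.symm n, e.symm.bijective, ?_⟩
  have hρσ : ∀ n, ρ (e.symm n) = n := fun n => e.apply_symm_apply n
  intro m n hmn
  by_contra hlt'
  push_neg at hlt'
  have : r (e.symm n) (e.symm m) := Or.inl hlt'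
  have := hlt this
  rw [hρσ, hρσ] at this
  omega

theorem stmt12 (d a : ℝ) (hd : 0 < d) (ha : 1 < a) (c : ℕ → ℝ) (hc : ∀ n, 0 < c n)
    (M : ℝ) (hM : 0 < M)
    (h : ∀ t : ℝ, 0 < t →
      (∑' n : {m : ℕ // t ≤ c m ∧ c m < a * t}, ENNReal.ofReal (1 / c (n : ℕ) ^ d))
        ≤ ENNReal.ofReal M) :
    ∃ σ : ℕ → ℕ, Function.Bijective σ ∧ Monotone (fun n => c (σ n)) ∧
      ∀ n : ℕ, (n : ℝ) ^ ((1 : ℝ) / d) / c (σ n) ≤ (M / (1 - a ^ (-d))) ^ ((1 : ℝ) / d) := by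
  classical
  have ha0 : 0 < a := lt_trans one_pos ha
  have hamd1 : a ^ (-d) < 1 := Real.rpow_lt_one_of_one_lt_of_neg ha (by linarith)
  have hamd0 : 0 < a ^ (-d) := Real.rpow_pos_of_pos ha0 _
  set K : ℝ := M / (1 - a ^ (-d)) with hK
  have hK0 : 0 < K := div_pos hM (by linarith)
  -- finiteness of sublevel sets
  have hfin : ∀ x : ℝ, {j : ℕ | c j ≤ x}.Finite := by
    intro x
    rcases le_or_gt x 0 with hx | hx
    · have : {j : ℕ | c j ≤ x} = ∅ := by
        ext j; simp only [Set.mem_setOf_eq, Set.mem_empty_iff_false, iff_false, not_le]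
        exact lt_of_le_of_lt hx (hc j)
      rw [this]; exact Set.finite_empty
    · by_contra hinf
      have hinf' : {j : ℕ | c j ≤ x}.Infinite := hinf
      obtain ⟨F, hFsub, hFcard⟩ := hinf'.exists_subset_card_eq (⌈K * x ^ d⌉₊ + 1)
      have hb := cardBound d a hd ha c hc M hM h x hx F (fun m hm => hFsub hm)
      rw [hFcard] at hb
      have : K * x ^ d ≤ (⌈K * x ^ d⌉₊ : ℝ) := Nat.le_ceil _
      push_cast at hb
      rw [← hK] at hb
      linarith
  obtain ⟨σ, hbij, hmono⟩ := exists_mono_enum c hfin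
  refine ⟨σ, hbij, hmono, ?_⟩
  intro n
  set x : ℝ := c (σ n) with hx
  have hx0 : 0 < x := hc _
  -- count bound
  have hcount : ((n : ℝ) + 1) ≤ K * x ^ d := by
    set F : Finset ℕ := (Finset.range (n + 1)).image σ with hF
    have hcard : F.card = n + 1 := by
      rw [hF, Finset.card_image_of_injective _ hbij.1, Finset.card_range]
    have hb := cardBound d a hd ha c hc M hM h x hx0 F ?_
    · rw [hcard] at hb; push_cast at hb; rw [← hK] at hb; linarith
    · intro m hm
      rw [hF, Finset.mem_image] at hm
      obtain ⟨i, hi, rfl⟩ := hm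
      rw [Finset.mem_range] at hi
      exact hmono (by omega : i ≤ n)
  have hn : (n : ℝ) ≤ K * x ^ d := by linarith
  have hstep : (n : ℝ) ^ ((1:ℝ)/d) ≤ (K * x ^ d) ^ ((1:ℝ)/d) :=
    Real.rpow_le_rpow (Nat.cast_nonneg n) hn (by positivity)
  have hre : (K * x ^ d) ^ ((1:ℝ)/d) = K ^ ((1:ℝ)/d) * x := by
    rw [Real.mul_rpow hK0.le (Real.rpow_nonneg hx0.le d), ← Real.rpow_mul hx0.le,
      mul_one_div_cancel hd.ne', Real.rpow_one]
  rw [hre] at hstep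
  rw [div_le_iff₀ hx0]
  exact hstep
end

section
/- Let d > 0 and a > 1 be reals and (c_n) a sequence of positive reals. The following are equivalent: (i) some permutation (c'_n) of (c_n) has (n^{1/d}/c'_n) bounded; (ii) there exists M > 0 such that ∑_{n : t ≤ c_n < a·t} 1/c_n^d ≤ M for all t > 0; (iii) there exists M' > 0 such that |{n : a^k ≤ c_n < a^{k+1}}| ≤ M' · a^{kd} for all k ∈ ℤ. -/
open MeasureTheory Filter

namespace Stmt13Aux

variable {d a : ℝ} {c : ℕ → ℝ}


lemma mem_shell {a x : ℝ} (ha : 1 < a) (hx : 0 < x) :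
    a ^ ((⌊Real.logb a x⌋ : ℝ)) ≤ x ∧ x < a ^ ((⌊Real.logb a x⌋ : ℝ) + 1) := by
  have ha0 : (0:ℝ) < a := lt_trans one_pos ha
  have h1 : a ^ (Real.logb a x) = x := Real.rpow_logb ha0 (ne_of_gt ha) hx
  constructor
  · calc a ^ ((⌊Real.logb a x⌋ : ℝ)) ≤ a ^ (Real.logb a x) := by
          exact Real.rpow_le_rpow_left_iff ha |>.mpr (Int.floor_le _)
      _ = x := h1
  · calc x = a ^ (Real.logb a x) := h1.symm
      _ < a ^ ((⌊Real.logb a x⌋ : ℝ) + 1) := by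
          apply Real.rpow_lt_rpow_left_iff ha |>.mpr
          exact Int.lt_floor_add_one _


lemma geom_sum_bound {a d : ℝ} (ha : 1 < a) (hd : 0 < d) (j0 m : ℤ) :
    ∑ j ∈ Finset.Icc j0 m, a ^ ((j:ℝ) * d) ≤ a ^ ((m:ℝ) * d) / (1 - a ^ (-d)) := by
  have ha0 : (0:ℝ) < a := lt_trans one_pos ha
  set r : ℝ := a ^ (-d) with hr
  have hr0 : 0 < r := Real.rpow_pos_of_pos ha0 _
  have hr1 : r < 1 := by
    rw [hr]
    calc a ^ (-d) < a ^ (0:ℝ) := Real.rpow_lt_rpow_left_iff ha |>.mpr (by linarith)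
      _ = 1 := Real.rpow_zero a
  rcases le_or_gt j0 m with h | h
  · have key : ∑ j ∈ Finset.Icc j0 m, a ^ ((j:ℝ) * d)
        = ∑ i ∈ Finset.range (m + 1 - j0).toNat, a ^ ((m:ℝ) * d) * r ^ i := by
      apply Finset.sum_nbij' (fun j => (m - j).toNat) (fun i => m - (i:ℤ))
      · intro j hj
        simp only [Finset.mem_Icc] at hj
        simp only [Finset.mem_range]
        omega
      · intro i hi
        simp only [Finset.mem_range] at hi
        simp only [Finset.mem_Icc]
        omega
      · intro j hj
        simp only [Finset.mem_Icc] at hj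
        omega
      · intro i hi
        simp only [Finset.mem_range] at hi
        omega
      · intro j hj
        simp only [Finset.mem_Icc] at hj
        have : r ^ (m - j).toNat = a ^ (-(d * ((m:ℝ) - (j:ℝ)))) := by
          rw [hr, ← Real.rpow_natCast (a ^ (-d)) _, ← Real.rpow_mul (le_of_lt ha0)]
          congr 1
          have : ((m - j).toNat : ℝ) = (m:ℝ) - (j:ℝ) := by
            have : ((m - j).toNat : ℤ) = m - j := Int.toNat_of_nonneg (by omega)
            exact_mod_cast congrArg (fun z : ℤ => (z:ℝ)) this
          rw [this]; ring
        rw [this, ← Real.rpow_add ha0]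
        congr 1
        ring
    rw [key, ← Finset.mul_sum]
    have hgs : ∑ i ∈ Finset.range (m + 1 - j0).toNat, r ^ i ≤ 1 / (1 - r) := by
      rw [geom_sum_eq (ne_of_lt hr1)]
      have hpow : (0:ℝ) ≤ r ^ (m + 1 - j0).toNat := pow_nonneg (le_of_lt hr0) _
      have h1r : (0:ℝ) < 1 - r := by linarith
      have heq : (r ^ (m + 1 - j0).toNat - 1) / (r - 1)
          = (1 - r ^ (m + 1 - j0).toNat) / (1 - r) := by
        rw [div_eq_div_iff (by linarith) (by linarith)]; ring
      rw [heq, div_le_div_iff₀ h1r h1r]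
      nlinarith
    calc a ^ ((m:ℝ) * d) * ∑ i ∈ Finset.range (m + 1 - j0).toNat, r ^ i
        ≤ a ^ ((m:ℝ) * d) * (1 / (1 - r)) := by
          apply mul_le_mul_of_nonneg_left hgs (le_of_lt (Real.rpow_pos_of_pos ha0 _))
      _ = a ^ ((m:ℝ) * d) / (1 - r) := by ring
  · rw [Finset.Icc_eq_empty (by omega), Finset.sum_empty]
    exact div_nonneg (Real.rpow_pos_of_pos ha0 _).le (by linarith)


def P1 (d : ℝ) (c : ℕ → ℝ) : Prop :=
  ∃ σ : ℕ → ℕ, Function.Bijective σ ∧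
    ∃ L : ℝ, ∀ n : ℕ, (n : ℝ) ^ ((1 : ℝ) / d) / c (σ n) ≤ L


def P2 (d a : ℝ) (c : ℕ → ℝ) : Prop :=
  ∃ M : ℝ, 0 < M ∧ ∀ t : ℝ, 0 < t →
    (∑' n : {m : ℕ // t ≤ c m ∧ c m < a * t}, ENNReal.ofReal (1 / c (n : ℕ) ^ d))
      ≤ ENNReal.ofReal M


def P3 (d a : ℝ) (c : ℕ → ℝ) : Prop :=
  ∃ M' : ℝ, 0 < M' ∧ ∀ k : ℤ,
    ({n : ℕ | a ^ (k : ℝ) ≤ c n ∧ c n < a ^ ((k : ℝ) + 1)}).Finite ∧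
    (({n : ℕ | a ^ (k : ℝ) ≤ c n ∧ c n < a ^ ((k : ℝ) + 1)}).ncard : ℝ)
      ≤ M' * a ^ ((k : ℝ) * d)


lemma p2_p3 (hd : 0 < d) (ha : 1 < a) (hc : ∀ n, 0 < c n) (h : P2 d a c) : P3 d a c := by
  obtain ⟨M, hM, hbd⟩ := h
  have ha0 : (0:ℝ) < a := lt_trans one_pos ha
  have had : (0:ℝ) < a ^ d := Real.rpow_pos_of_pos ha0 _
  refine ⟨M * a ^ d + 1, by positivity, fun k => ?_⟩
  set t : ℝ := a ^ (k:ℝ) with ht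
  have ht0 : 0 < t := Real.rpow_pos_of_pos ha0 _
  have hat : a * t = a ^ ((k:ℝ) + 1) := by
    rw [ht, Real.rpow_add ha0, Real.rpow_one]; ring
  have hsets : {n : ℕ | a ^ (k : ℝ) ≤ c n ∧ c n < a ^ ((k : ℝ) + 1)}
      = {m : ℕ | t ≤ c m ∧ c m < a * t} := by
    rw [hat]
  set s : Set ℕ := {m : ℕ | t ≤ c m ∧ c m < a * t} with hs
  have hb := hbd t ht0
  -- each term is at least ofReal ε where ε = 1 / a^((k+1)*d)
  set ε : ℝ := 1 / a ^ (((k:ℝ) + 1) * d) with hε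
  have hε0 : 0 < ε := by positivity
  have hterm : ∀ m : ℕ, m ∈ s → ENNReal.ofReal ε ≤ ENNReal.ofReal (1 / c m ^ d) := by
    intro m hm
    apply ENNReal.ofReal_le_ofReal
    rw [hε]
    apply one_div_le_one_div_of_le (Real.rpow_pos_of_pos (hc m) _)
    calc c m ^ d ≤ (a ^ ((k:ℝ) + 1)) ^ d :=
          Real.rpow_le_rpow (hc m).le (by rw [← hat]; exact hm.2.le) hd.le
      _ = a ^ (((k:ℝ) + 1) * d) := by rw [← Real.rpow_mul ha0.le]
  -- s is finite
  have hfin : s.Finite := by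
    by_contra hinf
    haveI := (show s.Infinite from hinf).to_subtype
    have htop : (∑' _ : s, ENNReal.ofReal ε) = ⊤ :=
      ENNReal.tsum_const_eq_top_of_ne_zero (by simp [ENNReal.ofReal_eq_zero, not_le, hε0])
    have hle : (∑' n : s, ENNReal.ofReal ε)
        ≤ ∑' n : s, ENNReal.ofReal (1 / c (n:ℕ) ^ d) :=
      ENNReal.tsum_le_tsum (fun n => hterm n n.2)
    rw [htop, top_le_iff] at hle
    have hb' : (∑' n : s, ENNReal.ofReal (1 / c (n:ℕ) ^ d)) ≤ ENNReal.ofReal M := hb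
    rw [hle] at hb'
    exact ENNReal.ofReal_ne_top (top_le_iff.mp hb')
  haveI : Fintype s := hfin.fintype
  -- lower bound the sum by card • ofReal ε
  have hsum : (Fintype.card s) • ENNReal.ofReal ε
      ≤ ∑' n : s, ENNReal.ofReal (1 / c (n:ℕ) ^ d) := by
    rw [tsum_fintype]
    have := Finset.card_nsmul_le_sum Finset.univ
      (fun n : s => ENNReal.ofReal (1 / c (n:ℕ) ^ d)) (ENNReal.ofReal ε)
      (fun x _ => hterm x x.2)
    simpa using this
  have hcard : ((Fintype.card s : ℝ)) * ε ≤ M := by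
    have h1 : ENNReal.ofReal ((Fintype.card s : ℝ) * ε) ≤ ENNReal.ofReal M := by
      rw [ENNReal.ofReal_mul (by positivity), ENNReal.ofReal_natCast]
      refine le_trans ?_ (le_trans hsum hb)
      rw [nsmul_eq_mul]
    exact (ENNReal.ofReal_le_ofReal_iff hM.le).mp h1
  have hncard : s.ncard = Fintype.card s := by
    rw [← Nat.card_coe_set_eq, Nat.card_eq_fintype_card]
  constructor
  · rw [hsets]; exact hfin
  · rw [hsets, hncard]
    -- card * ε ≤ M  ⇒ card ≤ M / ε = M * a^((k+1)d)
    have hexp : a ^ (((k:ℝ) + 1) * d) = a ^ ((k:ℝ) * d) * a ^ d := by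
      rw [add_mul, one_mul, Real.rpow_add ha0]
    have hkd : (0:ℝ) < a ^ ((k:ℝ) * d) := Real.rpow_pos_of_pos ha0 _
    rw [hε] at hcard
    rw [hexp] at hcard
    have := hcard
    rw [mul_one_div, div_le_iff₀ (by positivity)] at this
    nlinarith [hkd, had, hM]


lemma p3_p2 (hd : 0 < d) (ha : 1 < a) (hc : ∀ n, 0 < c n) (h : P3 d a c) : P2 d a c := by
  obtain ⟨M', hM', hbd⟩ := h
  have ha0 : (0:ℝ) < a := lt_trans one_pos ha
  have had : (0:ℝ) < a ^ d := Real.rpow_pos_of_pos ha0 _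
  refine ⟨M' * (1 + a ^ d) + 1, by positivity, fun t ht => ?_⟩
  set k : ℤ := ⌊Real.logb a t⌋ with hk
  obtain ⟨hk1, hk2⟩ := mem_shell ha ht (a := a)
  set s : Set ℕ := {m : ℕ | t ≤ c m ∧ c m < a * t} with hs
  have hsub : s ⊆ {n : ℕ | a ^ (k : ℝ) ≤ c n ∧ c n < a ^ ((k : ℝ) + 1)}
      ∪ {n : ℕ | a ^ (((k+1) : ℤ) : ℝ) ≤ c n ∧ c n < a ^ ((((k+1) : ℤ) : ℝ) + 1)} := by
    intro m hm
    obtain ⟨hm1, hm2⟩ := hm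
    rcases lt_or_ge (c m) (a ^ ((k:ℝ) + 1)) with hcm | hcm
    · left; exact ⟨le_trans hk1 hm1, hcm⟩
    · right
      push_cast
      refine ⟨hcm, ?_⟩
      calc c m < a * t := hm2
        _ ≤ a * a ^ ((k:ℝ) + 1) := by nlinarith
        _ = a ^ ((k:ℝ) + 1 + 1) := by
            rw [Real.rpow_add ha0 ((k:ℝ)+1) 1, Real.rpow_one]
            exact mul_comm a _
  have hfin : s.Finite := ((hbd k).1.union (hbd (k+1)).1).subset hsub
  haveI : Fintype s := hfin.fintype
  have htd : (0:ℝ) < t ^ d := Real.rpow_pos_of_pos ht _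
  have hterm : ∀ x : s, ENNReal.ofReal (1 / c (x:ℕ) ^ d) ≤ ENNReal.ofReal (1 / t ^ d) := by
    intro x
    apply ENNReal.ofReal_le_ofReal
    apply one_div_le_one_div_of_le htd
    exact Real.rpow_le_rpow ht.le x.2.1 hd.le
  calc (∑' n : s, ENNReal.ofReal (1 / c (n:ℕ) ^ d))
      = ∑ n : s, ENNReal.ofReal (1 / c (n:ℕ) ^ d) := tsum_fintype _
    _ ≤ (Fintype.card s) • ENNReal.ofReal (1 / t ^ d) := by
        have := Finset.sum_le_card_nsmul Finset.univ
          (fun n : s => ENNReal.ofReal (1 / c (n:ℕ) ^ d)) (ENNReal.ofReal (1 / t ^ d))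
          (fun x _ => hterm x)
        simpa using this
    _ = ENNReal.ofReal ((Fintype.card s : ℝ) * (1 / t ^ d)) := by
        rw [ENNReal.ofReal_mul (by positivity), ENNReal.ofReal_natCast, nsmul_eq_mul]
    _ ≤ ENNReal.ofReal (M' * (1 + a ^ d) + 1) := by
        apply ENNReal.ofReal_le_ofReal
        -- card bound
        have hcard : ((Fintype.card s : ℝ))
            ≤ M' * a ^ ((k:ℝ) * d) + M' * a ^ ((((k+1):ℤ):ℝ) * d) := by
          have h1 : (Fintype.card s : ℝ) = (s.ncard : ℝ) := by
            rw [← Nat.card_coe_set_eq, Nat.card_eq_fintype_card]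
          rw [h1]
          have h2 : s.ncard ≤ ({n : ℕ | a ^ (k : ℝ) ≤ c n ∧ c n < a ^ ((k : ℝ) + 1)}
              ∪ {n : ℕ | a ^ (((k+1) : ℤ) : ℝ) ≤ c n ∧ c n < a ^ ((((k+1) : ℤ) : ℝ) + 1)}).ncard :=
            Set.ncard_le_ncard hsub ((hbd k).1.union (hbd (k+1)).1)
          have h3 := Set.ncard_union_le {n : ℕ | a ^ (k : ℝ) ≤ c n ∧ c n < a ^ ((k : ℝ) + 1)}
              {n : ℕ | a ^ (((k+1) : ℤ) : ℝ) ≤ c n ∧ c n < a ^ ((((k+1) : ℤ) : ℝ) + 1)}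
          have h4 := (hbd k).2
          have h5 := (hbd (k+1)).2
          have h6 : (s.ncard : ℝ) ≤ (({n : ℕ | a ^ (k : ℝ) ≤ c n ∧ c n < a ^ ((k : ℝ) + 1)}).ncard : ℝ)
              + (({n : ℕ | a ^ (((k+1) : ℤ) : ℝ) ≤ c n ∧ c n < a ^ ((((k+1) : ℤ) : ℝ) + 1)}).ncard : ℝ) := by
            exact_mod_cast le_trans h2 h3
          linarith [h4, h5]
        have hkd : (0:ℝ) < a ^ ((k:ℝ) * d) := Real.rpow_pos_of_pos ha0 _
        have htk : a ^ ((k:ℝ) * d) ≤ t ^ d := by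
          calc a ^ ((k:ℝ) * d) = (a ^ (k:ℝ)) ^ d := Real.rpow_mul ha0.le _ _
            _ ≤ t ^ d := Real.rpow_le_rpow (Real.rpow_pos_of_pos ha0 _).le hk1 hd.le
        have hexp : a ^ ((((k+1):ℤ):ℝ) * d) = a ^ ((k:ℝ) * d) * a ^ d := by
          push_cast
          rw [add_mul, one_mul, Real.rpow_add ha0]
        rw [hexp] at hcard
        have h6 : (Fintype.card s : ℝ) * (1 / t ^ d) ≤ (Fintype.card s : ℝ) * (1 / a ^ ((k:ℝ) * d)) := by
          apply mul_le_mul_of_nonneg_left _ (Nat.cast_nonneg _)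
          exact one_div_le_one_div_of_le hkd htk
        have h7 : (Fintype.card s : ℝ) * (1 / a ^ ((k:ℝ) * d)) ≤ M' * (1 + a ^ d) := by
          rw [mul_one_div, div_le_iff₀ hkd]
          nlinarith
        linarith


lemma p1_p3 (hd : 0 < d) (ha : 1 < a) (hc : ∀ n, 0 < c n) (h : P1 d c) : P3 d a c := by
  obtain ⟨σ, hσ, L, hL⟩ := h
  have ha0 : (0:ℝ) < a := lt_trans one_pos ha
  have hL0 : 0 < L := by
    have h1 := hL 1
    have h2 : ((1:ℕ):ℝ) ^ ((1:ℝ)/d) = 1 := by norm_num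
    rw [h2] at h1
    calc (0:ℝ) < 1 / c (σ 1) := one_div_pos.mpr (hc (σ 1))
      _ ≤ L := h1
  -- counting bound
  have count : ∀ T : ℝ, 0 < T → {m : ℕ | c m < T}.Finite ∧
      (({m : ℕ | c m < T}).ncard : ℝ) ≤ (L * T) ^ d + 1 := by
    intro T hT
    have hB : {n : ℕ | c (σ n) < T} ⊆ Set.Iio (⌈(L * T) ^ d⌉₊) := by
      intro n hn
      simp only [Set.mem_setOf_eq] at hn
      simp only [Set.mem_Iio]
      by_contra hge
      push_neg at hge
      have h1 : ((L * T) ^ d : ℝ) ≤ (n:ℝ) :=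
        le_trans (Nat.le_ceil _) (by exact_mod_cast hge)
      have h2 : (n:ℝ) ^ ((1:ℝ)/d) < L * T := by
        have h3 := hL n
        rw [div_le_iff₀ (hc (σ n))] at h3
        calc (n:ℝ) ^ ((1:ℝ)/d) ≤ L * c (σ n) := h3
          _ < L * T := mul_lt_mul_of_pos_left hn hL0
      have h4 : (n:ℝ) < (L * T) ^ d := by
        have h5 : (n:ℝ) = ((n:ℝ) ^ ((1:ℝ)/d)) ^ d := by
          rw [← Real.rpow_mul (Nat.cast_nonneg n), one_div,
            inv_mul_cancel₀ (ne_of_gt hd), Real.rpow_one]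
        rw [h5]
        exact Real.rpow_lt_rpow (Real.rpow_nonneg (Nat.cast_nonneg n) _) h2 hd
      linarith
    have hBfin : {n : ℕ | c (σ n) < T}.Finite := (Set.finite_Iio _).subset hB
    have himg : {m : ℕ | c m < T} = σ '' {n : ℕ | c (σ n) < T} := by
      ext m
      constructor
      · intro hm
        obtain ⟨n, rfl⟩ := hσ.surjective m
        exact ⟨n, hm, rfl⟩
      · rintro ⟨n, hn, rfl⟩; exact hn
    refine ⟨himg ▸ hBfin.image σ, ?_⟩
    have hc1 : {m : ℕ | c m < T}.ncard ≤ {n : ℕ | c (σ n) < T}.ncard := by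
      rw [himg]; exact Set.ncard_image_le hBfin
    have hc2 : {n : ℕ | c (σ n) < T}.ncard ≤ ⌈(L * T) ^ d⌉₊ := by
      have := Set.ncard_le_ncard hB (Set.finite_Iio _)
      rwa [← Finset.coe_range, Set.ncard_coe_finset, Finset.card_range] at this
    have hc3 : (⌈(L * T) ^ d⌉₊ : ℝ) ≤ (L * T) ^ d + 1 :=
      le_of_lt (Nat.ceil_lt_add_one (by positivity))
    have : ({m : ℕ | c m < T}.ncard : ℝ) ≤ (⌈(L * T) ^ d⌉₊ : ℝ) := by
      exact_mod_cast le_trans hc1 hc2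
    linarith
  -- lower bound on a^(k*d) whenever the shell is nonempty
  set δ : ℝ := min ((a * L)⁻¹ ^ d) ((c (σ 0) / a) ^ d) with hδ
  have hδ0 : 0 < δ := by
    apply lt_min
    · exact Real.rpow_pos_of_pos (inv_pos.mpr (mul_pos ha0 hL0)) _
    · exact Real.rpow_pos_of_pos (div_pos (hc (σ 0)) ha0) _
  have hlow : ∀ k : ℤ, {n : ℕ | a ^ (k : ℝ) ≤ c n ∧ c n < a ^ ((k : ℝ) + 1)}.Nonempty →
      δ ≤ a ^ ((k:ℝ) * d) := by
    intro k ⟨n, hn1, hn2⟩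
    obtain ⟨n', rfl⟩ := hσ.surjective n
    have hak : (0:ℝ) < a ^ (k:ℝ) := Real.rpow_pos_of_pos ha0 _
    have hexp : a ^ ((k:ℝ) + 1) = a ^ (k:ℝ) * a := by
      rw [Real.rpow_add ha0, Real.rpow_one]
    have hkd : a ^ ((k:ℝ) * d) = (a ^ (k:ℝ)) ^ d := Real.rpow_mul ha0.le _ _
    rcases Nat.eq_zero_or_pos n' with rfl | hn'
    · -- n' = 0 : use c (σ 0)
      have h1 : c (σ 0) / a < a ^ (k:ℝ) := by
        rw [div_lt_iff₀ ha0]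
        rw [hexp] at hn2
        linarith [hn2]
      have h2 : (c (σ 0) / a) ^ d ≤ (a ^ (k:ℝ)) ^ d :=
        Real.rpow_le_rpow (div_pos (hc (σ 0)) ha0).le h1.le hd.le
      rw [hkd]
      exact le_trans (min_le_right _ _) h2
    · -- n' ≥ 1
      have hn1' : (1:ℝ) ≤ (n':ℝ) := by exact_mod_cast hn'
      have h1 : (1:ℝ) ≤ (n':ℝ) ^ ((1:ℝ)/d) := by
        calc (1:ℝ) = (1:ℝ) ^ ((1:ℝ)/d) := (Real.one_rpow _).symm
          _ ≤ (n':ℝ) ^ ((1:ℝ)/d) := Real.rpow_le_rpow zero_le_one hn1' (by positivity)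
      have h2 := hL n'
      rw [div_le_iff₀ (hc (σ n'))] at h2
      have h3 : (1:ℝ) ≤ L * c (σ n') := le_trans h1 h2
      have h4 : c (σ n') < a ^ (k:ℝ) * a := by rw [← hexp]; exact hn2
      have h5 : (a * L)⁻¹ ≤ a ^ (k:ℝ) := by
        rw [inv_eq_one_div, div_le_iff₀ (mul_pos ha0 hL0)]
        nlinarith [mul_lt_mul_of_pos_left h4 hL0]
      have h6 : ((a * L)⁻¹) ^ d ≤ (a ^ (k:ℝ)) ^ d :=
        Real.rpow_le_rpow (inv_pos.mpr (mul_pos ha0 hL0)).le h5 hd.le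
      rw [hkd]
      exact le_trans (min_le_left _ _) h6
  -- conclude
  refine ⟨L ^ d * a ^ d + 1/δ,
    add_pos (mul_pos (Real.rpow_pos_of_pos hL0 d) (Real.rpow_pos_of_pos ha0 d))
      (one_div_pos.mpr hδ0), fun k => ?_⟩
  set T : ℝ := a ^ ((k:ℝ) + 1) with hT
  have hT0 : 0 < T := Real.rpow_pos_of_pos ha0 _
  have hsub : {n : ℕ | a ^ (k : ℝ) ≤ c n ∧ c n < a ^ ((k : ℝ) + 1)} ⊆ {m : ℕ | c m < T} :=
    fun n hn => hn.2
  obtain ⟨hTfin, hTcard⟩ := count T hT0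
  refine ⟨hTfin.subset hsub, ?_⟩
  have hkd0 : (0:ℝ) < a ^ ((k:ℝ) * d) := Real.rpow_pos_of_pos ha0 _
  rcases Set.eq_empty_or_nonempty {n : ℕ | a ^ (k : ℝ) ≤ c n ∧ c n < a ^ ((k : ℝ) + 1)}
    with hemp | hne
  · rw [hemp, Set.ncard_empty]
    push_cast
    apply mul_nonneg _ hkd0.le
    have := Real.rpow_nonneg hL0.le d
    have := Real.rpow_nonneg ha0.le d
    have := one_div_pos.mpr hδ0
    nlinarith
  · have hδle := hlow k hne
    have hcard1 : (({n : ℕ | a ^ (k : ℝ) ≤ c n ∧ c n < a ^ ((k : ℝ) + 1)}).ncard : ℝ)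
        ≤ ({m : ℕ | c m < T}.ncard : ℝ) := by
      exact_mod_cast Set.ncard_le_ncard hsub hTfin
    have hLT : (L * T) ^ d = L ^ d * (a ^ ((k:ℝ) * d) * a ^ d) := by
      rw [Real.mul_rpow hL0.le hT0.le, hT, ← Real.rpow_mul ha0.le, add_mul, one_mul,
        Real.rpow_add ha0]
    have h1 : (1:ℝ) ≤ (1/δ) * a ^ ((k:ℝ) * d) := by
      rw [one_div, ← div_eq_inv_mul, le_div_iff₀ hδ0]
      linarith
    have hLd := Real.rpow_nonneg hL0.le d
    have had := Real.rpow_nonneg ha0.le d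
    rw [hLT] at hTcard
    nlinarith [hTcard, hcard1, h1]


lemma p3_p1 (hd : 0 < d) (ha : 1 < a) (hc : ∀ n, 0 < c n) (h : P3 d a c) : P1 d c := by
  classical
  obtain ⟨M', hM', hbd⟩ := h
  have ha0 : (0:ℝ) < a := lt_trans one_pos ha
  set kk : ℕ → ℤ := fun n => ⌊Real.logb a (c n)⌋ with hkk
  have hmem : ∀ n : ℕ, a ^ ((kk n : ℝ)) ≤ c n ∧ c n < a ^ ((kk n : ℝ) + 1) :=
    fun n => mem_shell ha (hc n)
  have hloga : 0 < Real.log a := Real.log_pos ha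
  -- small shells are empty
  obtain ⟨j0, hj0⟩ : ∃ j0 : ℤ, (j0:ℝ) < -Real.log M' / (d * Real.log a) :=
    exists_int_lt _
  have hempty : ∀ j : ℤ, j ≤ j0 →
      {n : ℕ | a ^ (j : ℝ) ≤ c n ∧ c n < a ^ ((j : ℝ) + 1)} = ∅ := by
    intro j hj
    have hjj : (j:ℝ) < -Real.log M' / (d * Real.log a) :=
      lt_of_le_of_lt (by exact_mod_cast hj) hj0
    have h1 : (j:ℝ) * (d * Real.log a) < -Real.log M' := by
      rwa [lt_div_iff₀ (by positivity)] at hjj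
    have h2 : M' * a ^ ((j:ℝ) * d) < 1 := by
      rw [Real.rpow_def_of_pos ha0]
      have h3 : Real.log a * ((j:ℝ) * d) < -Real.log M' := by nlinarith [h1]
      have h4 : Real.exp (Real.log a * ((j:ℝ) * d)) < Real.exp (-Real.log M') :=
        Real.exp_lt_exp.mpr h3
      rw [Real.exp_neg, Real.exp_log hM'] at h4
      calc M' * Real.exp (Real.log a * ((j:ℝ) * d)) < M' * M'⁻¹ :=
            mul_lt_mul_of_pos_left h4 hM'
        _ = 1 := mul_inv_cancel₀ (ne_of_gt hM')
    have h5 := (hbd j).2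
    have h6 : (({n : ℕ | a ^ (j : ℝ) ≤ c n ∧ c n < a ^ ((j : ℝ) + 1)}).ncard : ℝ) < 1 :=
      lt_of_le_of_lt h5 h2
    have h7 : ({n : ℕ | a ^ (j : ℝ) ≤ c n ∧ c n < a ^ ((j : ℝ) + 1)}).ncard = 0 := by
      exact_mod_cast Nat.lt_one_iff.mp (by exact_mod_cast h6)
    exact (Set.ncard_eq_zero (hbd j).1).mp h7
  have hkklb : ∀ n : ℕ, j0 < kk n := by
    intro n
    by_contra hle
    push_neg at hle
    have h1 := hempty (kk n) hle
    have h2 : n ∈ {m : ℕ | a ^ ((kk n) : ℝ) ≤ c m ∧ c m < a ^ (((kk n) : ℝ) + 1)} := hmem n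
    rw [h1] at h2
    exact h2
  -- global counting bound
  set C : ℝ := M' / (1 - a ^ (-d)) with hC
  have hr1 : a ^ (-d) < 1 := by
    calc a ^ (-d) < a ^ (0:ℝ) := Real.rpow_lt_rpow_left_iff ha |>.mpr (by linarith)
      _ = 1 := Real.rpow_zero a
  have hr0 : (0:ℝ) < a ^ (-d) := Real.rpow_pos_of_pos ha0 _
  have hC0 : 0 < C := div_pos hM' (by linarith)
  have hA : ∀ K : ℤ, {x : ℕ | c x < a ^ (K:ℝ)}.Finite ∧
      (({x : ℕ | c x < a ^ (K:ℝ)}).ncard : ℝ) ≤ C * a ^ (((K:ℝ) - 1) * d) := by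
    intro K
    set F : Finset ℕ :=
      (Finset.Icc (j0+1) (K-1)).biUnion (fun j => ((hbd j).1.toFinset)) with hF
    have hsub : {x : ℕ | c x < a ^ (K:ℝ)} ⊆ ↑F := by
      intro x hx
      simp only [Set.mem_setOf_eq] at hx
      have hup : kk x ≤ K - 1 := by
        have h1 : a ^ ((kk x : ℝ)) < a ^ (K:ℝ) := lt_of_le_of_lt (hmem x).1 hx
        have h2 : (kk x : ℝ) < (K:ℝ) := (Real.rpow_lt_rpow_left_iff ha).mp h1
        have : kk x < K := by exact_mod_cast h2
        omega
      have hlo : j0 + 1 ≤ kk x := hkklb x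
      simp only [hF, Finset.coe_biUnion, Set.mem_iUnion, Finset.mem_coe,
        Finset.mem_Icc]
      exact ⟨kk x, ⟨hlo, hup⟩, by rw [Set.Finite.mem_toFinset]; exact hmem x⟩
    have hfin : {x : ℕ | c x < a ^ (K:ℝ)}.Finite := F.finite_toSet.subset hsub
    refine ⟨hfin, ?_⟩
    have h1 : ({x : ℕ | c x < a ^ (K:ℝ)}).ncard ≤ F.card := by
      have := Set.ncard_le_ncard hsub F.finite_toSet
      rwa [Set.ncard_coe_finset] at this
    have h2 : (F.card : ℝ) ≤ ∑ j ∈ Finset.Icc (j0+1) (K-1), M' * a ^ ((j:ℝ) * d) := by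
      have hbu : F.card ≤ ∑ j ∈ Finset.Icc (j0+1) (K-1), ((hbd j).1.toFinset).card :=
        Finset.card_biUnion_le
      calc (F.card : ℝ) ≤ ((∑ j ∈ Finset.Icc (j0+1) (K-1), ((hbd j).1.toFinset).card : ℕ) : ℝ) := by
            exact_mod_cast hbu
        _ = ∑ j ∈ Finset.Icc (j0+1) (K-1), (((hbd j).1.toFinset).card : ℝ) := by
            push_cast; ring
        _ ≤ ∑ j ∈ Finset.Icc (j0+1) (K-1), M' * a ^ ((j:ℝ) * d) := by
            apply Finset.sum_le_sum
            intro j _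
            have := (hbd j).2
            rwa [Set.ncard_eq_toFinset_card _ (hbd j).1] at this
    have h3 : ∑ j ∈ Finset.Icc (j0+1) (K-1), M' * a ^ ((j:ℝ) * d)
        ≤ M' * (a ^ (((K-1 : ℤ):ℝ) * d) / (1 - a ^ (-d))) := by
      rw [← Finset.mul_sum]
      exact mul_le_mul_of_nonneg_left (geom_sum_bound ha hd _ _) hM'.le
    have h4 : M' * (a ^ (((K-1 : ℤ):ℝ) * d) / (1 - a ^ (-d))) = C * a ^ (((K:ℝ) - 1) * d) := by
      push_cast
      rw [hC]
      ring
    calc (({x : ℕ | c x < a ^ (K:ℝ)}).ncard : ℝ) ≤ (F.card : ℝ) := by exact_mod_cast h1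
      _ ≤ _ := h2
      _ ≤ _ := h3
      _ = _ := h4
  -- the predecessor sets
  set QQ : ℕ → Set ℕ := fun n => {m | kk m < kk n ∨ (kk m = kk n ∧ m < n)} with hQQ
  have hQsub : ∀ n : ℕ, insert n (QQ n) ⊆ {x : ℕ | c x < a ^ (((kk n + 1 : ℤ)):ℝ)} := by
    intro n x hx
    rw [Set.mem_insert_iff] at hx
    have hkx : kk x ≤ kk n := by
      rcases hx with rfl | hx
      · exact le_refl _
      · simp only [hQQ, Set.mem_setOf_eq] at hx
        omega
    simp only [Set.mem_setOf_eq]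
    calc c x < a ^ ((kk x : ℝ) + 1) := (hmem x).2
      _ ≤ a ^ (((kk n + 1 : ℤ)):ℝ) := by
          apply Real.rpow_le_rpow_left_iff ha |>.mpr
          push_cast
          exact_mod_cast (by omega : kk x + 1 ≤ kk n + 1)
  have hQfin : ∀ n : ℕ, (QQ n).Finite :=
    fun n => (hA (kk n + 1)).1.subset (fun x hx => hQsub n (Set.mem_insert_of_mem n hx))
  set r : ℕ → ℕ := fun n => (QQ n).ncard with hrdef
  have htrans : ∀ x y z : ℕ, x ∈ QQ y → y ∈ QQ z → x ∈ QQ z := by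
    intro x y z hxy hyz
    simp only [hQQ, Set.mem_setOf_eq] at *
    omega
  have hirr : ∀ x : ℕ, x ∉ QQ x := by
    intro x hx
    simp only [hQQ, Set.mem_setOf_eq] at hx
    omega
  have hmono : ∀ x y : ℕ, x ∈ QQ y → r x < r y := by
    intro x y hxy
    apply Set.ncard_lt_ncard _ (hQfin y)
    rw [Set.ssubset_def]
    constructor
    · exact fun m hm => htrans m x y hm hxy
    · intro hsup
      exact hirr x (hsup hxy)
  have htotal : ∀ x y : ℕ, x ≠ y → x ∈ QQ y ∨ y ∈ QQ x := by
    intro x y hxy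
    simp only [hQQ, Set.mem_setOf_eq]
    omega
  have hinj : Function.Injective r := by
    intro x y hxy
    by_contra hne
    rcases htotal x y hne with h | h
    · exact absurd hxy (ne_of_lt (hmono x y h))
    · exact absurd hxy.symm (ne_of_lt (hmono y x h))
  -- predecessor: if r n > 0 there is m with r n = r m + 1
  have hsucc : ∀ n : ℕ, 0 < r n → ∃ m : ℕ, m ∈ QQ n ∧ r n = r m + 1 := by
    intro n hrn
    have hne : (QQ n).Nonempty :=
      Set.nonempty_of_ncard_ne_zero (by simpa [hrdef] using hrn.ne')
    obtain ⟨m, hmQ, hmax0⟩ := Set.Finite.exists_maximalFor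
      (fun m => (toLex ((kk m, m)) : ℤ ×ₗ ℕ)) _ (hQfin n) hne
    have hmax : ∀ x ∈ QQ n, (toLex ((kk m, m)) : ℤ ×ₗ ℕ) ≤ toLex ((kk x, x)) →
        (toLex ((kk m, m)) : ℤ ×ₗ ℕ) = toLex ((kk x, x)) :=
      fun x hx hle => le_antisymm hle (hmax0 hx hle)
    have finj : ∀ x y : ℕ, (toLex ((kk x, x)) : ℤ ×ₗ ℕ) = toLex ((kk y, y)) → x = y := by
      intro x y hxy
      have := congrArg (fun p : ℤ ×ₗ ℕ => (ofLex p).2) hxy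
      simpa using this
    have heq : QQ n = insert m (QQ m) := by
      ext x
      constructor
      · intro hx
        by_cases hxm : x = m
        · exact hxm ▸ Set.mem_insert _ _
        · apply Set.mem_insert_of_mem
          rcases lt_trichotomy (toLex ((kk x, x)) : ℤ ×ₗ ℕ) (toLex ((kk m, m))) with hlt | heq2 | hgt
          · rw [Prod.Lex.lt_iff] at hlt
            simpa only [hQQ, Set.mem_setOf_eq, ofLex_toLex] using hlt
          · exact absurd (finj x m heq2) hxm
          · exact absurd (finj m x (hmax x hx hgt.le)) (Ne.symm hxm)
      · intro hx
        rcases hx with rfl | hx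
        · exact hmQ
        · exact htrans x m n hx hmQ
    refine ⟨m, hmQ, ?_⟩
    rw [hrdef]
    simp only
    rw [heq, Set.ncard_insert_of_notMem (hirr m) (hQfin m)]
  -- downward closedness and surjectivity
  have hdown : ∀ j : ℕ, ∀ n : ℕ, r n = j → ∀ N : ℕ, N ≤ j → ∃ m : ℕ, r m = N := by
    intro j
    induction j using Nat.strong_induction_on with
    | _ j ih =>
      intro n hn N hN
      rcases eq_or_lt_of_le hN with rfl | hlt
      · exact ⟨n, hn⟩
      · have hpos : 0 < r n := by omega
        obtain ⟨m, _, hm⟩ := hsucc n hpos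
        exact ih (r m) (by omega) m rfl N (by omega)
  have hsurj : Function.Surjective r := by
    intro N
    obtain ⟨b, hb, hNb⟩ := (Set.infinite_range_of_injective hinj).exists_gt N
    obtain ⟨n, rfl⟩ := hb
    exact hdown (r n) n rfl N hNb.le
  -- the bijection
  set e : ℕ ≃ ℕ := Equiv.ofBijective r ⟨hinj, hsurj⟩ with he
  refine ⟨e.symm, e.symm.bijective, C ^ ((1:ℝ)/d), ?_⟩
  intro n
  set m : ℕ := e.symm n with hm
  have hrm : r m = n := e.apply_symm_apply n
  -- counting: n + 1 ≤ C * (c m)^d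
  have hkey : ((n:ℝ) + 1) ≤ C * (c m) ^ d := by
    have h1 : insert m (QQ m) ⊆ {x : ℕ | c x < a ^ (((kk m + 1 : ℤ)):ℝ)} := hQsub m
    have h2 : (insert m (QQ m)).ncard ≤ ({x : ℕ | c x < a ^ (((kk m + 1 : ℤ)):ℝ)}).ncard :=
      Set.ncard_le_ncard h1 (hA (kk m + 1)).1
    have hrm' : (QQ m).ncard = n := by rw [← hrm]
    have h3 : (insert m (QQ m)).ncard = n + 1 := by
      rw [Set.ncard_insert_of_notMem (hirr m) (hQfin m), hrm']
    have h4 := (hA (kk m + 1)).2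
    have h5 : C * a ^ (((((kk m + 1 : ℤ)):ℝ) - 1) * d) ≤ C * (c m) ^ d := by
      apply mul_le_mul_of_nonneg_left _ hC0.le
      have h6 : ((((kk m + 1 : ℤ)):ℝ) - 1) = (kk m : ℝ) := by push_cast; ring
      rw [h6, Real.rpow_mul ha0.le]
      exact Real.rpow_le_rpow (Real.rpow_nonneg ha0.le _) (hmem m).1 hd.le
    have h2' : n + 1 ≤ ({x : ℕ | c x < a ^ (((kk m + 1 : ℤ)):ℝ)}).ncard := h3 ▸ h2
    have h7 : ((n:ℝ) + 1) ≤ (({x : ℕ | c x < a ^ (((kk m + 1 : ℤ)):ℝ)}).ncard : ℝ) := by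
      exact_mod_cast h2'
    linarith
  -- conclude
  have hcm := hc m
  rw [div_le_iff₀ hcm]
  have h8 : (n:ℝ) ≤ C * (c m) ^ d := by linarith
  have h9 : (n:ℝ) ^ ((1:ℝ)/d) ≤ (C * (c m) ^ d) ^ ((1:ℝ)/d) :=
    Real.rpow_le_rpow (Nat.cast_nonneg n) h8 (by positivity)
  have h10 : (C * (c m) ^ d) ^ ((1:ℝ)/d) = C ^ ((1:ℝ)/d) * c m := by
    rw [Real.mul_rpow hC0.le (Real.rpow_nonneg hcm.le _), ← Real.rpow_mul hcm.le,
      mul_one_div, div_self (ne_of_gt hd), Real.rpow_one]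
  rw [h10] at h9
  exact h9


end Stmt13Aux

theorem stmt13 (d a : ℝ) (hd : 0 < d) (ha : 1 < a) (c : ℕ → ℝ) (hc : ∀ n, 0 < c n) :
    ((∃ σ : ℕ → ℕ, Function.Bijective σ ∧
        ∃ L : ℝ, ∀ n : ℕ, (n : ℝ) ^ ((1 : ℝ) / d) / c (σ n) ≤ L)
      ↔ (∃ M : ℝ, 0 < M ∧ ∀ t : ℝ, 0 < t →
        (∑' n : {m : ℕ // t ≤ c m ∧ c m < a * t}, ENNReal.ofReal (1 / c (n : ℕ) ^ d))
          ≤ ENNReal.ofReal M))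
    ∧ ((∃ M : ℝ, 0 < M ∧ ∀ t : ℝ, 0 < t →
        (∑' n : {m : ℕ // t ≤ c m ∧ c m < a * t}, ENNReal.ofReal (1 / c (n : ℕ) ^ d))
          ≤ ENNReal.ofReal M)
      ↔ (∃ M' : ℝ, 0 < M' ∧ ∀ k : ℤ,
        ({n : ℕ | a ^ (k : ℝ) ≤ c n ∧ c n < a ^ ((k : ℝ) + 1)}).Finite ∧
        (({n : ℕ | a ^ (k : ℝ) ≤ c n ∧ c n < a ^ ((k : ℝ) + 1)}).ncard : ℝ)
          ≤ M' * a ^ ((k : ℝ) * d))) := by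
  constructor
  · constructor
    · intro h1
      exact Stmt13Aux.p3_p2 hd ha hc (Stmt13Aux.p1_p3 hd ha hc h1)
    · intro h2
      exact Stmt13Aux.p3_p1 hd ha hc (Stmt13Aux.p2_p3 hd ha hc h2)
  · constructor
    · intro h2
      exact Stmt13Aux.p2_p3 hd ha hc h2
    · intro h3
      exact Stmt13Aux.p3_p2 hd ha hc h3
end
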